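/- arXiv:math/0003193 — 11 statements merged into one kernel-verified Lean document; each statement's English description precedes it below -/
import Mathlib

section
/- Let N, k be integers with 0 ≤ 2k ≤ N. The kernel of L restricted to the degree-(2N−2k) graded piece of V (spanned by the s_{a,b} with a+b = 2N−2k) is one-dimensional, spanned by the element Σ_{j=0}^{k} (−1)^j s_{N−j, N−2k+j}. -/
/-- Index set for the Schubert basis of `H^*(G(N,2))`: pairs `(a,b)` with `0 ≤ b ≤ a ≤ N`. -/
def Idx (N : ℕ) : Type := {p : ℕ × ℕ // p.2 ≤ p.1 ∧ p.1 ≤ N}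

/-- The real vector space with basis `{s_{a,b} : 0 ≤ b ≤ a ≤ N}`. -/
abbrev V (N : ℕ) : Type := Idx N →₀ ℝ

/-- The Schubert basis element `s_{a,b}`, interpreted as `0` when `b > a` or `a > N`. -/
noncomputable def s (N a b : ℕ) : V N :=
  if h : b ≤ a ∧ a ≤ N then Finsupp.single ⟨(a, b), h⟩ 1 else 0

/-- The Lefschetz operator, determined by the Pieri rule
`L(s_{a,b}) = s_{a+1,b} + s_{a,b+1}`. -/
noncomputable def L (N : ℕ) : V N →ₗ[ℝ] V N :=
  Finsupp.lsum ℝ fun x =>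
    LinearMap.toSpanSingleton ℝ (V N) (s N (x.1.1 + 1) x.1.2 + s N x.1.1 (x.1.2 + 1))

/-- The degree-`p` graded piece of `V`, spanned by the `s_{a,b}` with `a + b = p`. -/
noncomputable def piece (N p : ℕ) : Submodule ℝ (V N) :=
  Submodule.span ℝ {x | ∃ a b : ℕ, b ≤ a ∧ a ≤ N ∧ a + b = p ∧ x = s N a b}

lemma s_apply (N a b : ℕ) (q : Idx N) :
    s N a b q = if q.1 = (a, b) then 1 else 0 := by
  classical
  unfold s
  split_ifs with h h2 h2
  · have hq : (⟨(a, b), h⟩ : Idx N) = q := Subtype.ext h2.symm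
    erw [← hq, Finsupp.single_eq_same]
  · erw [Finsupp.single_apply, if_neg]
    intro he
    exact h2 (congrArg Subtype.val he).symm
  · exfalso; apply h; have hv := q.2; rw [h2] at hv; exact hv
  · rfl

lemma L_on_s (N a b : ℕ) (h : b ≤ a ∧ a ≤ N) :
    L N (s N a b) = s N (a + 1) b + s N a (b + 1) := by
  rw [L, s, dif_pos h]
  erw [Finsupp.lsum_single]
  simp [LinearMap.toSpanSingleton_apply]

noncomputable def co (N : ℕ) (x : V N) (a b : ℕ) : ℝ :=
  if h : b ≤ a ∧ a ≤ N then x ⟨(a, b), h⟩ else 0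

lemma co_spec (N : ℕ) (x : V N) (a b : ℕ) (h : b ≤ a ∧ a ≤ N) :
    x ⟨(a, b), h⟩ = co N x a b := by
  rw [co, dif_pos h]

lemma co_zero (N a b : ℕ) : co N (0 : V N) a b = 0 := by
  unfold co; split_ifs <;> rfl

lemma piece_supported (N p : ℕ) {x : V N} (hx : x ∈ piece N p)
    (q : Idx N) (hq : q.1.1 + q.1.2 ≠ p) : x q = 0 := by
  have hle : piece N p ≤ Finsupp.supported ℝ ℝ {q : Idx N | q.1.1 + q.1.2 = p} := by
    rw [piece, Submodule.span_le]
    rintro y ⟨a, b, hba, haN, hab, rfl⟩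
    rw [SetLike.mem_coe, Finsupp.mem_supported ℝ]
    unfold s
    rw [dif_pos ⟨hba, haN⟩]
    refine Set.Subset.trans (Finset.coe_subset.mpr Finsupp.support_single_subset) ?_
    intro z hz
    erw [Finset.coe_singleton, Set.mem_singleton_iff] at hz
    subst hz
    exact hab
  exact (Finsupp.mem_supported' ℝ x).mp (hle hx) q hq

lemma s_mem_piece (N a b : ℕ) : s N a b ∈ piece N (a + b) := by
  by_cases h : b ≤ a ∧ a ≤ N
  · exact Submodule.subset_span ⟨a, b, h.1, h.2, rfl, rfl⟩
  · rw [s, dif_neg h]; exact Submodule.zero_mem _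

lemma s_mem_piece' (N a b p : ℕ) (hp : a + b = p) : s N a b ∈ piece N p := by
  subst hp; exact s_mem_piece N a b

lemma L_piece (N p : ℕ) {x : V N} (hx : x ∈ piece N p) : L N x ∈ piece N (p + 1) := by
  have hmap : Submodule.map (L N) (piece N p) ≤ piece N (p + 1) := by
    rw [piece, Submodule.map_span, Submodule.span_le]
    rintro y ⟨z, ⟨a, b, hba, haN, hab, rfl⟩, rfl⟩
    rw [SetLike.mem_coe, L_on_s N a b ⟨hba, haN⟩]
    exact Submodule.add_mem _ (s_mem_piece' N (a+1) b _ (by omega))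
      (s_mem_piece' N a (b+1) _ (by omega))
  exact hmap ⟨x, hx, rfl⟩

lemma decomp (N k : ℕ) (hk : 2 * k ≤ N) {x : V N} (hx : x ∈ piece N (2 * N - 2 * k)) :
    x = ∑ j ∈ Finset.range (k + 1),
      co N x (N - j) (N - 2 * k + j) • s N (N - j) (N - 2 * k + j) := by
  ext q
  rw [Finsupp.finset_sum_apply]
  simp only [Finsupp.smul_apply, s_apply, smul_eq_mul]
  rcases q with ⟨⟨a, b⟩, hba, haN⟩
  simp only
  by_cases hq : a + b = 2 * N - 2 * k
  · rw [Finset.sum_eq_single (N - a)]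
    · rw [if_pos (by simp only [Prod.mk.injEq]; try omega), mul_one, co,
        dif_pos (show N - 2*k + (N-a) ≤ N - (N-a) ∧ N - (N-a) ≤ N by omega)]
      congr 1
      exact Subtype.ext (by simp only [Prod.mk.injEq]; try omega)
    · intro j hj hne
      rw [Finset.mem_range] at hj
      rw [if_neg (by simp only [Prod.mk.injEq]; try omega), mul_zero]
    · intro hna
      rw [Finset.mem_range] at hna
      omega
  · rw [piece_supported N _ hx ⟨(a,b), ⟨hba, haN⟩⟩ hq]
    symm
    apply Finset.sum_eq_zero
    intro j hj
    rw [Finset.mem_range] at hj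
    rw [if_neg (by simp only [Prod.mk.injEq]; try omega), mul_zero]

lemma co_L (N k : ℕ) (hk : 2 * k ≤ N) {x : V N} (hx : x ∈ piece N (2 * N - 2 * k))
    (i : ℕ) (hi : i < k) :
    co N (L N x) (N - i) (N - 2 * k + i + 1) =
      co N x (N - i) (N - 2 * k + i) + co N x (N - (i + 1)) (N - 2 * k + (i + 1)) := by
  have hv : N - 2 * k + i + 1 ≤ N - i ∧ N - i ≤ N := by omega
  rw [co, dif_pos hv]
  conv_lhs => rw [decomp N k hk hx]
  erw [map_sum, Finsupp.finset_sum_apply]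
  have hstep : ∀ j ∈ Finset.range (k + 1),
      (L N (co N x (N - j) (N - 2*k + j) • s N (N - j) (N - 2*k + j)))
        ⟨(N - i, N - 2*k + i + 1), hv⟩
      = (if j = i then co N x (N - j) (N - 2*k + j) else 0)
        + (if j = i + 1 then co N x (N - j) (N - 2*k + j) else 0) := by
    intro j hj
    rw [Finset.mem_range] at hj
    erw [map_smul, L_on_s N _ _ ⟨by omega, by omega⟩, Finsupp.smul_apply,
      Finsupp.add_apply, s_apply, s_apply]
    have hc : (⟨(N - i, N - 2*k + i + 1), hv⟩ : Idx N).1 = (N - i, N - 2*k + i + 1) := rfl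
    rw [hc]
    rcases eq_or_ne j i with rfl | hji
    · rw [if_neg (by simp only [Prod.mk.injEq]; try omega),
        if_pos (by simp only [Prod.mk.injEq]; try omega), if_pos rfl, if_neg (by omega)]
      simp
    · rcases eq_or_ne j (i + 1) with rfl | hji1
      · rw [if_pos (by simp only [Prod.mk.injEq]; try omega),
          if_neg (by simp only [Prod.mk.injEq]; try omega), if_neg hji, if_pos rfl]
        simp
      · rw [if_neg (by simp only [Prod.mk.injEq]; try omega),
          if_neg (by simp only [Prod.mk.injEq]; try omega), if_neg hji, if_neg hji1]
        simp
  rw [Finset.sum_congr rfl hstep, Finset.sum_add_distrib,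
    Finset.sum_ite_eq' (Finset.range (k+1)) i, Finset.sum_ite_eq' (Finset.range (k+1)) (i+1),
    if_pos (Finset.mem_range.mpr (by omega)), if_pos (Finset.mem_range.mpr (by omega))]

lemma co_e (N k : ℕ) (hk : 2 * k ≤ N) (i : ℕ) (hi : i ≤ k) :
    co N (∑ j ∈ Finset.range (k + 1), ((-1 : ℝ) ^ j) • s N (N - j) (N - 2 * k + j))
      (N - i) (N - 2 * k + i) = (-1 : ℝ) ^ i := by
  have hv : N - 2 * k + i ≤ N - i ∧ N - i ≤ N := by omega
  erw [co, dif_pos hv, Finsupp.finset_sum_apply]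
  rw [Finset.sum_eq_single i]
  · erw [Finsupp.smul_apply, s_apply, if_pos rfl, smul_eq_mul, mul_one]
  · intro j hj hne
    rw [Finset.mem_range] at hj
    erw [Finsupp.smul_apply, s_apply, if_neg (by simp only [Prod.mk.injEq]; try omega),
      smul_eq_mul, mul_zero]
  · intro h; exact absurd (Finset.mem_range.mpr (by omega)) h

lemma coeffs (N k : ℕ) (hk : 2 * k ≤ N) {x : V N}
    (hx : x ∈ piece N (2 * N - 2 * k)) (hker : L N x = 0) :
    ∀ j ≤ k, co N x (N - j) (N - 2 * k + j)
      = (-1 : ℝ) ^ j * co N x (N - 0) (N - 2 * k + 0) := by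
  intro j
  induction j with
  | zero => intro _; simp
  | succ j ih =>
    intro hj
    have h1 := co_L N k hk hx j (by omega)
    rw [hker, co_zero] at h1
    have h2 : co N x (N - (j + 1)) (N - 2 * k + (j + 1))
        = -co N x (N - j) (N - 2 * k + j) := by linarith
    rw [h2, ih (by omega), pow_succ]
    ring

theorem stmt0 (N k : ℕ) (hN : 0 < N) (hk : 2 * k ≤ N) :
    piece N (2 * N - 2 * k) ⊓ LinearMap.ker (L N) =
      Submodule.span ℝ {∑ j ∈ Finset.range (k + 1),
        ((-1 : ℝ) ^ j) • s N (N - j) (N - 2 * k + j)} ∧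
    (∑ j ∈ Finset.range (k + 1), ((-1 : ℝ) ^ j) • s N (N - j) (N - 2 * k + j)) ≠ 0 := by
  set e : V N := ∑ j ∈ Finset.range (k + 1), ((-1 : ℝ) ^ j) • s N (N - j) (N - 2 * k + j)
    with he_def
  have he_piece : e ∈ piece N (2 * N - 2 * k) := by
    apply Submodule.sum_mem
    intro j hj
    rw [Finset.mem_range] at hj
    exact Submodule.smul_mem _ _ (s_mem_piece' N (N - j) (N - 2 * k + j) _ (by omega))
  have he_ne : e ≠ 0 := by
    intro h0
    have h1 := co_e N k hk 0 (by omega)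
    rw [← he_def, h0, co_zero] at h1
    norm_num at h1
  have he_ker : L N e = 0 := by
    have hLe := L_piece N _ he_piece
    ext q
    rcases q with ⟨⟨a, b⟩, hba, haN⟩
    erw [Finsupp.coe_zero, Pi.zero_apply]
    by_cases hq : a + b = 2 * N - 2 * k + 1
    · obtain ⟨i, rfl⟩ : ∃ i, a = N - i := ⟨N - a, by omega⟩
      obtain rfl : b = N - 2 * k + i + 1 := by omega
      have hik : i < k := by omega
      rw [co_spec N _ _ _ ⟨hba, haN⟩, co_L N k hk he_piece i hik,
        co_e N k hk i (by omega), co_e N k hk (i + 1) (by omega), pow_succ]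
      ring
    · exact piece_supported N _ hLe ⟨(a, b), ⟨hba, haN⟩⟩ hq
  constructor
  · apply le_antisymm
    · rintro x ⟨hx_piece', hx_ker'⟩
      have hx_piece : x ∈ piece N (2 * N - 2 * k) := hx_piece'
      have hx_ker : L N x = 0 := hx_ker'
      rw [Submodule.mem_span_singleton]
      refine ⟨co N x (N - 0) (N - 2 * k + 0), ?_⟩
      have hdec := decomp N k hk hx_piece
      conv_rhs => rw [hdec]
      rw [he_def, Finset.smul_sum]
      apply Finset.sum_congr rfl
      intro j hj
      rw [Finset.mem_range] at hj
      rw [coeffs N k hk hx_piece hx_ker j (by omega), smul_smul, mul_comm]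
    · rw [Submodule.span_le, Set.singleton_subset_iff]
      exact ⟨he_piece, LinearMap.mem_ker.mpr he_ker⟩
  · exact he_ne
end

section
/- For an integer p with 0 ≤ p ≤ N, define the primitive subspace V^p_prim = Ker(L^{2N+1−2p} : V_p → V_{2N+1−p}), where V_p denotes the degree-p graded piece of V. Then V^p_prim is nonzero if and only if p is even, say p = 2k; and in that case V^p_prim is one-dimensional, spanned by the class α_k = Σ_{j=0}^{k} (−1)^j C(N+1−j, N−2k)·C(N−2k+j, N−2k)·s_{2k−j, j}, where C(a,b) denotes the binomial coefficient. -/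
/-- The primitive part of the degree-`p` piece: `Ker(L^{2N+1-2p} : V_p → V_{2N+1-p})`. -/
noncomputable def Vprim (N p : ℕ) : Submodule ℝ (V N) :=
  piece N p ⊓ LinearMap.ker ((L N) ^ (2 * N + 1 - 2 * p))

/-- The primitive class `α_k`. -/
noncomputable def alpha (N k : ℕ) : V N :=
  ∑ j ∈ Finset.range (k + 1),
    ((-1 : ℝ) ^ j * ((N + 1 - j).choose (N - 2 * k)) *
      ((N - 2 * k + j).choose (N - 2 * k))) • s N (2 * k - j) j

namespace Aux
lemma s_valid {N a b : ℕ} (h : b ≤ a ∧ a ≤ N) : s N a b = Finsupp.single ⟨(a,b), h⟩ 1 := by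
  simp [s, h]
lemma s_invalid {N a b : ℕ} (h : ¬ (b ≤ a ∧ a ≤ N)) : s N a b = 0 := by
  simp [s, h]
lemma L_s {N a b : ℕ} (h : b ≤ a ∧ a ≤ N) :
    L N (s N a b) = s N (a+1) b + s N a (b+1) := by
  rw [s_valid h]
  rw [L]
  erw [Finsupp.lsum_single]
  rw [LinearMap.toSpanSingleton_apply, one_smul]
noncomputable def Fop (N : ℕ) : V N →ₗ[ℝ] V N :=
  Finsupp.lsum ℝ fun x =>
    LinearMap.toSpanSingleton ℝ (V N)
      ((if x.1.1 = 0 then 0 else (((x.1.1 : ℝ) + 1) * ((N : ℝ) + 1 - x.1.1)) • s N (x.1.1 - 1) x.1.2)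
        + (((x.1.2 : ℝ)) * ((N : ℝ) + 2 - x.1.2)) • s N x.1.1 (x.1.2 - 1))
lemma Fop_s {N a b : ℕ} (h : b ≤ a ∧ a ≤ N) :
    Fop N (s N a b) = (if a = 0 then 0 else (((a : ℝ) + 1) * ((N : ℝ) + 1 - a)) • s N (a - 1) b)
        + (((b : ℝ)) * ((N : ℝ) + 2 - b)) • s N a (b - 1) := by
  rw [s_valid h]
  rw [Fop]
  erw [Finsupp.lsum_single]
  rw [LinearMap.toSpanSingleton_apply, one_smul]


lemma Fop_s_pos {N a b : ℕ} (h : b ≤ a ∧ a ≤ N) (ha : a ≠ 0) :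
    Fop N (s N a b) = (((a : ℝ) + 1) * ((N : ℝ) + 1 - a)) • s N (a - 1) b
        + (((b : ℝ)) * ((N : ℝ) + 2 - b)) • s N a (b - 1) := by
  rw [Fop_s h, if_neg ha]

lemma Fop_s00 {N : ℕ} : Fop N (s N 0 0) = 0 := by
  rw [Fop_s ⟨le_refl 0, Nat.zero_le N⟩]
  simp

lemma comm_s {N a b : ℕ} (h : b ≤ a ∧ a ≤ N) :
    Fop N (L N (s N a b)) =
      L N (Fop N (s N a b)) + (2*(N:ℝ) - 2*((a:ℝ)+(b:ℝ))) • s N a b := by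
  obtain ⟨hba, haN⟩ := h
  rw [L_s ⟨hba, haN⟩, map_add]
  cases a with
  | zero =>
    obtain rfl : b = 0 := Nat.le_zero.mp hba
    rw [Fop_s00, map_zero, zero_add]
    rw [s_invalid (by omega : ¬ ((0:ℕ)+1 ≤ 0 ∧ (0:ℕ) ≤ N)), map_zero, add_zero]
    rcases Nat.eq_zero_or_pos N with rfl | hN
    · rw [s_invalid (by omega : ¬ ((0:ℕ) ≤ 0+1 ∧ (0:ℕ)+1 ≤ 0)), map_zero]
      norm_num
    · rw [Fop_s_pos (⟨by omega, by omega⟩ : (0:ℕ) ≤ 0+1 ∧ 0+1 ≤ N) (by omega)]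
      simp only [Nat.add_sub_cancel]
      push_cast
      module
  | succ a' =>
    rw [Fop_s_pos ⟨hba, haN⟩ (by omega)]
    rcases Nat.lt_or_ge b (a' + 1) with hblt | hbge
    · -- b < a
      rw [map_add, map_smul, map_smul,
        L_s (by omega : b ≤ a' + 1 - 1 ∧ a' + 1 - 1 ≤ N),
        L_s (by omega : b - 1 ≤ a' + 1 ∧ a' + 1 ≤ N),
        Fop_s_pos (by omega : b + 1 ≤ a' + 1 ∧ a' + 1 ≤ N) (by omega)]
      simp only [Nat.add_sub_cancel]
      rcases Nat.lt_or_ge (a' + 1) N with haltN | hage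
      · rw [Fop_s_pos (by omega : b ≤ a' + 1 + 1 ∧ a' + 1 + 1 ≤ N) (by omega)]
        simp only [Nat.add_sub_cancel]
        cases b with
        | zero =>
          simp only [Nat.zero_sub]
          push_cast
          module
        | succ b' =>
          simp only [Nat.add_sub_cancel]
          push_cast
          module
      · -- a = N
        obtain rfl : N = a' + 1 := by omega
        rw [s_invalid (by omega : ¬ (b ≤ a' + 1 + 1 ∧ a' + 1 + 1 ≤ a' + 1)), map_zero]
        rw [s_invalid (by omega : ¬ (b - 1 ≤ a' + 1 + 1 ∧ a' + 1 + 1 ≤ a' + 1))]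
        cases b with
        | zero =>
          simp only [Nat.zero_sub]
          push_cast
          module
        | succ b' =>
          simp only [Nat.add_sub_cancel]
          push_cast
          module
    · -- b = a (diagonal)
      obtain rfl : b = a' + 1 := by omega
      rw [s_invalid (by omega : ¬ (a' + 1 ≤ a' + 1 - 1 ∧ a' + 1 - 1 ≤ N)), smul_zero]
      rw [s_invalid (by omega : ¬ (a' + 1 + 1 ≤ a' + 1 ∧ a' + 1 ≤ N)), map_zero]
      simp only [Nat.add_sub_cancel]
      rw [zero_add, add_zero, map_smul, L_s (by omega : a' ≤ a' + 1 ∧ a' + 1 ≤ N)]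
      rcases Nat.lt_or_ge (a' + 1) N with haltN | hage
      · rw [Fop_s_pos (by omega : a' + 1 ≤ a' + 1 + 1 ∧ a' + 1 + 1 ≤ N) (by omega)]
        simp only [Nat.add_sub_cancel]
        push_cast
        module
      · obtain rfl : N = a' + 1 := by omega
        rw [s_invalid (by omega : ¬ (a' + 1 ≤ a' + 1 + 1 ∧ a' + 1 + 1 ≤ a' + 1)), map_zero]
        rw [s_invalid (by omega : ¬ (a' ≤ a' + 1 + 1 ∧ a' + 1 + 1 ≤ a' + 1))]
        push_cast
        module

instance (N : ℕ) : DecidableEq (Idx N) := by unfold Idx; infer_instance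


noncomputable def cf (N : ℕ) (v : V N) (a b : ℕ) : ℝ :=
  if h : b ≤ a ∧ a ≤ N then v ⟨(a, b), h⟩ else 0

lemma cf_eq {N : ℕ} (v : V N) {a b : ℕ} (h : b ≤ a ∧ a ≤ N) : cf N v a b = v ⟨(a,b), h⟩ :=
  dif_pos h

lemma cf_invalid {N : ℕ} (v : V N) {a b : ℕ} (h : ¬ (b ≤ a ∧ a ≤ N)) : cf N v a b = 0 :=
  dif_neg h

lemma cf_s {N a b c d : ℕ} :
    cf N (s N c d) a b = if (c = a ∧ d = b ∧ b ≤ a ∧ a ≤ N) then 1 else 0 := by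
  unfold cf
  by_cases h : b ≤ a ∧ a ≤ N
  · rw [dif_pos h]
    by_cases h2 : d ≤ c ∧ c ≤ N
    · rw [s_valid h2]
      classical
      erw [Finsupp.single_apply]
      by_cases h3 : c = a ∧ d = b
      · simp [h3.1, h3.2, h, Subtype.ext_iff]
        rfl
      · rw [if_neg, if_neg]
        · tauto
        · intro he
          apply h3
          have := congrArg Subtype.val he
          simp only at this
          exact ⟨congrArg Prod.fst this, congrArg Prod.snd this⟩
    · rw [s_invalid h2]
      rw [if_neg]
      · rfl
      · rintro ⟨rfl, rfl, _⟩ ; exact h2 h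
  · rw [dif_neg h, if_neg] ; tauto

lemma cf_add {N : ℕ} (v w : V N) (a b : ℕ) : cf N (v + w) a b = cf N v a b + cf N w a b := by
  unfold cf ; split <;> simp <;> rfl

lemma cf_smul {N : ℕ} (c : ℝ) (v : V N) (a b : ℕ) : cf N (c • v) a b = c * cf N v a b := by
  unfold cf ; split <;> simp <;> rfl

lemma cf_zero {N : ℕ} (a b : ℕ) : cf N (0 : V N) a b = 0 := by
  unfold cf ; split <;> simp <;> rfl

lemma cf_sum {N : ℕ} {ι : Type*} (t : Finset ι) (f : ι → V N) (a b : ℕ) :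
    cf N (∑ i ∈ t, f i) a b = ∑ i ∈ t, cf N (f i) a b := by
  unfold cf ; split <;> simp [Finsupp.finset_sum_apply] <;> exact Finset.sum_apply _ _ _

lemma eq_of_cf {N : ℕ} {v w : V N} (h : ∀ a b, cf N v a b = cf N w a b) : v = w := by
  ext i
  obtain ⟨⟨a, b⟩, hi⟩ := i
  have := h a b
  rw [cf_eq v hi, cf_eq w hi] at this
  exact this

lemma s_mem_piece {N a b p : ℕ} (hdeg : a + b = p) : s N a b ∈ piece N p := by
  by_cases h : b ≤ a ∧ a ≤ N
  · exact Submodule.subset_span ⟨a, b, h.1, h.2, hdeg, rfl⟩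
  · rw [s_invalid h] ; exact zero_mem _

lemma L_mem_piece {N p : ℕ} {v : V N} (hv : v ∈ piece N p) : L N v ∈ piece N (p+1) := by
  induction hv using Submodule.span_induction with
  | mem x hx =>
    obtain ⟨a, b, h1, h2, h3, rfl⟩ := hx
    rw [L_s ⟨h1, h2⟩]
    exact add_mem (s_mem_piece (by omega)) (s_mem_piece (by omega))
  | zero => rw [map_zero] ; exact zero_mem _
  | add x y _ _ hx hy => rw [map_add] ; exact add_mem hx hy
  | smul a x _ hx => rw [map_smul] ; exact Submodule.smul_mem _ _ hx

lemma Lpow_mem_piece {N p m : ℕ} {v : V N} (hv : v ∈ piece N p) :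
    ((L N)^m) v ∈ piece N (p+m) := by
  induction m with
  | zero => simpa using hv
  | succ m ih =>
    have : ((L N)^(m+1)) v = L N (((L N)^m) v) := by
      rw [pow_succ'] ; rfl
    rw [this]
    exact L_mem_piece ih

lemma Fop_mem_piece {N p : ℕ} {v : V N} (hv : v ∈ piece N p) : Fop N v ∈ piece N (p-1) := by
  induction hv using Submodule.span_induction with
  | mem x hx =>
    obtain ⟨a, b, h1, h2, h3, rfl⟩ := hx
    cases Nat.eq_zero_or_pos a with
    | inl ha0 =>
      subst ha0
      obtain rfl : b = 0 := Nat.le_zero.mp h1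
      rw [Fop_s00] ; exact zero_mem _
    | inr ha =>
      rw [Fop_s_pos ⟨h1, h2⟩ (by omega)]
      apply add_mem
      · exact Submodule.smul_mem _ _ (s_mem_piece (by omega))
      · cases Nat.eq_zero_or_pos b with
        | inl hb0 =>
          subst hb0
          simp only [Nat.cast_zero, zero_mul, zero_smul]
          exact zero_mem _
        | inr hb =>
          exact Submodule.smul_mem _ _ (s_mem_piece (by omega))
  | zero => rw [map_zero] ; exact zero_mem _
  | add x y _ _ hx hy => rw [map_add] ; exact add_mem hx hy
  | smul a x _ hx => rw [map_smul] ; exact Submodule.smul_mem _ _ hx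

lemma cf_piece {N p : ℕ} {v : V N} (hv : v ∈ piece N p) :
    ∀ a b, a + b ≠ p → cf N v a b = 0 := by
  induction hv using Submodule.span_induction with
  | mem x hx =>
    obtain ⟨c, d, h1, h2, h3, rfl⟩ := hx
    intro a b hab
    rw [cf_s, if_neg]
    rintro ⟨rfl, rfl, _⟩ ; omega
  | zero => intro a b _ ; exact cf_zero a b
  | add x y _ _ hx hy => intro a b hab ; rw [cf_add, hx a b hab, hy a b hab] ; ring
  | smul c x _ hx => intro a b hab ; rw [cf_smul, hx a b hab] ; ring

lemma piece_repr {N p : ℕ} {v : V N} (hv : v ∈ piece N p) :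
    v = ∑ j ∈ Finset.range (p/2 + 1), cf N v (p - j) j • s N (p - j) j := by
  apply eq_of_cf
  intro a b
  rw [cf_sum]
  by_cases hab : b ≤ a ∧ a ≤ N ∧ a + b = p
  · obtain ⟨h1, h2, h3⟩ := hab
    rw [Finset.sum_eq_single b]
    · rw [cf_smul, cf_s, if_pos ⟨by omega, rfl, h1, h2⟩]
      have : p - b = a := by omega
      rw [this, mul_one]
    · intro j _ hj
      rw [cf_smul, cf_s, if_neg, mul_zero]
      rintro ⟨_, rfl, _⟩ ; exact hj rfl
    · intro hb
      exfalso ; apply hb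
      rw [Finset.mem_range] ; omega
  · have hLHS : cf N v a b = 0 := by
      by_cases hval : b ≤ a ∧ a ≤ N
      · exact cf_piece hv a b (by tauto)
      · exact cf_invalid v hval
    rw [hLHS]
    symm
    apply Finset.sum_eq_zero
    intro j hj
    rw [Finset.mem_range] at hj
    rw [cf_smul, cf_s, if_neg, mul_zero]
    rintro ⟨rfl, rfl, hv1, hv2⟩
    exact hab ⟨hv1, hv2, by omega⟩

lemma piece_high {N q : ℕ} (hq : 2*N < q) {v : V N} (hv : v ∈ piece N q) : v = 0 := by
  have : piece N q = ⊥ := by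
    rw [piece, Submodule.span_eq_bot]
    rintro x ⟨a, b, h1, h2, h3, rfl⟩
    omega
  rw [this] at hv
  simpa using hv


lemma comm_piece {N p : ℕ} {v : V N} (hv : v ∈ piece N p) :
    Fop N (L N v) = L N (Fop N v) + (2*(N:ℝ) - 2*(p:ℝ)) • v := by
  induction hv using Submodule.span_induction with
  | mem x hx =>
    obtain ⟨a, b, h1, h2, h3, rfl⟩ := hx
    rw [comm_s ⟨h1, h2⟩]
    have hab : (a:ℝ) + (b:ℝ) = (p:ℝ) := by exact_mod_cast congrArg (Nat.cast : ℕ → ℝ) h3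
    rw [hab]
  | zero => simp
  | add x y _ _ hx hy =>
    simp only [map_add, hx, hy, smul_add]
    abel
  | smul a x _ hx =>
    simp only [map_smul, hx]
    module

lemma Lpow_succ_apply {N : ℕ} (m : ℕ) (v : V N) :
    ((L N)^(m+1)) v = L N (((L N)^m) v) := by
  rw [pow_succ', Module.End.mul_apply]

lemma comm_pow {N p : ℕ} {v : V N} (hv : v ∈ piece N p) (m : ℕ) :
    Fop N (((L N)^(m+1)) v) = ((L N)^(m+1)) (Fop N v)
      + (((m:ℝ)+1) * (2*(N:ℝ) - 2*(p:ℝ) - (m:ℝ))) • ((L N)^m) v := by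
  induction m with
  | zero =>
    rw [show (0:ℕ)+1 = 1 from rfl, pow_one, pow_zero, Module.End.one_apply]
    rw [comm_piece hv]
    push_cast
    module
  | succ m ih =>
    have hw : ((L N)^(m+1)) v ∈ piece N (p+(m+1)) := Lpow_mem_piece hv
    rw [Lpow_succ_apply (m+1) v, comm_piece hw, ih, map_add, map_smul,
      ← Lpow_succ_apply (m+1), ← Lpow_succ_apply m]
    push_cast
    module

lemma string_vanish {N q : ℕ} {v : V N} (hv : v ∈ piece N q) (hF : Fop N v = 0) :
    ∀ r, ((L N)^r) v = 0 →
      (∀ r' : ℕ, r' < r → ((r':ℝ)+1) * (2*(N:ℝ) - 2*(q:ℝ) - (r':ℝ)) ≠ 0) → v = 0 := by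
  intro r
  induction r with
  | zero => intro h0 _ ; simpa using h0
  | succ r ih =>
    intro hLr hcoef
    apply ih ?_ (fun r' hr' => hcoef r' (by omega))
    have hcp := comm_pow hv r
    rw [hLr, map_zero, hF, map_zero, zero_add] at hcp
    exact (smul_eq_zero.mp hcp.symm).resolve_left (hcoef r (by omega))

lemma Lpow_zero_of_F {N p : ℕ} (hp : p ≤ N) {v : V N} (hv : v ∈ piece N p)
    (hF : Fop N v = 0) : ((L N)^(2*N+1-2*p)) v = 0 := by
  obtain ⟨m', hm'⟩ : ∃ m', 2*N+1-2*p = m'+1 := ⟨2*N-2*p, by omega⟩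
  have hm'' : m' = 2*N - 2*p := by omega
  set w := ((L N)^(2*N+1-2*p)) v with hwdef
  have hw : w ∈ piece N (p+(2*N+1-2*p)) := Lpow_mem_piece hv
  have hFw : Fop N w = 0 := by
    rw [hwdef, hm', comm_pow hv m', hF, map_zero, zero_add]
    have : 2*(N:ℝ) - 2*(p:ℝ) - (m':ℝ) = 0 := by
      rw [hm'']
      push_cast [Nat.cast_sub (by omega : 2*p ≤ 2*N)]
      ring
    rw [this, mul_zero, zero_smul]
  have hdeg : p + (2*N+1-2*p) = 2*N+1-p := by omega
  rw [hdeg] at hw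
  apply string_vanish hw hFw (2*N+1)
  · have : ((L N)^(2*N+1)) w ∈ piece N ((2*N+1-p) + (2*N+1)) := Lpow_mem_piece hw
    exact piece_high (by omega) this
  · intro r' hr'
    apply mul_ne_zero
    · positivity
    · have hcast : ((2*N+1-p : ℕ) : ℝ) = 2*(N:ℝ) + 1 - (p:ℝ) := by
        push_cast [Nat.cast_sub (by omega : p ≤ 2*N+1)] ; ring
      rw [hcast]
      have h1 : (p:ℝ) ≤ (N:ℝ) := by exact_mod_cast hp
      have h2 : (0:ℝ) ≤ (r':ℝ) := Nat.cast_nonneg r'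
      nlinarith

lemma F_zero_piece0 {N : ℕ} {v : V N} (hv : v ∈ piece N 0) : Fop N v = 0 := by
  induction hv using Submodule.span_induction with
  | mem x hx =>
    obtain ⟨a, b, h1, h2, h3, rfl⟩ := hx
    obtain rfl : a = 0 := by omega
    obtain rfl : b = 0 := by omega
    exact Fop_s00
  | zero => simp
  | add x y _ _ hx hy => rw [map_add, hx, hy, add_zero]
  | smul a x _ hx => rw [map_smul, hx, smul_zero]

lemma F_of_prim {N : ℕ} : ∀ p, p ≤ N → ∀ v : V N, v ∈ piece N p →
    ((L N)^(2*N+1-2*p)) v = 0 → Fop N v = 0 := by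
  intro p
  induction p using Nat.strong_induction_on with
  | _ p ih =>
    intro hp v hv hL
    match p, hp with
    | 0, _ => exact F_zero_piece0 hv
    | (p'+1), hp => ?_
    obtain ⟨m'', hm''⟩ : ∃ m'', 2*N+1-2*(p'+1) = m''+1 := ⟨2*N-2*(p'+1), by omega⟩
    have hcp := comm_pow hv m''
    rw [← hm'', hL] at hcp
    have hcoef : 2*(N:ℝ) - 2*((p'+1:ℕ):ℝ) - (m'':ℝ) = 0 := by
      have : m'' = 2*N - 2*(p'+1) := by omega
      rw [this]
      push_cast [Nat.cast_sub (by omega : 2*(p'+1) ≤ 2*N)]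
      ring
    rw [hcoef, mul_zero, zero_smul, add_zero] at hcp
    -- hcp : 0 = L^m (Fop v)
    set u := Fop N v with hudef
    have hu : u ∈ piece N p' := by
      have := Fop_mem_piece hv
      simpa using this
    have hLu : ((L N)^(2*N+1-2*(p'+1))) u = 0 := hcp.symm
    have hLu2 : ((L N)^(2*N+1-2*p')) u = 0 := by
      have hexp : 2*N+1-2*p' = 2 + (2*N+1-2*(p'+1)) := by omega
      rw [hexp, pow_add, Module.End.mul_apply, hLu, map_zero]
    have hFu : Fop N u = 0 := ih p' (by omega) (by omega) u hu hLu2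
    have : u = 0 := by
      apply string_vanish hu hFu (2*N+1-2*(p'+1)) hLu
      intro r' hr'
      apply mul_ne_zero
      · positivity
      · have h1 : (r':ℝ) ≤ 2*(N:ℝ) - 2*(p':ℝ) - 2 := by
          have : (r':ℝ) ≤ ((2*N+1-2*(p'+1) - 1 : ℕ) : ℝ) := by
            exact_mod_cast Nat.cast_le.mpr (by omega : r' ≤ 2*N+1-2*(p'+1) - 1)
          have hc2 : ((2*N+1-2*(p'+1) - 1 : ℕ) : ℝ) = 2*(N:ℝ) - 2*(p':ℝ) - 2 := by
            push_cast [Nat.cast_sub (by omega : 2*(p'+1) ≤ 2*N+1), Nat.cast_sub (by omega : 1 ≤ 2*N+1-2*(p'+1))]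
            ring
          linarith [hc2 ▸ this]
        linarith
    exact this



noncomputable def ajR (N k j : ℕ) : ℝ :=
  (-1 : ℝ) ^ j * ((N + 1 - j).choose (N - 2 * k)) * ((N - 2 * k + j).choose (N - 2 * k))

lemma alpha_eq (N k : ℕ) :
    alpha N k = ∑ j ∈ Finset.range (k + 1), ajR N k j • s N (2 * k - j) j := rfl

lemma cf_Fop {N : ℕ} {c d : ℕ} (hdc : d ≤ c) (v : V N) :
    cf N (Fop N v) c d
      = (((c:ℝ)+2) * ((N:ℝ)-(c:ℝ))) * cf N v (c+1) d
        + (((d:ℝ)+1) * ((N:ℝ)+1-(d:ℝ))) * cf N v c (d+1) := by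
  have key : ∀ (a b : ℕ), b ≤ a ∧ a ≤ N →
      cf N (Fop N (s N a b)) c d
        = (((c:ℝ)+2) * ((N:ℝ)-(c:ℝ))) * cf N (s N a b) (c+1) d
          + (((d:ℝ)+1) * ((N:ℝ)+1-(d:ℝ))) * cf N (s N a b) c (d+1) := by
    intro a b ⟨hba, haN⟩
    cases Nat.eq_zero_or_pos a with
    | inl ha0 =>
      subst ha0
      obtain rfl : b = 0 := Nat.le_zero.mp hba
      rw [Fop_s00, cf_zero, cf_s, cf_s,
        if_neg (by rintro ⟨h, -⟩ ; omega),
        if_neg (by rintro ⟨-, h, -⟩ ; omega)]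
      ring
    | inr ha =>
      rw [Fop_s_pos ⟨hba, haN⟩ (by omega), cf_add, cf_smul, cf_smul,
        cf_s, cf_s, cf_s, cf_s]
      split_ifs with h1 h2 h3 h4 <;>
      first
        | (exfalso ; omega)
        | (have hac : (a:ℝ) = (c:ℝ)+1 := by exact_mod_cast (by omega : a = c+1)
           have hbd : (b:ℝ) = (d:ℝ) := by exact_mod_cast (by omega : b = d)
           rw [hac, hbd] ; ring)
        | (have hac : (a:ℝ) = (c:ℝ) := by exact_mod_cast (by omega : a = c)
           have hbd : (b:ℝ) = (d:ℝ)+1 := by exact_mod_cast (by omega : b = d+1)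
           rw [hac, hbd] ; ring)
        | (have hb0 : (b:ℝ) = 0 := by exact_mod_cast (by omega : b = 0)
           rw [hb0] ; ring)
        | ring
  induction v using Finsupp.induction_linear with
  | zero => rw [map_zero, cf_zero, cf_zero, cf_zero] ; ring
  | add f g hf hg => rw [map_add, cf_add, cf_add, cf_add, hf, hg] ; ring
  | single i r =>
    obtain ⟨⟨a,b⟩, hi⟩ := i
    have hs : (Finsupp.single (⟨(a,b),hi⟩ : Idx N) r) = r • s N a b := by
      rw [s_valid hi]
      exact (Finsupp.smul_single_one _ r).symm
    erw [hs]
    rw [map_smul, cf_smul, cf_smul, cf_smul, key a b hi]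
    ring

lemma piece_F_rec {N p : ℕ} {v : V N} (hv : v ∈ piece N p) (hF : Fop N v = 0)
    {t : ℕ} (ht : 2*t < p) :
    (((p:ℝ)-(t:ℝ)+1) * ((N:ℝ)+1-((p:ℝ)-(t:ℝ)))) * cf N v (p-t) t
      + (((t:ℝ)+1) * ((N:ℝ)+1-(t:ℝ))) * cf N v (p-1-t) (t+1) = 0 := by
  have h0 : cf N (Fop N v) (p-1-t) t = 0 := by rw [hF] ; exact cf_zero _ _
  rw [cf_Fop (by omega : t ≤ p-1-t)] at h0
  have e1 : p-1-t+1 = p-t := by omega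
  have e2 : ((p-1-t : ℕ):ℝ) = (p:ℝ)-(t:ℝ)-1 := by
    have e3 : p-1-t = p-(1+t) := by omega
    rw [e3, Nat.cast_sub (by omega)]
    push_cast ; ring
  rw [e1, e2] at h0
  linear_combination h0

lemma choose_id1 {N k t : ℕ} (ht : t < k) (hk : 2*k ≤ N) :
    ((N-t).choose (N-2*k) : ℝ) * ((N:ℝ)+1-(t:ℝ))
      = ((N+1-t).choose (N-2*k) : ℝ) * (2*(k:ℝ)+1-(t:ℝ)) := by
  have h := Nat.choose_mul_succ_eq (N-t) (N-2*k)
  have e2 : N - t + 1 - (N - 2*k) = 2*k + 1 - t := by omega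
  have e1 : N - t + 1 = N + 1 - t := by omega
  rw [e2, e1] at h
  have h' := congrArg (fun n : ℕ => (n : ℝ)) h
  simp only [Nat.cast_mul] at h'
  rw [Nat.cast_sub (by omega : t ≤ N+1), Nat.cast_sub (by omega : t ≤ 2*k+1)] at h'
  push_cast at h'
  linear_combination h'

lemma choose_id2 {N k t : ℕ} (ht : t < k) (hk : 2*k ≤ N) :
    ((N-2*k+t).choose (N-2*k) : ℝ) * ((N:ℝ)-2*(k:ℝ)+(t:ℝ)+1)
      = ((N-2*k+t+1).choose (N-2*k) : ℝ) * ((t:ℝ)+1) := by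
  have h := Nat.choose_mul_succ_eq (N-2*k+t) (N-2*k)
  have e : N-2*k+t+1-(N-2*k) = t+1 := by omega
  rw [e] at h
  have h' := congrArg (fun n : ℕ => (n : ℝ)) h
  simp only [Nat.cast_mul] at h'
  push_cast [Nat.cast_sub hk] at h'
  linear_combination h'

lemma ajR_rec {N k t : ℕ} (ht : t < k) (hk : 2*k ≤ N) :
    (2*(k:ℝ)-(t:ℝ)+1) * ((N:ℝ)+1-(2*(k:ℝ)-(t:ℝ))) * ajR N k t
      + ((t:ℝ)+1) * ((N:ℝ)+1-(t:ℝ)) * ajR N k (t+1) = 0 := by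
  unfold ajR
  have e1 : N + 1 - (t+1) = N - t := by omega
  have e2 : N - 2*k + (t+1) = N - 2*k + t + 1 := by omega
  rw [e1, e2, pow_succ]
  have h1 := choose_id1 ht hk
  have h2 := choose_id2 ht hk
  linear_combination ((-1:ℝ)^t * ((N+1-t).choose (N-2*k) : ℝ) * (2*(k:ℝ)+1-(t:ℝ))) * h2
    - ((-1:ℝ)^t * ((N-2*k+t+1).choose (N-2*k):ℝ) * ((t:ℝ)+1)) * h1

lemma ajR_zero (N k : ℕ) : ajR N k 0 = ((N+1).choose (N-2*k) : ℝ) := by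
  unfold ajR
  rw [Nat.sub_zero, add_zero, Nat.choose_self]
  push_cast ; ring


lemma cf_alpha_hit {N k b : ℕ} (hk : 2*k ≤ N) (hb : b ≤ k) :
    cf N (alpha N k) (2*k-b) b = ajR N k b := by
  rw [alpha_eq, cf_sum]
  rw [Finset.sum_eq_single b]
  · rw [cf_smul, cf_s, if_pos ⟨rfl, rfl, by omega, by omega⟩, mul_one]
  · intro j _ hj
    rw [cf_smul, cf_s, if_neg, mul_zero]
    rintro ⟨-, rfl, -⟩ ; exact hj rfl
  · intro hbmem
    exact absurd (Finset.mem_range.mpr (by omega)) hbmem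

lemma cf_alpha_miss {N k a b : ℕ} (h : ¬ (a + b = 2*k ∧ b ≤ k)) :
    cf N (alpha N k) a b = 0 := by
  rw [alpha_eq, cf_sum]
  apply Finset.sum_eq_zero
  intro j hj
  rw [Finset.mem_range] at hj
  rw [cf_smul, cf_s, if_neg, mul_zero]
  rintro ⟨rfl, rfl, -, -⟩
  exact h ⟨by omega, by omega⟩

lemma alpha_mem_piece {N k : ℕ} : alpha N k ∈ piece N (2*k) := by
  rw [alpha_eq]
  apply Submodule.sum_mem
  intro j hj
  rw [Finset.mem_range] at hj
  exact Submodule.smul_mem _ _ (s_mem_piece (by omega))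

lemma F_alpha {N k : ℕ} (hk : 2*k ≤ N) : Fop N (alpha N k) = 0 := by
  apply eq_of_cf
  intro c d
  rw [cf_zero]
  by_cases hdc : d ≤ c ∧ c ≤ N
  · rw [cf_Fop hdc.1]
    by_cases hdeg : c + d + 1 = 2*k
    · have hdk : d < k := by omega
      have e1 : c + 1 = 2*k - d := by omega
      have e2 : c = 2*k - (d+1) := by omega
      rw [e1, cf_alpha_hit hk (by omega)]
      rw [show cf N (alpha N k) c (d+1) = cf N (alpha N k) (2*k-(d+1)) (d+1) by rw [← e2],
        cf_alpha_hit hk (by omega)]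
      have hc1 : (c:ℝ) = 2*(k:ℝ) - (d:ℝ) - 1 := by
        have : (c:ℝ) + (d:ℝ) + 1 = 2*(k:ℝ) := by exact_mod_cast congrArg (fun n : ℕ => (n:ℝ)) hdeg
        linarith
      have := ajR_rec hdk hk
      rw [hc1]
      push_cast
      linear_combination this
    · rw [cf_alpha_miss (fun hc => hdeg (by omega)),
        cf_alpha_miss (N := N) (a := c) (b := d+1) (fun hc => hdeg (by omega))]
      ring
  · exact cf_invalid _ hdc

lemma alpha_ne_zero {N k : ℕ} (hk : 2*k ≤ N) : alpha N k ≠ 0 := by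
  intro h
  have h2 : cf N (alpha N k) (2*k-0) 0 = ajR N k 0 := cf_alpha_hit hk (by omega)
  rw [h, cf_zero, ajR_zero] at h2
  have : 0 < (N+1).choose (N-2*k) := Nat.choose_pos (by omega)
  have : (0:ℝ) < ((N+1).choose (N-2*k) : ℝ) := by exact_mod_cast this
  linarith [h2]

lemma even_span {N k : ℕ} (hk : 2*k ≤ N) {v : V N} (hv : v ∈ piece N (2*k))
    (hF : Fop N v = 0) :
    (((N+1).choose (N-2*k) : ℝ)) • v = (cf N v (2*k) 0) • alpha N k := by
  have step : ∀ j, j ≤ k → ((N+1).choose (N-2*k) : ℝ) * cf N v (2*k-j) j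
      = cf N v (2*k) 0 * ajR N k j := by
    intro j
    induction j with
    | zero =>
      intro _
      rw [Nat.sub_zero, ajR_zero]
      ring
    | succ j ih =>
      intro hj
      have hrecv := piece_F_rec hv hF (t := j) (by omega)
      have hreca := ajR_rec (by omega : j < k) hk
      have hBne : ((j:ℝ)+1) * ((N:ℝ)+1-(j:ℝ)) ≠ 0 := by
        have h1 : (j:ℝ) ≤ (N:ℝ) := by exact_mod_cast (by omega : j ≤ N)
        have h2 : (0:ℝ) ≤ (j:ℝ) := Nat.cast_nonneg j
        apply mul_ne_zero <;> [skip ; skip] <;> nlinarith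
      apply mul_left_cancel₀ hBne
      have hp2k : ((2*k : ℕ):ℝ) = 2*(k:ℝ) := by push_cast ; ring
      have e1 : 2*k - 1 - j = 2*k - (j+1) := by omega
      rw [e1, hp2k] at hrecv
      have ihj := ih (by omega)
      linear_combination (((N+1).choose (N-2*k) : ℝ)) * hrecv
        - (cf N v (2*k) 0) * hreca
        - ((2*(k:ℝ)-(j:ℝ)+1) * ((N:ℝ)+1-(2*(k:ℝ)-(j:ℝ)))) * ihj
  have h2k2 : 2*k/2 + 1 = k + 1 := by omega
  conv_lhs => rw [piece_repr hv]
  rw [alpha_eq, h2k2, Finset.smul_sum, Finset.smul_sum]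
  apply Finset.sum_congr rfl
  intro j hj
  rw [Finset.mem_range] at hj
  rw [smul_smul, smul_smul, step j (by omega)]

lemma odd_zero {N k : ℕ} (hk : 2*k+1 ≤ N) {v : V N} (hv : v ∈ piece N (2*k+1))
    (hF : Fop N v = 0) : v = 0 := by
  have hp2k : ((2*k+1 : ℕ):ℝ) = 2*(k:ℝ)+1 := by push_cast ; ring
  have hAne : ∀ t : ℕ, t ≤ k →
      ((2*(k:ℝ)+1)-(t:ℝ)+1) * ((N:ℝ)+1-((2*(k:ℝ)+1)-(t:ℝ))) ≠ 0 := by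
    intro t htk
    have h1 : (t:ℝ) ≤ (k:ℝ) := by exact_mod_cast htk
    have h2 : 2*(k:ℝ)+1 ≤ (N:ℝ) := by exact_mod_cast hk
    have h3 : (0:ℝ) ≤ (t:ℝ) := Nat.cast_nonneg t
    apply mul_ne_zero <;> nlinarith
  have hx : ∀ i, i ≤ k → cf N v (2*k+1-(k-i)) (k-i) = 0 := by
    intro i
    induction i with
    | zero =>
      intro _
      have hrec := piece_F_rec hv hF (t := k) (by omega)
      rw [hp2k] at hrec
      have hhi : cf N v (2*k+1-1-k) (k+1) = 0 := by
        apply cf_invalid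
        rintro ⟨h, -⟩ ; omega
      rw [hhi, mul_zero, add_zero] at hrec
      have := mul_eq_zero.mp hrec
      rcases this with h | h
      · exact absurd h (hAne k (by omega))
      · simpa using h
    | succ i ih =>
      intro hik
      have hrec := piece_F_rec hv hF (t := k-(i+1)) (by omega)
      rw [hp2k] at hrec
      have e1 : k - (i+1) + 1 = k - i := by omega
      have e2 : 2*k+1-1-(k-(i+1)) = 2*k+1-(k-i) := by omega
      rw [e1, e2, ih (by omega), mul_zero, add_zero] at hrec
      rcases mul_eq_zero.mp hrec with h | h
      · exact absurd h (hAne (k-(i+1)) (by omega))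
      · exact h
  have hxall : ∀ j, j ≤ k → cf N v (2*k+1-j) j = 0 := by
    intro j hj
    have := hx (k-j) (by omega)
    rwa [show k - (k-j) = j by omega] at this
  rw [piece_repr hv]
  apply Finset.sum_eq_zero
  intro j hj
  rw [Finset.mem_range] at hj
  rw [show (2*k+1)/2 = k by omega] at hj
  rw [hxall j (by omega), zero_smul]



lemma mem_Vprim {N p : ℕ} {v : V N} :
    v ∈ Vprim N p ↔ v ∈ piece N p ∧ ((L N)^(2*N+1-2*p)) v = 0 := by
  rw [Vprim, Submodule.mem_inf, LinearMap.mem_ker]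

lemma even_case {N k : ℕ} (hk : 2*k ≤ N) :
    Vprim N (2*k) = Submodule.span ℝ {alpha N k} := by
  apply le_antisymm
  · intro v hv
    rw [mem_Vprim] at hv
    obtain ⟨h1, h2⟩ := hv
    have hF := F_of_prim (2*k) hk v h1 h2
    have hes := even_span hk h1 hF
    rw [Submodule.mem_span_singleton]
    have hc0 : (((N+1).choose (N-2*k) : ℕ) : ℝ) ≠ 0 := by
      have : 0 < (N+1).choose (N-2*k) := Nat.choose_pos (by omega)
      exact_mod_cast this.ne'
    refine ⟨(((N+1).choose (N-2*k) : ℕ) : ℝ)⁻¹ * cf N v (2*k) 0, ?_⟩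
    rw [← smul_smul, ← hes, smul_smul, inv_mul_cancel₀ hc0, one_smul]
  · rw [Submodule.span_le]
    intro x hx
    rw [Set.mem_singleton_iff] at hx
    subst hx
    rw [SetLike.mem_coe, mem_Vprim]
    exact ⟨alpha_mem_piece, Lpow_zero_of_F hk alpha_mem_piece (F_alpha hk)⟩

lemma odd_case {N k : ℕ} (hk : 2*k+1 ≤ N) : Vprim N (2*k+1) = ⊥ := by
  rw [eq_bot_iff]
  intro v hv
  rw [mem_Vprim] at hv
  obtain ⟨h1, h2⟩ := hv
  have hF := F_of_prim (2*k+1) hk v h1 h2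
  have := odd_zero hk h1 hF
  simpa using this

end Aux

theorem stmt1 (N p : ℕ) (hN : 0 < N) (hp : p ≤ N) :
    (Vprim N p ≠ ⊥ ↔ ∃ k : ℕ, p = 2 * k) ∧
    ∀ k : ℕ, p = 2 * k →
      Vprim N p = Submodule.span ℝ {alpha N k} ∧ alpha N k ≠ 0 := by
  constructor
  · constructor
    · intro hne
      by_contra hodd
      rcases Nat.even_or_odd p with he | ho
      · obtain ⟨r, hr⟩ := he
        exact hodd ⟨r, by omega⟩
      · obtain ⟨k, hk⟩ := ho
        subst hk
        exact hne (Aux.odd_case (by omega))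
    · rintro ⟨k, rfl⟩
      rw [Aux.even_case (by omega)]
      intro h
      exact Aux.alpha_ne_zero (by omega : 2*k ≤ N) (Submodule.span_singleton_eq_bot.mp h)
  · rintro k rfl
    exact ⟨Aux.even_case (by omega), Aux.alpha_ne_zero (by omega)⟩
end

section
/- Let N, k, r be integers with 0 ≤ 2k ≤ N and r ≥ k+1. Then Σ_{j=0}^{2k+1} (−1)^j · C(N+1−j, N−2k) · C(N−2k+j, N−2k) · C(2r−2k−1, r−j) = 0. -/
/-- Integer binomial coefficient with the convention `C a b = 0` unless `0 ≤ b ≤ a`. -/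
def C (a b : ℤ) : ℤ := if 0 ≤ b ∧ b ≤ a then (a.toNat).choose b.toNat else 0

lemma C_symm (n a : ℤ) : C n a = C n (n - a) := by
  unfold C
  by_cases h : 0 ≤ a ∧ a ≤ n
  · rw [if_pos h, if_pos (show 0 ≤ n - a ∧ n - a ≤ n by omega)]
    have h1 : (n - a).toNat = n.toNat - a.toNat := by omega
    rw [h1, Nat.choose_symm (by omega)]
  · rw [if_neg h, if_neg (by omega)]

theorem stmt5 (N k r : ℤ) (hk : 0 ≤ k) (hkN : 2 * k ≤ N) (hr : k + 1 ≤ r) :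
    ∑ j ∈ Finset.range (2 * k.toNat + 2),
      (-1 : ℤ) ^ j * C (N + 1 - j) (N - 2 * k) * C (N - 2 * k + j) (N - 2 * k) *
        C (2 * r - 2 * k - 1) (r - j) = 0 := by
  set K := k.toNat with hKdef
  have hKk : (K : ℤ) = k := Int.toNat_of_nonneg hk
  set f : ℕ → ℤ := fun j =>
    (-1 : ℤ) ^ j * C (N + 1 - j) (N - 2 * k) * C (N - 2 * k + j) (N - 2 * k) *
      C (2 * r - 2 * k - 1) (r - j) with hf
  have key : ∀ j ∈ Finset.range (2 * K + 2), f (2 * K + 1 - j) = - f j := by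
    intro j hj
    simp only [Finset.mem_range] at hj
    have hj' : j ≤ 2 * K + 1 := by omega
    have hcast : ((2 * K + 1 - j : ℕ) : ℤ) = 2 * k + 1 - j := by
      push_cast [hj']; omega
    simp only [hf]
    have e1 : N + 1 - ((2 * K + 1 - j : ℕ) : ℤ) = N - 2 * k + j := by
      rw [hcast]; ring
    have e2 : N - 2 * k + ((2 * K + 1 - j : ℕ) : ℤ) = N + 1 - j := by
      rw [hcast]; ring
    have e3 : C (2 * r - 2 * k - 1) (r - ((2 * K + 1 - j : ℕ) : ℤ))
        = C (2 * r - 2 * k - 1) (r - j) := by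
      rw [hcast, C_symm (2 * r - 2 * k - 1) (r - j)]
      congr 1; ring
    have e4 : (-1 : ℤ) ^ (2 * K + 1 - j) = -(-1 : ℤ) ^ j := by
      rcases Nat.even_or_odd j with h | h
      · have ho : Odd (2 * K + 1 - j) := by
          obtain ⟨m, hm⟩ := h; exact ⟨K - m, by omega⟩
        rw [ho.neg_one_pow, h.neg_one_pow]
      · have he : Even (2 * K + 1 - j) := by
          obtain ⟨m, hm⟩ := h; exact ⟨K - m, by omega⟩
        rw [he.neg_one_pow, h.neg_one_pow]; ring
    rw [e4, e1, e2, e3]; ring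
  have hS : (∑ j ∈ Finset.range (2 * K + 2), f j)
      = - ∑ j ∈ Finset.range (2 * K + 2), f j := by
    conv_lhs => rw [← Finset.sum_range_reflect]
    rw [← Finset.sum_neg_distrib]
    apply Finset.sum_congr rfl
    intro j hj
    have hidx : 2 * K + 2 - 1 - j = 2 * K + 1 - j := by omega
    rw [hidx, key j hj]
  have : (∑ j ∈ Finset.range (2 * K + 2), f j) = 0 := by linarith
  exact this
end

section
/- Let n, m, T be integers with n ≥ 0, m ≥ 0 and T ≥ n+1. Then Σ_{b=0}^{n} C(n−b, m) · C(T−1−b, n−b) · C(n+b, n) = C(T−1−n+m, m) · C(T+n, n−m). -/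
def gch (a : ℤ) (k : ℕ) : ℤ :=
  if 0 ≤ a then (a.toNat.choose k : ℤ) else (-1)^k * (((-a - 1).toNat + k).choose k : ℤ)

lemma gch_natCast (a k : ℕ) : gch (a : ℤ) k = (a.choose k : ℤ) := by
  simp [gch]

lemma gch_neg (s : ℕ) (k : ℕ) : gch (-(s+1) : ℤ) k = (-1)^k * ((s+k).choose k : ℤ) := by
  have h : ¬ (0 : ℤ) ≤ -(s+1) := by omega
  simp only [gch, if_neg h]
  norm_num

lemma gch_zero (a : ℤ) : gch a 0 = 1 := by
  unfold gch; split <;> simp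

lemma gch_pascal (a : ℤ) (k : ℕ) : gch a (k+1) = gch (a-1) (k+1) + gch (a-1) k := by
  rcases lt_trichotomy a 0 with h | h | h
  · obtain ⟨s, rfl⟩ : ∃ s : ℕ, a = -(s+1) := ⟨(-a-1).toNat, by omega⟩
    have : (-(s+1) : ℤ) - 1 = -((s+1 : ℕ)+1) := by push_cast; ring
    rw [this, gch_neg, gch_neg, gch_neg]
    have hP : ((s+1)+(k+1)).choose (k+1) = (s+(k+1)).choose (k+1) + ((s+1)+k).choose k := by
      rw [show (s+1)+(k+1) = (s+k+1)+1 from by omega, show s+(k+1) = s+k+1 from by omega,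
        show (s+1)+k = s+k+1 from by omega, Nat.choose_succ_succ']
      omega
    push_cast [hP]
    ring
  · subst h
    have h1 : (0:ℤ) - 1 = -((0:ℕ)+1) := by norm_num
    rw [h1, gch_neg, gch_neg]
    have h0 : gch 0 (k+1) = 0 := by simp [gch]
    rw [h0]
    simp
    ring
  · obtain ⟨s, rfl⟩ : ∃ s : ℕ, a = (s+1 : ℕ) := ⟨(a-1).toNat, by omega⟩
    have h1 : ((s+1 : ℕ) : ℤ) - 1 = (s : ℕ) := by push_cast; ring
    rw [h1, gch_natCast, gch_natCast, gch_natCast]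
    push_cast [Nat.choose_succ_succ' s k]
    ring

lemma S_rec (x y : ℤ) (n : ℕ) :
    ∑ k ∈ Finset.range (n+2), gch x k * gch y (n+1-k)
  = ∑ k ∈ Finset.range (n+2), gch (x-1) k * gch y (n+1-k)
  + ∑ k ∈ Finset.range (n+1), gch (x-1) k * gch y (n-k) := by
  rw [Finset.sum_range_succ' (fun k => gch x k * gch y (n+1-k)) (n+1),
      Finset.sum_range_succ' (fun k => gch (x-1) k * gch y (n+1-k)) (n+1)]
  simp only [gch_zero, Nat.sub_zero]
  have h1 : ∀ k ∈ Finset.range (n+1), gch x (k+1) * gch y (n+1-(k+1))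
      = gch (x-1) (k+1) * gch y (n+1-(k+1)) + gch (x-1) k * gch y (n-k) := by
    intro k hk
    rw [gch_pascal x k, show n+1-(k+1) = n-k from by omega]
    ring
  rw [Finset.sum_congr rfl h1, Finset.sum_add_distrib]
  ring

lemma gch_vandermonde (x y : ℤ) (n : ℕ) :
    ∑ k ∈ Finset.range (n+1), gch x k * gch y (n-k) = gch (x+y) n := by
  induction x using Int.induction_on generalizing n with
  | zero =>
    rw [Finset.sum_eq_single 0]
    · simp [gch_zero]
    · intro k hk hk0
      obtain ⟨j, rfl⟩ : ∃ j:ℕ, k = j+1 := ⟨k-1, by omega⟩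
      have : gch 0 (j+1) = 0 := by simp [gch]
      rw [this, zero_mul]
    · intro h; simp at h
  | succ i ih =>
    cases n with
    | zero => simp [gch_zero]
    | succ n =>
      have hr := S_rec ((i:ℤ)+1) y n
      rw [show ((i:ℤ)+1) - 1 = (i:ℤ) from by ring] at hr
      rw [hr, ih (n+1), ih n, show ((i:ℤ)+y) = ((i:ℤ)+1+y)-1 from by ring, ← gch_pascal]
  | pred i ih =>
    induction n with
    | zero => simp [gch_zero]
    | succ n ihn =>
      have hr := S_rec (-(i:ℤ)) y n
      rw [show (-(i:ℤ)) - 1 = -(i:ℤ)-1 from rfl] at hr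
      have h2 : ∑ k ∈ Finset.range (n+2), gch (-(i:ℤ)-1) k * gch y (n+1-k)
          = gch (-(i:ℤ)+y) (n+1) - gch (-(i:ℤ)-1+y) n := by
        rw [← ih (n+1), hr, ihn]
        ring
      rw [h2, show (-(i:ℤ)+y) = (-(i:ℤ)-1+y)+1-1+1 from by ring, gch_pascal]
      ring_nf

lemma gch_trinom (x : ℤ) (M j : ℕ) (h : M ≤ j) :
    gch x j * (j.choose M : ℤ) = gch x M * gch (x - (M:ℤ)) (j - M) := by
  rcases le_or_gt 0 x with hx | hx
  · obtain ⟨a, rfl⟩ : ∃ a : ℕ, x = (a:ℤ) := ⟨x.toNat, by omega⟩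
    rcases le_or_gt (M:ℤ) (a:ℤ) with hM | hM
    · have hMa : M ≤ a := by exact_mod_cast hM
      rw [show ((a:ℤ) - M) = ((a - M : ℕ) : ℤ) from by push_cast [hMa]; ring,
        gch_natCast, gch_natCast, gch_natCast]
      rcases le_or_gt j a with hja | hja
      · rw [← Nat.cast_mul, ← Nat.cast_mul, Nat.choose_mul (n := a) h]
      · rw [Nat.choose_eq_zero_of_lt hja, Nat.choose_eq_zero_of_lt (by omega : a - M < j - M)]
        simp
    · have hMa : a < M := by exact_mod_cast hM
      rw [gch_natCast, gch_natCast, Nat.choose_eq_zero_of_lt (by omega : a < j),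
        Nat.choose_eq_zero_of_lt hMa]
      simp
  · obtain ⟨s, rfl⟩ : ∃ s : ℕ, x = -((s:ℤ)+1) := ⟨(-x-1).toNat, by omega⟩
    have hxM : -((s:ℤ)+1) - M = -(((s+M:ℕ):ℤ)+1) := by push_cast; ring
    rw [hxM, gch_neg, gch_neg, gch_neg]
    have key : (s+j).choose j * j.choose M = (s+M).choose M * ((s+M)+(j-M)).choose (j-M) := by
      have hsj : s + j = (s+M)+(j-M) := by omega
      have h1 := Nat.choose_mul (n := s+j) h
      have h2 := Nat.choose_mul (n := s+j) (Nat.le_add_left M s)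
      rw [show s+j-M = s+(j-M) from by omega] at h1 h2
      rw [show s+M-M = s from by omega, Nat.choose_symm_add] at h2
      have e : (s+j).choose (s+M) = (s+j).choose (j-M) := by
        rw [hsj, Nat.choose_symm_add]
      rw [e] at h2
      rw [h1, ← h2, hsj]
      ring
    have hsign : ((-1:ℤ))^j = (-1)^M * (-1)^(j-M) := by
      rw [← pow_add, show M + (j-M) = j from by omega]
    have keyZ : ((s+j).choose j : ℤ) * (j.choose M)
        = ((s+M).choose M : ℤ) * (((s+M)+(j-M)).choose (j-M)) := by exact_mod_cast key
    rw [hsign]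
    linear_combination ((-1:ℤ)^M*(-1)^(j-M)) * keyZ

lemma key_nat (N M r : ℕ) (hM : M ≤ N) :
    ∑ b ∈ Finset.range (N+1),
      ((N-b).choose M : ℤ) * ((N+r-b).choose (N-b) : ℤ) * ((N+b).choose N : ℤ)
  = ((r+M).choose M : ℤ) * ((2*N+1+r).choose (N-M) : ℤ) := by
  set x : ℤ := -(r:ℤ)-1 with hx
  set y : ℤ := -(N:ℤ)-1 with hy
  rw [← Finset.sum_range_reflect]
  have step1 : ∀ b ∈ Finset.range (N+1),
      ((N-(N+1-1-b)).choose M : ℤ) * ((N+r-(N+1-1-b)).choose (N-(N+1-1-b)) : ℤ)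
        * ((N+(N+1-1-b)).choose N : ℤ)
      = (-1)^N * ((gch x b * (b.choose M : ℤ)) * gch y (N-b)) := by
    intro b hb
    have hbN : b ≤ N := by have := Finset.mem_range.mp hb; omega
    rw [show N-(N+1-1-b) = b from by omega, show N+r-(N+1-1-b) = r+b from by omega,
      show N+(N+1-1-b) = 2*N-b from by omega]
    have e1 : gch x b = (-1)^b * ((r+b).choose b : ℤ) := by
      rw [hx, show -(r:ℤ)-1 = -((r:ℤ)+1) from by ring]
      exact_mod_cast gch_neg r b
    have e2 : gch y (N-b) = (-1)^(N-b) * ((2*N-b).choose N : ℤ) := by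
      rw [hy, show -(N:ℤ)-1 = -((N:ℤ)+1) from by ring]
      have h := gch_neg N (N-b)
      rw [h, show N+(N-b) = 2*N-b from by omega,
        ← Nat.choose_symm (show N ≤ 2*N-b by omega), show 2*N-b-N = N-b from by omega]
    rw [e1, e2]
    have hs1 : ((-1:ℤ))^b * (-1)^(N-b) = (-1)^N := by
      rw [← pow_add, show b+(N-b) = N from by omega]
    have hs2 : ((-1:ℤ))^N * (-1)^N = 1 := by rw [← mul_pow]; norm_num
    linear_combination (-(-1:ℤ)^N * ((r+b).choose b : ℤ) * ((b.choose M : ℤ))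
        * (((2*N-b).choose N : ℤ))) * hs1
      + (-(((r+b).choose b : ℤ) * ((b.choose M : ℤ)) * (((2*N-b).choose N : ℤ)))) * hs2
  rw [Finset.sum_congr rfl step1, ← Finset.mul_sum]
  -- drop the b < M part
  have split : ∑ b ∈ Finset.range (N+1), (gch x b * (b.choose M : ℤ)) * gch y (N-b)
      = ∑ b ∈ Finset.Ico M (N+1), (gch x b * (b.choose M : ℤ)) * gch y (N-b) := by
    rw [Finset.range_eq_Ico,
      ← Finset.sum_Ico_consecutive _ (Nat.zero_le M) (by omega : M ≤ N+1)]
    have hz : ∑ b ∈ Finset.Ico 0 M, (gch x b * (b.choose M : ℤ)) * gch y (N-b) = 0 := by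
      apply Finset.sum_eq_zero
      intro b hb
      have : b < M := (Finset.mem_Ico.mp hb).2
      rw [Nat.choose_eq_zero_of_lt this]
      simp
    rw [hz, zero_add]
  rw [split]
  -- trinomial
  have step2 : ∀ b ∈ Finset.Ico M (N+1),
      (gch x b * (b.choose M : ℤ)) * gch y (N-b)
      = gch x M * (gch (x - (M:ℤ)) (b-M) * gch y (N-b)) := by
    intro b hb
    have hMb : M ≤ b := (Finset.mem_Ico.mp hb).1
    rw [gch_trinom x M b hMb]
    ring
  rw [Finset.sum_congr rfl step2, ← Finset.mul_sum]
  -- reindex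
  rw [show N+1 = M+(N-M+1) from by omega, Finset.sum_Ico_eq_sum_range,
    show M+(N-M+1)-M = N-M+1 from by omega]
  have step3 : ∀ i ∈ Finset.range (N-M+1),
      gch (x - (M:ℤ)) (M+i-M) * gch y (N-(M+i))
      = gch (x - (M:ℤ)) i * gch y ((N-M)-i) := by
    intro i hi
    rw [show M+i-M = i from by omega, show N-(M+i) = (N-M)-i from by omega]
  rw [Finset.sum_congr rfl step3, gch_vandermonde (x - (M:ℤ)) y (N-M)]
  -- evaluate
  have eM : gch x M = (-1)^M * ((r+M).choose M : ℤ) := by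
    rw [hx, show -(r:ℤ)-1 = -((r:ℤ)+1) from by ring]
    exact_mod_cast gch_neg r M
  have eV : gch (x - (M:ℤ) + y) (N-M) = (-1)^(N-M) * ((2*N+1+r).choose (N-M) : ℤ) := by
    rw [hx, hy, show -(r:ℤ)-1 - (M:ℤ) + (-(N:ℤ)-1) = -(((r+M+N+1:ℕ):ℤ)+1) from by push_cast; ring,
      gch_neg, show r+M+N+1+(N-M) = 2*N+1+r from by omega]
  rw [eM, eV]
  have hs1 : ((-1:ℤ))^M * (-1)^(N-M) = (-1)^N := by
    rw [← pow_add, show M+(N-M) = N from by omega]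
  have hs2 : ((-1:ℤ))^N * (-1)^N = 1 := by rw [← mul_pow]; norm_num
  linear_combination ((-1:ℤ)^N * ((r+M).choose M : ℤ) * ((2*N+1+r).choose (N-M) : ℤ)) * hs1
    + ((((r+M).choose M : ℤ) * ((2*N+1+r).choose (N-M) : ℤ))) * hs2

lemma C_eq (a b : ℤ) (ha : 0 ≤ a) (hb : 0 ≤ b) : C a b = (a.toNat.choose b.toNat : ℤ) := by
  unfold C
  split
  · rfl
  · next h =>
    push_neg at h
    have hab : a < b := h hb
    have : a.toNat < b.toNat := by omega
    rw [Nat.choose_eq_zero_of_lt this]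
    norm_num

theorem stmt6 (n m T : ℤ) (hn : 0 ≤ n) (hm : 0 ≤ m) (hT : n + 1 ≤ T) :
    ∑ b ∈ Finset.range (n.toNat + 1),
      C (n - b) m * C (T - 1 - b) (n - b) * C (n + b) n =
    C (T - 1 - n + m) m * C (T + n) (n - m) := by
  by_cases hmn : m ≤ n
  · set N := n.toNat with hN
    set M := m.toNat with hM
    set r := (T-1-n).toNat with hr
    have hnN : (N:ℤ) = n := Int.toNat_of_nonneg hn
    have hmM : (M:ℤ) = m := Int.toNat_of_nonneg hm
    have hrT : (r:ℤ) = T-1-n := Int.toNat_of_nonneg (by omega)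
    have hMN : M ≤ N := by omega
    have hterm : ∀ b ∈ Finset.range (N+1),
        C (n-b) m * C (T-1-b) (n-b) * C (n+b) n
        = ((N-b).choose M : ℤ) * ((N+r-b).choose (N-b) : ℤ) * ((N+b).choose N : ℤ) := by
      intro b hb
      have hbN : b ≤ N := by have := Finset.mem_range.mp hb; omega
      rw [C_eq (n-b) m (by omega) hm, C_eq (T-1-b) (n-b) (by omega) (by omega),
        C_eq (n+b) n (by omega) hn]
      rw [show (n-(b:ℤ)).toNat = N-b from by omega, show m.toNat = M from rfl,
        show (T-1-(b:ℤ)).toNat = N+r-b from by omega,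
        show ((n:ℤ)+(b:ℤ)).toNat = N+b from by omega, show n.toNat = N from rfl]
    rw [Finset.sum_congr rfl hterm, key_nat N M r hMN,
      C_eq (T-1-n+m) m (by omega) hm, C_eq (T+n) (n-m) (by omega) (by omega)]
    rw [show (T-1-n+m).toNat = r+M from by omega, show m.toNat = M from rfl,
      show (T+n).toNat = 2*N+1+r from by omega, show (n-m).toNat = N-M from by omega]
  · have hLHS : ∀ b ∈ Finset.range (n.toNat+1),
        C (n-b) m * C (T-1-b) (n-b) * C (n+b) n = 0 := by
      intro b hb
      have h0 : C (n-b) m = 0 := by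
        unfold C
        rw [if_neg]
        rintro ⟨h1, h2⟩
        have : (0:ℤ) ≤ b := Int.ofNat_nonneg b
        omega
      rw [h0, zero_mul, zero_mul]
    rw [Finset.sum_congr rfl hLHS, Finset.sum_const_zero]
    have h0 : C (T+n) (n-m) = 0 := by
      unfold C
      rw [if_neg]
      rintro ⟨h1, h2⟩
      omega
    rw [h0, mul_zero]
end

section
/- Let T ≥ 1 be an integer, let n be an integer with 0 ≤ n ≤ T−1, and let H_0, H_1, …, H_{T−1} be nonnegative real numbers. Then ( Σ_{s=0}^{T−1} |R_n(s,T)| · H_s )² ≤ (T²/(2n+1)) · Σ_{s=0}^{T−1} H_s²/(2s+1). -/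
open Finset

noncomputable def bb (s j : ℕ) : ℝ := (s.choose j : ℝ) * ((s + j).choose j : ℝ)

noncomputable def cc (T j : ℕ) : ℝ := ((T + j).choose j : ℝ) * ((T - 1).choose j : ℝ)

lemma bb_zero (s : ℕ) : bb s 0 = 1 := by simp [bb]

lemma cc_zero (T : ℕ) : cc T 0 = 1 := by simp [cc]

lemma cc_pos (T j : ℕ) (h : j ≤ T - 1) : 0 < cc T j := by
  have h1 : 0 < (T + j).choose j := Nat.choose_pos (by omega)
  have h2 : 0 < (T - 1).choose j := Nat.choose_pos h
  unfold cc
  exact_mod_cast mul_pos h1 h2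

/-- real cast of `choose_succ_right_eq`, valid for all `n k`. -/
lemma hA (n k : ℕ) : (n.choose (k + 1) : ℝ) * ((k : ℝ) + 1) = (n.choose k : ℝ) * ((n : ℝ) - k) := by
  rcases le_or_gt k n with h | h
  · have hc := congrArg (Nat.cast (R := ℝ)) (Nat.choose_succ_right_eq n k)
    push_cast [Nat.cast_sub h] at hc
    linarith [hc]
  · rw [Nat.choose_eq_zero_of_lt h, Nat.choose_eq_zero_of_lt (by omega)]
    ring

/-- real cast of `choose_mul_succ_eq`. -/
lemma hB (n k : ℕ) : ((n + 1).choose k : ℝ) * ((n : ℝ) + 1 - k) = (n.choose k : ℝ) * ((n : ℝ) + 1) := by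
  rcases le_or_gt k (n + 1) with h | h
  · have hc := congrArg (Nat.cast (R := ℝ)) (Nat.choose_mul_succ_eq n k)
    push_cast [Nat.cast_sub h] at hc
    linarith [hc]
  · rw [Nat.choose_eq_zero_of_lt h, Nat.choose_eq_zero_of_lt (by omega)]
    ring

/-- real cast of `succ_mul_choose_eq`. -/
lemma hC (n k : ℕ) : ((n : ℝ) + 1) * (n.choose k : ℝ) = ((n + 1).choose (k + 1) : ℝ) * ((k : ℝ) + 1) := by
  have hc := congrArg (Nat.cast (R := ℝ)) (Nat.add_one_mul_choose_eq n k)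
  push_cast at hc
  linarith [hc]

lemma bbA (s j : ℕ) :
    bb s (j + 1) * ((j : ℝ) + 1) ^ 2 = ((s : ℝ) + j + 1) * ((s : ℝ) - j) * bb s j := by
  unfold bb
  have h1 := hA s j
  have h2 := hC (s + j) j
  have e : s + (j + 1) = s + j + 1 := by ring
  rw [e]
  push_cast at h1 h2 ⊢
  linear_combination (((s + j + 1).choose (j + 1) : ℝ) * ((j : ℝ) + 1)) * h1 -
    ((s.choose j : ℝ) * ((s : ℝ) - j)) * h2

lemma bbS (s j : ℕ) :
    bb (s + 1) j * ((s : ℝ) + 1 - j) = bb s j * ((s : ℝ) + j + 1) := by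
  unfold bb
  have h1 := hB s j
  have h2 := hB (s + j) j
  have e : s + 1 + j = s + j + 1 := by ring
  rw [e]
  have hs : ((s : ℝ) + 1) ≠ 0 := by positivity
  apply mul_left_cancel₀ hs
  push_cast at h1 h2 ⊢
  linear_combination (((s + j + 1).choose j : ℝ) * ((s:ℝ) + 1)) * h1 +
    ((s.choose j : ℝ) * ((s:ℝ) + 1)) * h2

lemma bbB (s j : ℕ) :
    bb (s + 1) (j + 1) * ((j : ℝ) + 1) ^ 2 = ((s : ℝ) + j + 2) * ((s : ℝ) + j + 1) * bb s j := by
  unfold bb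
  have h1 := hC s j
  have h2 := hC (s + j + 1) j
  have h3 := hB (s + j) j
  have e : s + 1 + (j + 1) = s + j + 1 + 1 := by ring
  rw [e]
  have hs : ((s : ℝ) + 1) ≠ 0 := by positivity
  apply mul_left_cancel₀ hs
  push_cast at h1 h2 h3 ⊢
  linear_combination (-((s : ℝ) + 1) * ((j : ℝ) + 1) * (((s + j + 1 + 1).choose (j + 1) : ℝ))) * h1 -
    (((s : ℝ) + 1) ^ 2 * (s.choose j : ℝ)) * h2 +
    (((s : ℝ) + 1) * ((s : ℝ) + j + 2) * (s.choose j : ℝ)) * h3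

lemma bbC (s j : ℕ) :
    bb s (j + 1) * ((j : ℝ) + 1) ^ 2 = ((s : ℝ) - j) * ((s : ℝ) + 1 - j) * bb (s + 1) j := by
  have h1 := bbA s j
  have h2 := bbS s j
  linear_combination h1 - ((s : ℝ) - j) * h2

lemma ccRec (T j : ℕ) (hT : 1 ≤ T) :
    cc T (j + 1) * ((j : ℝ) + 1) ^ 2 = ((T : ℝ) ^ 2 - ((j : ℝ) + 1) ^ 2) * cc T j := by
  unfold cc
  have h1 := hC (T + j) j
  have h2 := hA (T - 1) j
  have hc : ((T - 1 : ℕ) : ℝ) = (T : ℝ) - 1 := by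
    rw [Nat.cast_sub hT]; norm_num
  rw [hc] at h2
  have e : T + (j + 1) = T + j + 1 := by ring
  rw [e]
  push_cast at h1 h2 ⊢
  linear_combination (-(((T - 1).choose (j + 1) : ℝ)) * ((j : ℝ) + 1)) * h1 +
    (((T : ℝ) + j + 1) * ((T + j).choose j : ℝ)) * h2

lemma key2 (T n j : ℕ) (hT : 1 ≤ T) :
    bb n (j + 1) * ((T : ℝ) ^ 2 - ((j : ℝ) + 1) ^ 2) * cc T j =
      ((n : ℝ) - j) * ((n : ℝ) + j + 1) * bb n j * cc T (j + 1) := by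
  have h1 := bbA n j
  have h2 := ccRec T j hT
  have hj : (((j : ℝ) + 1) ^ 2) ≠ 0 := by positivity
  apply mul_right_cancel₀ hj
  linear_combination (((T : ℝ) ^ 2 - ((j : ℝ) + 1) ^ 2) * cc T j) * h1 -
    (((n : ℝ) - j) * ((n : ℝ) + j + 1) * bb n j) * h2

noncomputable def Pp (T s : ℕ) : ℝ := ((s : ℝ) + 1) * ((T : ℝ) ^ 2 - ((s : ℝ) + 1) ^ 2)
noncomputable def Qq (T s : ℕ) : ℝ := (s : ℝ) * ((T : ℝ) ^ 2 - (s : ℝ) ^ 2)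

lemma Eb (T s j : ℕ) :
    Pp T s * bb (s + 1) (j + 1) + Qq T s * bb (s - 1) (j + 1) -
      (Pp T s + Qq T s) * bb s (j + 1) =
    -2 * (2 * (s : ℝ) + 1) *
      (((j : ℝ) + 1) * ((j : ℝ) + 2) * bb s (j + 1) - ((T : ℝ) ^ 2 - ((j : ℝ) + 1) ^ 2) * bb s j) := by
  have hj : (((j : ℝ) + 1) ^ 2) ≠ 0 := by positivity
  cases s with
  | zero =>
    have h1 := bbA 0 j
    have h2 := bbB 0 j
    simp only [Pp, Qq, Nat.zero_sub, Nat.cast_zero, Nat.zero_add, zero_add] at *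
    apply mul_right_cancel₀ hj
    linear_combination ((T : ℝ) ^ 2 - 1) * h2 +
      (2 * ((j : ℝ) + 1) * ((j : ℝ) + 2) - ((T : ℝ) ^ 2 - 1)) * h1
  | succ s =>
    have h1 := bbA (s + 1) j
    have h2 := bbB (s + 1) j
    have h3 := bbC s j
    simp only [Pp, Qq, Nat.add_sub_cancel] at *
    apply mul_right_cancel₀ hj
    push_cast at h1 h2 h3 ⊢
    linear_combination (((s : ℝ) + 2) * ((T : ℝ) ^ 2 - ((s : ℝ) + 2) ^ 2)) * h2 +
      (((s : ℝ) + 1) * ((T : ℝ) ^ 2 - ((s : ℝ) + 1) ^ 2)) * h3 +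
      (2 * (2 * (s : ℝ) + 3) * ((j : ℝ) + 1) * ((j : ℝ) + 2) -
        (((s : ℝ) + 2) * ((T : ℝ) ^ 2 - ((s : ℝ) + 2) ^ 2) +
          ((s : ℝ) + 1) * ((T : ℝ) ^ 2 - ((s : ℝ) + 1) ^ 2))) * h1

noncomputable def Rx (n s T : ℕ) : ℝ :=
  ∑ j ∈ Finset.range (n + 1), (-1 : ℝ) ^ j * bb n j * bb s j / cc T j

lemma ERx (T n : ℕ) (hT : 1 ≤ T) (hn : n ≤ T - 1) (s : ℕ) :
    Pp T s * Rx n (s + 1) T + Qq T s * Rx n (s - 1) T - (Pp T s + Qq T s) * Rx n s T =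
      -2 * (2 * (s : ℝ) + 1) * ((n : ℝ) * ((n : ℝ) + 1)) * Rx n s T := by
  have hcc : ∀ j, j ≤ T - 1 → cc T j ≠ 0 := fun j hj => ne_of_gt (cc_pos T j hj)
  have key2d : ∀ j, j + 1 ≤ T - 1 →
      bb n (j + 1) * ((T : ℝ) ^ 2 - ((j : ℝ) + 1) ^ 2) / cc T (j + 1) =
        ((n : ℝ) - j) * ((n : ℝ) + j + 1) * bb n j / cc T j := by
    intro j hj
    rw [div_eq_div_iff (hcc _ hj) (hcc _ (by omega))]
    linear_combination key2 T n j hT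
  have hL : Pp T s * Rx n (s + 1) T + Qq T s * Rx n (s - 1) T - (Pp T s + Qq T s) * Rx n s T =
      ∑ j ∈ Finset.range (n + 1), ((-1 : ℝ) ^ j * bb n j / cc T j) *
        (Pp T s * bb (s + 1) j + Qq T s * bb (s - 1) j - (Pp T s + Qq T s) * bb s j) := by
    unfold Rx
    rw [Finset.mul_sum, Finset.mul_sum, Finset.mul_sum, ← Finset.sum_add_distrib,
      ← Finset.sum_sub_distrib]
    exact Finset.sum_congr rfl fun j _ => by ring
  have hR : -2 * (2 * (s : ℝ) + 1) * ((n : ℝ) * ((n : ℝ) + 1)) * Rx n s T =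
      ∑ j ∈ Finset.range (n + 1), (-2 * (2 * (s : ℝ) + 1) * ((n : ℝ) * ((n : ℝ) + 1))) *
        (((-1 : ℝ) ^ j * bb n j / cc T j) * bb s j) := by
    unfold Rx
    rw [Finset.mul_sum]
    exact Finset.sum_congr rfl fun j _ => by ring
  rw [hL, hR]
  have hPhi0 : (-2 * (2 * (s : ℝ) + 1)) * (((0 : ℕ) : ℝ) * (((0 : ℕ) : ℝ) + 1)) *
      (((-1 : ℝ) ^ (0 : ℕ) * bb n 0 / cc T 0) * bb s 0) = 0 := by
    norm_num
  calc
    ∑ j ∈ Finset.range (n + 1), ((-1 : ℝ) ^ j * bb n j / cc T j) *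
        (Pp T s * bb (s + 1) j + Qq T s * bb (s - 1) j - (Pp T s + Qq T s) * bb s j)
      = (∑ j ∈ Finset.range n, ((-1 : ℝ) ^ (j + 1) * bb n (j + 1) / cc T (j + 1)) *
          (Pp T s * bb (s + 1) (j + 1) + Qq T s * bb (s - 1) (j + 1) -
            (Pp T s + Qq T s) * bb s (j + 1))) +
        ((-1 : ℝ) ^ (0 : ℕ) * bb n 0 / cc T 0) *
          (Pp T s * bb (s + 1) 0 + Qq T s * bb (s - 1) 0 - (Pp T s + Qq T s) * bb s 0) :=
      Finset.sum_range_succ' _ n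
    _ = ∑ j ∈ Finset.range n,
          ((-2 * (2 * (s : ℝ) + 1)) * (((j + 1 : ℕ) : ℝ) * (((j + 1 : ℕ) : ℝ) + 1)) *
            (((-1 : ℝ) ^ (j + 1) * bb n (j + 1) / cc T (j + 1)) * bb s (j + 1)) +
           (-2 * (2 * (s : ℝ) + 1)) * (((n : ℝ) - j) * ((n : ℝ) + j + 1)) *
            (((-1 : ℝ) ^ j * bb n j / cc T j) * bb s j)) := by
        simp only [bb_zero]
        rw [show (-1 : ℝ) ^ (0 : ℕ) * 1 / cc T 0 *
            (Pp T s * 1 + Qq T s * 1 - (Pp T s + Qq T s) * 1) = 0 from by ring, add_zero]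
        refine Finset.sum_congr rfl fun j hj => ?_
        have hjn : j + 1 ≤ T - 1 := le_trans (Finset.mem_range.1 hj) hn
        rw [Eb T s j]
        have e1 := key2d j hjn
        push_cast
        linear_combination (-(2 : ℝ) * (-1 : ℝ) ^ j * (2 * (s : ℝ) + 1) * bb s j) * e1
    _ = (∑ j ∈ Finset.range n,
          (-2 * (2 * (s : ℝ) + 1)) * (((j + 1 : ℕ) : ℝ) * (((j + 1 : ℕ) : ℝ) + 1)) *
            (((-1 : ℝ) ^ (j + 1) * bb n (j + 1) / cc T (j + 1)) * bb s (j + 1))) +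
        ∑ j ∈ Finset.range n,
          (-2 * (2 * (s : ℝ) + 1)) * (((n : ℝ) - j) * ((n : ℝ) + j + 1)) *
            (((-1 : ℝ) ^ j * bb n j / cc T j) * bb s j) := Finset.sum_add_distrib
    _ = (∑ j ∈ Finset.range (n + 1),
          (-2 * (2 * (s : ℝ) + 1)) * ((j : ℝ) * ((j : ℝ) + 1)) *
            (((-1 : ℝ) ^ j * bb n j / cc T j) * bb s j)) +
        ∑ j ∈ Finset.range (n + 1),
          (-2 * (2 * (s : ℝ) + 1)) * (((n : ℝ) - j) * ((n : ℝ) + j + 1)) *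
            (((-1 : ℝ) ^ j * bb n j / cc T j) * bb s j) := by
        rw [Finset.sum_range_succ' (fun j => (-2 * (2 * (s : ℝ) + 1)) * ((j : ℝ) * ((j : ℝ) + 1)) *
            (((-1 : ℝ) ^ j * bb n j / cc T j) * bb s j)) n,
          Finset.sum_range_succ (fun j => (-2 * (2 * (s : ℝ) + 1)) *
            (((n : ℝ) - j) * ((n : ℝ) + j + 1)) *
            (((-1 : ℝ) ^ j * bb n j / cc T j) * bb s j)) n]
        rw [hPhi0, add_zero]
        have hzn : (-2 * (2 * (s : ℝ) + 1)) * (((n : ℝ) - (n : ℝ)) * ((n : ℝ) + n + 1)) *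
            (((-1 : ℝ) ^ n * bb n n / cc T n) * bb s n) = 0 := by ring
        rw [hzn, add_zero]
    _ = ∑ j ∈ Finset.range (n + 1), (-2 * (2 * (s : ℝ) + 1) * ((n : ℝ) * ((n : ℝ) + 1))) *
        (((-1 : ℝ) ^ j * bb n j / cc T j) * bb s j) := by
        rw [← Finset.sum_add_distrib]
        exact Finset.sum_congr rfl fun j _ => by ring

lemma bb_eq_zero (s j : ℕ) (h : s < j) : bb s j = 0 := by
  simp [bb, Nat.choose_eq_zero_of_lt h]

lemma Rx_ext (n s T m : ℕ) (h : n ≤ m) :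
    Rx n s T = ∑ j ∈ Finset.range (m + 1), (-1 : ℝ) ^ j * bb n j * bb s j / cc T j := by
  unfold Rx
  refine Finset.sum_subset (by intro x hx; simp at hx ⊢; omega) ?_
  intro j hj hjn
  simp only [Finset.mem_range] at hj hjn
  rw [bb_eq_zero n j (by omega)]
  ring

lemma Rx_symm (n s T : ℕ) : Rx n s T = Rx s n T := by
  rw [Rx_ext n s T (n + s) (by omega), Rx_ext s n T (n + s) (by omega)]
  exact Finset.sum_congr rfl fun j _ => by ring

lemma PQ_succ (T s : ℕ) : Qq T (s + 1) = Pp T s := by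
  simp only [Pp, Qq]
  push_cast
  ring

lemma sbp (T : ℕ) (hT : 1 ≤ T) (f g : ℕ → ℝ) :
    ∑ s ∈ Finset.range T,
      (g s * (Pp T s * f (s + 1) + Qq T s * f (s - 1) - (Pp T s + Qq T s) * f s) -
       f s * (Pp T s * g (s + 1) + Qq T s * g (s - 1) - (Pp T s + Qq T s) * g s)) = 0 := by
  set W : ℕ → ℝ := fun s => Pp T s * (g s * f (s + 1) - f s * g (s + 1)) with hW
  have main : ∀ M : ℕ, ∑ s ∈ Finset.range (M + 1),
      (g s * (Pp T s * f (s + 1) + Qq T s * f (s - 1) - (Pp T s + Qq T s) * f s) -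
       f s * (Pp T s * g (s + 1) + Qq T s * g (s - 1) - (Pp T s + Qq T s) * g s)) = W M := by
    intro M
    induction M with
    | zero =>
      rw [Finset.sum_range_one]
      simp only [hW, Nat.zero_sub]
      ring
    | succ M ih =>
      rw [Finset.sum_range_succ, ih]
      simp only [hW, Nat.add_sub_cancel, PQ_succ T M]
      ring
  obtain ⟨M, rfl⟩ : ∃ M, T = M + 1 := ⟨T - 1, by omega⟩
  rw [main M]
  have : Pp (M + 1) M = 0 := by
    simp only [Pp]
    push_cast
    ring
  simp [hW, this]

lemma ortho (T n m : ℕ) (hT : 1 ≤ T) (hn : n ≤ T - 1) (hm : m ≤ T - 1) (hnm : n ≠ m) :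
    ∑ s ∈ Finset.range T, (2 * (s : ℝ) + 1) * (Rx n s T * Rx m s T) = 0 := by
  have h := sbp T hT (fun s => Rx n s T) (fun s => Rx m s T)
  have h2 : ∑ s ∈ Finset.range T,
      (-2 * (2 * (s : ℝ) + 1) * ((n : ℝ) * ((n : ℝ) + 1) - (m : ℝ) * ((m : ℝ) + 1))) *
        (Rx n s T * Rx m s T) = 0 := by
    rw [← h]
    refine Finset.sum_congr rfl fun s _ => ?_
    have e1 := ERx T n hT hn s
    have e2 := ERx T m hT hm s
    rw [e1, e2]
    ring
  rw [show (∑ s ∈ Finset.range T,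
      (-2 * (2 * (s : ℝ) + 1) * ((n : ℝ) * ((n : ℝ) + 1) - (m : ℝ) * ((m : ℝ) + 1))) *
        (Rx n s T * Rx m s T)) =
      (-2 * ((n : ℝ) * ((n : ℝ) + 1) - (m : ℝ) * ((m : ℝ) + 1))) *
        ∑ s ∈ Finset.range T, (2 * (s : ℝ) + 1) * (Rx n s T * Rx m s T) from by
    rw [Finset.mul_sum]; exact Finset.sum_congr rfl fun s _ => by ring] at h2
  have hne : (-2 : ℝ) * ((n : ℝ) * ((n : ℝ) + 1) - (m : ℝ) * ((m : ℝ) + 1)) ≠ 0 := by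
    have : (n : ℝ) * ((n : ℝ) + 1) ≠ (m : ℝ) * ((m : ℝ) + 1) := by
      rcases Nat.lt_or_ge n m with hlt | hge
      · have h1 : (n : ℝ) < m := by exact_mod_cast hlt
        have h0 : (0 : ℝ) ≤ (n : ℝ) := Nat.cast_nonneg n
        nlinarith
      · have hlt : m < n := by omega
        have h1 : (m : ℝ) < n := by exact_mod_cast hlt
        have h0 : (0 : ℝ) ≤ (m : ℝ) := Nat.cast_nonneg m
        nlinarith
    intro hcontra
    apply this
    have := mul_eq_zero.1 hcontra
    rcases this with h' | h'
    · norm_num at h'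
    · linarith [sub_eq_zero.1 h']
  exact (mul_eq_zero.1 h2).resolve_left hne

lemma drec (T m s : ℕ) (hT : 1 ≤ T) (hs : s ≤ T - 1) :
    Pp T m * Rx (m + 1) s T + Qq T m * Rx (m - 1) s T - (Pp T m + Qq T m) * Rx m s T =
      -2 * (2 * (m : ℝ) + 1) * ((s : ℝ) * ((s : ℝ) + 1)) * Rx m s T := by
  rw [Rx_symm (m + 1) s T, Rx_symm (m - 1) s T, Rx_symm m s T]
  exact ERx T s hT hs m

lemma norm_step (T n : ℕ) (hT : 1 ≤ T) (h : n + 1 ≤ T - 1) :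
    (2 * (n : ℝ) + 3) * ∑ s ∈ Finset.range T, (2 * (s : ℝ) + 1) * (Rx (n + 1) s T) ^ 2 =
      (2 * (n : ℝ) + 1) * ∑ s ∈ Finset.range T, (2 * (s : ℝ) + 1) * (Rx n s T) ^ 2 := by
  have hmem : ∀ s ∈ Finset.range T, s ≤ T - 1 := by intro s hs; simp at hs; omega
  set G : ℝ := ∑ s ∈ Finset.range T,
    (2 * (s : ℝ) + 1) * ((s : ℝ) * ((s : ℝ) + 1)) * (Rx n s T * Rx (n + 1) s T) with hG
  -- eq1
  have O1 : ∑ s ∈ Finset.range T, (2 * (s : ℝ) + 1) * (Rx (n - 1) s T * Rx (n + 1) s T) = 0 :=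
    ortho T (n - 1) (n + 1) hT (by omega) h (by omega)
  have O2 : ∑ s ∈ Finset.range T, (2 * (s : ℝ) + 1) * (Rx n s T * Rx (n + 1) s T) = 0 :=
    ortho T n (n + 1) hT (by omega) h (by omega)
  have eq1 : Pp T n * ∑ s ∈ Finset.range T, (2 * (s : ℝ) + 1) * (Rx (n + 1) s T) ^ 2 =
      -2 * (2 * (n : ℝ) + 1) * G := by
    have base : ∑ s ∈ Finset.range T, (2 * (s : ℝ) + 1) * Rx (n + 1) s T *
        (Pp T n * Rx (n + 1) s T + Qq T n * Rx (n - 1) s T - (Pp T n + Qq T n) * Rx n s T) =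
        ∑ s ∈ Finset.range T, (2 * (s : ℝ) + 1) * Rx (n + 1) s T *
          (-2 * (2 * (n : ℝ) + 1) * ((s : ℝ) * ((s : ℝ) + 1)) * Rx n s T) :=
      Finset.sum_congr rfl fun s hs => by rw [drec T n s hT (hmem s hs)]
    have lhs_split : ∑ s ∈ Finset.range T, (2 * (s : ℝ) + 1) * Rx (n + 1) s T *
        (Pp T n * Rx (n + 1) s T + Qq T n * Rx (n - 1) s T - (Pp T n + Qq T n) * Rx n s T) =
        Pp T n * (∑ s ∈ Finset.range T, (2 * (s : ℝ) + 1) * (Rx (n + 1) s T) ^ 2) +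
          Qq T n * (∑ s ∈ Finset.range T, (2 * (s : ℝ) + 1) * (Rx (n - 1) s T * Rx (n + 1) s T)) -
          (Pp T n + Qq T n) *
            (∑ s ∈ Finset.range T, (2 * (s : ℝ) + 1) * (Rx n s T * Rx (n + 1) s T)) := by
      rw [Finset.mul_sum, Finset.mul_sum, Finset.mul_sum, ← Finset.sum_add_distrib,
        ← Finset.sum_sub_distrib]
      exact Finset.sum_congr rfl fun s _ => by ring
    have rhs_split : ∑ s ∈ Finset.range T, (2 * (s : ℝ) + 1) * Rx (n + 1) s T *
        (-2 * (2 * (n : ℝ) + 1) * ((s : ℝ) * ((s : ℝ) + 1)) * Rx n s T) =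
        -2 * (2 * (n : ℝ) + 1) * G := by
      rw [hG, Finset.mul_sum]
      exact Finset.sum_congr rfl fun s _ => by ring
    rw [lhs_split, rhs_split, O1, O2] at base
    linarith [base]
  -- eq2
  have O3 : ∑ s ∈ Finset.range T, (2 * (s : ℝ) + 1) * (Rx (n + 1) s T * Rx n s T) = 0 :=
    ortho T (n + 1) n hT h (by omega) (by omega)
  have hz : Pp T (n + 1) *
      (∑ s ∈ Finset.range T, (2 * (s : ℝ) + 1) * (Rx (n + 2) s T * Rx n s T)) = 0 := by
    by_cases hc : n + 2 ≤ T - 1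
    · rw [ortho T (n + 2) n hT hc (by omega) (by omega), mul_zero]
    · have hT2 : n + 2 = T := by omega
      have : ((n : ℝ) + 2) = (T : ℝ) := by exact_mod_cast congrArg (Nat.cast (R := ℝ)) hT2
      have hp : Pp T (n + 1) = 0 := by
        simp only [Pp]
        push_cast
        linear_combination (-((n : ℝ) + 2) * ((T : ℝ) + (n : ℝ) + 2)) * this
      rw [hp, zero_mul]
  have eq2 : Pp T n * ∑ s ∈ Finset.range T, (2 * (s : ℝ) + 1) * (Rx n s T) ^ 2 =
      -2 * (2 * (n : ℝ) + 3) * G := by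
    have base : ∑ s ∈ Finset.range T, (2 * (s : ℝ) + 1) * Rx n s T *
        (Pp T (n + 1) * Rx (n + 2) s T + Qq T (n + 1) * Rx n s T -
          (Pp T (n + 1) + Qq T (n + 1)) * Rx (n + 1) s T) =
        ∑ s ∈ Finset.range T, (2 * (s : ℝ) + 1) * Rx n s T *
          (-2 * (2 * ((n : ℕ) + 1 : ℕ) + 1 : ℝ) * ((s : ℝ) * ((s : ℝ) + 1)) * Rx (n + 1) s T) := by
      refine Finset.sum_congr rfl fun s hs => ?_
      have hd := drec T (n + 1) s hT (hmem s hs)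
      have e : n + 1 + 1 = n + 2 := by omega
      rw [e, Nat.add_sub_cancel] at hd
      rw [hd]
    have lhs_split : ∑ s ∈ Finset.range T, (2 * (s : ℝ) + 1) * Rx n s T *
        (Pp T (n + 1) * Rx (n + 2) s T + Qq T (n + 1) * Rx n s T -
          (Pp T (n + 1) + Qq T (n + 1)) * Rx (n + 1) s T) =
        Pp T (n + 1) * (∑ s ∈ Finset.range T, (2 * (s : ℝ) + 1) * (Rx (n + 2) s T * Rx n s T)) +
          Qq T (n + 1) * (∑ s ∈ Finset.range T, (2 * (s : ℝ) + 1) * (Rx n s T) ^ 2) -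
          (Pp T (n + 1) + Qq T (n + 1)) *
            (∑ s ∈ Finset.range T, (2 * (s : ℝ) + 1) * (Rx (n + 1) s T * Rx n s T)) := by
      rw [Finset.mul_sum, Finset.mul_sum, Finset.mul_sum, ← Finset.sum_add_distrib,
        ← Finset.sum_sub_distrib]
      exact Finset.sum_congr rfl fun s _ => by ring
    have rhs_split : ∑ s ∈ Finset.range T, (2 * (s : ℝ) + 1) * Rx n s T *
        (-2 * (2 * ((n : ℕ) + 1 : ℕ) + 1 : ℝ) * ((s : ℝ) * ((s : ℝ) + 1)) * Rx (n + 1) s T) =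
        -2 * (2 * (n : ℝ) + 3) * G := by
      rw [hG, Finset.mul_sum]
      refine Finset.sum_congr rfl fun s _ => ?_
      push_cast
      ring
    rw [lhs_split, rhs_split, O3, PQ_succ T n] at base
    rw [hz] at base
    linarith [base]
  have hPp : Pp T n ≠ 0 := by
    have h1 : ((n : ℝ) + 1) < (T : ℝ) := by exact_mod_cast (show n + 1 < T by omega)
    have h0 : (0 : ℝ) ≤ ((n : ℝ) + 1) := by positivity
    have h2 : (0 : ℝ) < (T : ℝ) ^ 2 - ((n : ℝ) + 1) ^ 2 := by nlinarith
    have h3 : (0 : ℝ) < ((n : ℝ) + 1) * ((T : ℝ) ^ 2 - ((n : ℝ) + 1) ^ 2) := by positivity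
    simp only [Pp]
    exact ne_of_gt h3
  apply mul_left_cancel₀ hPp
  linear_combination (2 * (n : ℝ) + 3) * eq1 - (2 * (n : ℝ) + 1) * eq2

lemma sum_odd (M : ℕ) : ∑ s ∈ Finset.range M, (2 * (s : ℝ) + 1) = (M : ℝ) ^ 2 := by
  induction M with
  | zero => simp
  | succ M ih =>
    rw [Finset.sum_range_succ, ih]
    push_cast
    ring

lemma h_zero (T : ℕ) : ∑ s ∈ Finset.range T, (2 * (s : ℝ) + 1) * (Rx 0 s T) ^ 2 = (T : ℝ) ^ 2 := by
  have hR0 : ∀ s, Rx 0 s T = 1 := by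
    intro s
    unfold Rx
    rw [Finset.sum_range_one]
    simp [bb_zero, cc_zero]
  rw [← sum_odd T]
  exact Finset.sum_congr rfl fun s _ => by rw [hR0 s]; ring

lemma norm_Rx (T n : ℕ) (hT : 1 ≤ T) (hn : n ≤ T - 1) :
    (2 * (n : ℝ) + 1) * ∑ s ∈ Finset.range T, (2 * (s : ℝ) + 1) * (Rx n s T) ^ 2 = (T : ℝ) ^ 2 := by
  induction n with
  | zero => simpa using h_zero T
  | succ n ih =>
    have h1 := norm_step T n hT hn
    have h2 := ih (by omega)
    push_cast
    linear_combination h1 + h2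

/-- The Racah polynomial value `R_n(s,T) = ₄F₃(-n, n+1, -s, s+1; 1, 1+T, 1-T; 1)`,
i.e. the Racah polynomial `R_n(s(s+1); 0, 0, T, -T)`. -/
noncomputable def R (n s T : ℕ) : ℝ :=
  ∑ j ∈ Finset.range (min n s + 1),
    (-1 : ℝ) ^ j *
      ((n.choose j * s.choose j * (n + j).choose j * (s + j).choose j : ℕ) : ℝ) /
      (((T + j).choose j * (T - 1).choose j : ℕ) : ℝ)

lemma R_eq (n s T : ℕ) : R n s T = Rx n s T := by
  unfold R Rx
  rw [Finset.sum_subset (show Finset.range (min n s + 1) ⊆ Finset.range (n + 1) from by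
    intro x hx; simp at hx ⊢; omega)]
  · exact Finset.sum_congr rfl fun j _ => by unfold bb cc; push_cast; ring
  · intro j hj hjn
    simp only [Finset.mem_range] at hj hjn
    have hs : s < j := by omega
    rw [Nat.choose_eq_zero_of_lt hs]
    push_cast
    ring

theorem stmt9 (T n : ℕ) (hT : 1 ≤ T) (hn : n ≤ T - 1) (H : ℕ → ℝ)
    (hH : ∀ s, s ≤ T - 1 → 0 ≤ H s) :
    (∑ s ∈ Finset.range T, |R n s T| * H s) ^ 2 ≤
      ((T : ℝ) ^ 2 / (2 * (n : ℝ) + 1)) * ∑ s ∈ Finset.range T, (H s) ^ 2 / (2 * (s : ℝ) + 1) := by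
  have hnorm : ∑ s ∈ Finset.range T, (2 * (s : ℝ) + 1) * (R n s T) ^ 2 =
      (T : ℝ) ^ 2 / (2 * (n : ℝ) + 1) := by
    have h := norm_Rx T n hT hn
    have h2 : ∑ s ∈ Finset.range T, (2 * (s : ℝ) + 1) * (R n s T) ^ 2 =
        ∑ s ∈ Finset.range T, (2 * (s : ℝ) + 1) * (Rx n s T) ^ 2 :=
      Finset.sum_congr rfl fun s _ => by rw [R_eq]
    rw [h2, eq_div_iff (by positivity : (2 * (n : ℝ) + 1) ≠ 0)]
    linarith [h]
  have key := Finset.sum_sq_le_sum_mul_sum_of_sq_eq_mul (Finset.range T)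
    (r := fun s => |R n s T| * H s)
    (f := fun s => (2 * (s : ℝ) + 1) * (R n s T) ^ 2)
    (g := fun s => (H s) ^ 2 / (2 * (s : ℝ) + 1))
    (fun s _ => by positivity)
    (fun s _ => by positivity)
    (fun s _ => by
      have hs : (2 * (s : ℝ) + 1) ≠ 0 := by positivity
      field_simp
      rw [sq_abs]
      ring)
  calc (∑ s ∈ Finset.range T, |R n s T| * H s) ^ 2
      ≤ (∑ s ∈ Finset.range T, (2 * (s : ℝ) + 1) * (R n s T) ^ 2) *
        ∑ s ∈ Finset.range T, (H s) ^ 2 / (2 * (s : ℝ) + 1) := key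
    _ = ((T : ℝ) ^ 2 / (2 * (n : ℝ) + 1)) * ∑ s ∈ Finset.range T, (H s) ^ 2 / (2 * (s : ℝ) + 1) := by
        rw [hnorm]
end

section
/- Let n, s, T be integers with 0 ≤ n ≤ T−1 and 0 ≤ s ≤ T−1, and suppose that n ≤ 3 or n = T−1. Then |R_n(s,T)| ≤ 1. -/
set_option maxHeartbeats 1000000
open Finset

lemma R_symm (n s T : ℕ) : R n s T = R s n T := by
  unfold R
  rw [min_comm]
  refine Finset.sum_congr rfl fun j _ => ?_
  rw [show n.choose j * s.choose j * (n+j).choose j * (s+j).choose j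
      = s.choose j * n.choose j * (s+j).choose j * (n+j).choose j by ring]

lemma cast_choose_three (a : ℕ) : ((a.choose 3) : ℝ) = a*(a-1)*(a-2)/6 := by
  induction a with
  | zero => norm_num
  | succ b ih =>
    rw [show b+1 = b+1 from rfl, Nat.choose_succ_succ b 2]
    push_cast [Nat.cast_choose_two, ih]
    ring

lemma frac_abs_le {NUM DEN : ℝ} (hD : 0 < DEN) (h1 : -DEN ≤ NUM) (h2 : NUM ≤ DEN) :
    |NUM/DEN| ≤ 1 := by
  rw [abs_div, abs_of_pos hD, div_le_one hD]
  exact abs_le.2 ⟨h1, h2⟩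

lemma n3low (u A : ℝ) (hu : 0 ≤ u) (hA : 5 ≤ A) :
    0 ≤ 20*u^3 + u^2*(-30*A^2+60*A-110) + u*(12*A^4-60*A^3+184*A^2-220*A+132)
      + 12*A^5-72*A^4+144*A^3-144*A^2+132*A-72 := by
  nlinarith [mul_nonneg hu (sq_nonneg (u - (30*A^2-60*A+110)/40)), sq_nonneg (u - 3*A^2/4),
    mul_nonneg (sub_nonneg.2 hA) (sq_nonneg (u - 3*A^2/4)), mul_nonneg (sub_nonneg.2 hA) (sq_nonneg u),
    mul_nonneg hu hu, sq_nonneg (u - A^2), mul_nonneg (sub_nonneg.2 hA) (sq_nonneg (u - A^2))]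

lemma smallcase (n s T : ℕ) (h3 : n ≤ 3) (hT : n + 2 ≤ T) (hsT : s ≤ T - 1) (hns : n ≤ s) :
    |R n s T| ≤ 1 := by
  have hT1 : (1:ℕ) ≤ T := by omega
  have hSA : (s:ℝ) + 1 ≤ (T:ℝ) := by
    have : s + 1 ≤ T := by omega
    exact_mod_cast this
  have hS0 : (0:ℝ) ≤ (s:ℝ) := Nat.cast_nonneg s
  interval_cases n
  · -- n = 0
    have hmin : min 0 s = 0 := by omega
    simp [R, hmin]
  · -- n = 1
    have hmin : min 1 s = 1 := by omega
    have hA : (3:ℝ) ≤ (T:ℝ) := by exact_mod_cast hT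
    have e1 : (0:ℝ) < (T:ℝ) - 1 := by linarith
    have e2 : (0:ℝ) < (T:ℝ) + 1 := by linarith
    have hn1 : ((Nat.choose 1 1 * s.choose 1 * Nat.choose 2 1 * (s+1).choose 1 : ℕ) : ℝ)
        = 2*((s:ℝ)*((s:ℝ)+1)) := by
      push_cast [Nat.choose_one_right]; norm_num; ring
    have hd1 : (((T+1).choose 1 * (T-1).choose 1 : ℕ) : ℝ) = ((T:ℝ)+1)*((T:ℝ)-1) := by
      push_cast [Nat.choose_one_right, Nat.cast_sub hT1]; ring
    have hR : R 1 s T = (((T:ℝ)+1)*((T:ℝ)-1) - 2*((s:ℝ)*((s:ℝ)+1))) / (((T:ℝ)+1)*((T:ℝ)-1)) := by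
      simp only [R, hmin]
      rw [Finset.sum_range_succ, Finset.sum_range_one, hn1, hd1]
      norm_num
      field_simp
      ring
    rw [hR]
    set A := (T:ℝ); set S := (s:ℝ)
    have hD : (0:ℝ) < (A+1)*(A-1) := mul_pos e2 e1
    refine frac_abs_le hD ?_ ?_
    · nlinarith [mul_nonneg (by linarith : (0:ℝ) ≤ A - S - 1) (by linarith : (0:ℝ) ≤ A + S + 1)]
    · nlinarith [mul_nonneg hS0 (by linarith : (0:ℝ) ≤ S+1)]
  · -- n = 2
    have hmin : min 2 s = 2 := by omega
    have hA : (4:ℝ) ≤ (T:ℝ) := by exact_mod_cast hT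
    have e1 : (0:ℝ) < (T:ℝ) - 1 := by linarith
    have e2 : (0:ℝ) < (T:ℝ) + 1 := by linarith
    have e3 : (0:ℝ) < (T:ℝ) - 2 := by linarith
    have e4 : (0:ℝ) < (T:ℝ) + 2 := by linarith
    have hn1 : ((Nat.choose 2 1 * s.choose 1 * Nat.choose 3 1 * (s+1).choose 1 : ℕ) : ℝ)
        = 6*((s:ℝ)*((s:ℝ)+1)) := by
      push_cast [Nat.choose_one_right]; ring
    have hd1 : (((T+1).choose 1 * (T-1).choose 1 : ℕ) : ℝ) = ((T:ℝ)+1)*((T:ℝ)-1) := by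
      push_cast [Nat.choose_one_right, Nat.cast_sub hT1]; ring
    have hn2 : ((Nat.choose 2 2 * s.choose 2 * Nat.choose 4 2 * (s+2).choose 2 : ℕ) : ℝ)
        = 6*((s:ℝ)*((s:ℝ)+1))*((s:ℝ)*((s:ℝ)+1)-2)/4 := by
      push_cast [Nat.cast_choose_two]; norm_num; ring
    have hd2 : (((T+2).choose 2 * (T-1).choose 2 : ℕ) : ℝ)
        = ((T:ℝ)+1)*((T:ℝ)-1)*(((T:ℝ)+2)*((T:ℝ)-2))/4 := by
      push_cast [Nat.cast_choose_two, Nat.cast_sub hT1]; ring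
    have hR : R 2 s T = ((((T:ℝ)+1)*((T:ℝ)-1)*(((T:ℝ)+2)*((T:ℝ)-2)) - 6*((s:ℝ)*((s:ℝ)+1))*(((T:ℝ)+2)*((T:ℝ)-2))
        + 6*((s:ℝ)*((s:ℝ)+1))*((s:ℝ)*((s:ℝ)+1)-2))) / (((T:ℝ)+1)*((T:ℝ)-1)*(((T:ℝ)+2)*((T:ℝ)-2))) := by
      simp only [R, hmin]
      rw [Finset.sum_range_succ, Finset.sum_range_succ, Finset.sum_range_one, hn1, hd1, hn2, hd2]
      norm_num
      field_simp
      ring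
    rw [hR]
    set A := (T:ℝ); set S := (s:ℝ)
    have hD : (0:ℝ) < (A+1)*(A-1)*((A+2)*(A-2)) := mul_pos (mul_pos e2 e1) (mul_pos e4 e3)
    have hA2 : (16:ℝ) ≤ A^2 := by nlinarith
    refine frac_abs_le hD ?_ ?_
    · nlinarith [sq_nonneg (6*(S*(S+1)) - 3*A^2 + 6), hA2, sq_nonneg (A^2-16)]
    · nlinarith [mul_nonneg (mul_nonneg hS0 (by linarith : (0:ℝ) ≤ S+1)) (by nlinarith : (0:ℝ) ≤ A^2 - 2 - S*(S+1))]
  · -- n = 3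
    have hmin : min 3 s = 3 := by omega
    have hA : (5:ℝ) ≤ (T:ℝ) := by exact_mod_cast hT
    have e1 : (0:ℝ) < (T:ℝ) - 1 := by linarith
    have e2 : (0:ℝ) < (T:ℝ) + 1 := by linarith
    have e3 : (0:ℝ) < (T:ℝ) - 2 := by linarith
    have e4 : (0:ℝ) < (T:ℝ) + 2 := by linarith
    have e5 : (0:ℝ) < (T:ℝ) - 3 := by linarith
    have e6 : (0:ℝ) < (T:ℝ) + 3 := by linarith
    have hn1 : ((Nat.choose 3 1 * s.choose 1 * Nat.choose 4 1 * (s+1).choose 1 : ℕ) : ℝ)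
        = 12*((s:ℝ)*((s:ℝ)+1)) := by
      push_cast [Nat.choose_one_right]; ring
    have hd1 : (((T+1).choose 1 * (T-1).choose 1 : ℕ) : ℝ) = ((T:ℝ)+1)*((T:ℝ)-1) := by
      push_cast [Nat.choose_one_right, Nat.cast_sub hT1]; ring
    have hn2 : ((Nat.choose 3 2 * s.choose 2 * Nat.choose 5 2 * (s+2).choose 2 : ℕ) : ℝ)
        = 30*((s:ℝ)*((s:ℝ)+1))*((s:ℝ)*((s:ℝ)+1)-2)/4 := by
      push_cast [Nat.cast_choose_two]; norm_num; ring
    have hd2 : (((T+2).choose 2 * (T-1).choose 2 : ℕ) : ℝ)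
        = ((T:ℝ)+1)*((T:ℝ)-1)*(((T:ℝ)+2)*((T:ℝ)-2))/4 := by
      push_cast [Nat.cast_choose_two, Nat.cast_sub hT1]; ring
    have hn3 : ((Nat.choose 3 3 * s.choose 3 * Nat.choose 6 3 * (s+3).choose 3 : ℕ) : ℝ)
        = 20*((s:ℝ)*((s:ℝ)+1))*((s:ℝ)*((s:ℝ)+1)-2)*((s:ℝ)*((s:ℝ)+1)-6)/36 := by
      push_cast [cast_choose_three]; norm_num; ring
    have hd3 : (((T+3).choose 3 * (T-1).choose 3 : ℕ) : ℝ)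
        = ((T:ℝ)+1)*((T:ℝ)-1)*(((T:ℝ)+2)*((T:ℝ)-2))*(((T:ℝ)+3)*((T:ℝ)-3))/36 := by
      push_cast [cast_choose_three, Nat.cast_sub hT1]; ring
    have hR : R 3 s T = ((((T:ℝ)+1)*((T:ℝ)-1)*(((T:ℝ)+2)*((T:ℝ)-2))*(((T:ℝ)+3)*((T:ℝ)-3))
        - 12*((s:ℝ)*((s:ℝ)+1))*((((T:ℝ)+2)*((T:ℝ)-2))*(((T:ℝ)+3)*((T:ℝ)-3)))
        + 30*((s:ℝ)*((s:ℝ)+1))*((s:ℝ)*((s:ℝ)+1)-2)*(((T:ℝ)+3)*((T:ℝ)-3))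
        - 20*((s:ℝ)*((s:ℝ)+1))*((s:ℝ)*((s:ℝ)+1)-2)*((s:ℝ)*((s:ℝ)+1)-6)))
        / (((T:ℝ)+1)*((T:ℝ)-1)*(((T:ℝ)+2)*((T:ℝ)-2))*(((T:ℝ)+3)*((T:ℝ)-3))) := by
      simp only [R, hmin]
      rw [Finset.sum_range_succ, Finset.sum_range_succ, Finset.sum_range_succ, Finset.sum_range_one,
        hn1, hd1, hn2, hd2, hn3, hd3]
      norm_num
      field_simp
      ring
    rw [hR]
    set A := (T:ℝ); set S := (s:ℝ)
    have hD : (0:ℝ) < (A+1)*(A-1)*((A+2)*(A-2))*((A+3)*(A-3)) :=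
      mul_pos (mul_pos (mul_pos e2 e1) (mul_pos e4 e3)) (mul_pos e6 e5)
    have hA2 : (25:ℝ) ≤ A^2 := by nlinarith
    have hX0 : (0:ℝ) ≤ S*(S+1) := mul_nonneg hS0 (by linarith)
    have hu : (0:ℝ) ≤ A^2 - A - S*(S+1) := by
      nlinarith [mul_nonneg (by linarith : (0:ℝ) ≤ A - S - 1) (by linarith : (0:ℝ) ≤ A + S)]
    refine frac_abs_le hD ?_ ?_
    · have h1 := n3low (A^2 - A - S*(S+1)) A hu hA
      nlinarith [h1]
    · have hQ : (0:ℝ) ≤ 20*(S*(S+1))^2 - (30*A^2-110)*(S*(S+1)) + 12*A^4-96*A^2+132 := by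
        nlinarith [sq_nonneg (40*(S*(S+1)) - 30*A^2 + 110), sq_nonneg (A^2-25), (by nlinarith : (0:ℝ) ≤ A^2-25)]
      nlinarith [mul_nonneg hX0 hQ]

-- K! * (K+1)(K+2)...(K+1+r) = (K+1+r).factorial
lemma fact_prod (K : ℕ) : ∀ r : ℕ, K.factorial * ∏ i ∈ range (r+1), (K+1+i) = (K+1+r).factorial := by
  intro r
  induction r with
  | zero => simp [Nat.factorial_succ, Nat.mul_comm]
  | succ r ih =>
    rw [Finset.prod_range_succ, ← mul_assoc, ih, show K+1+(r+1) = (K+1+r)+1 by ring,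
      Nat.factorial_succ]
    ring

lemma beta_sum : ∀ (m : ℕ) (x : ℝ), 0 < x →
    ∑ j ∈ range (m+1), (-1:ℝ)^j * (m.choose j) / (x+j)
      = m.factorial / ∏ k ∈ range (m+1), (x+k) := by
  intro m
  induction m with
  | zero => intro x hx; simp
  | succ m ih =>
    intro x hx
    have hpos : ∀ y : ℝ, 0 < y → (0:ℝ) < ∏ k ∈ range (m+1), (y+k) := by
      intro y hy
      exact Finset.prod_pos fun k _ => by positivity
    have key : ∑ j ∈ range (m+1+1), (-1:ℝ)^j * ((m+1).choose j) / (x+j)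
        = (∑ j ∈ range (m+1), (-1:ℝ)^j * (m.choose j)/(x+j))
          - ∑ j ∈ range (m+1), (-1:ℝ)^j * (m.choose j)/((x+1)+j) := by
      rw [Finset.sum_range_succ' (fun j => (-1:ℝ)^j * ((m+1).choose j) / (x+j)) (m+1)]
      have hterm : ∀ i ∈ range (m+1),
          (-1:ℝ)^(i+1) * ((m+1).choose (i+1)) / (x+(i+1:ℕ))
            = (-1:ℝ)^(i+1) * (m.choose (i+1)) / (x+((i+1:ℕ):ℝ))
              + -((-1:ℝ)^i * (m.choose i)/((x+1)+i)) := by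
        intro i hi
        have hne : x + ((i:ℝ)+1) ≠ 0 := by positivity
        rw [Nat.choose_succ_succ m i]
        push_cast
        rw [show ((x+1)+(i:ℝ)) = x + ((i:ℝ)+1) by ring]
        field_simp
        ring
      rw [Finset.sum_congr rfl hterm, Finset.sum_add_distrib]
      have h1 : (∑ i ∈ range (m+1), (-1:ℝ)^(i+1) * (m.choose (i+1)) / (x+((i+1:ℕ):ℝ)))
            + (-1:ℝ)^0 * (((m+1).choose 0 : ℕ)) / (x + (0:ℕ))
          = ∑ j ∈ range (m+1), (-1:ℝ)^j * (m.choose j)/(x+j) := by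
        have := (Finset.sum_range_succ' (fun j => (-1:ℝ)^j * (m.choose j) / (x+j)) (m+1)).symm
        simp only [Nat.choose_zero_right] at this ⊢
        rw [this, Finset.sum_range_succ]
        simp [Nat.choose_succ_self]
      have h2 : ∑ i ∈ range (m+1), -((-1:ℝ)^i * (m.choose i)/((x+1)+i))
          = - ∑ j ∈ range (m+1), (-1:ℝ)^j * (m.choose j)/((x+1)+j) := by
        rw [← Finset.sum_neg_distrib]
      rw [add_right_comm, h1, h2]
      ring
    rw [key, ih x hx, ih (x+1) (by linarith)]
    have hp : (0:ℝ) < ∏ k ∈ range (m+1), (x+k) := hpos x hx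
    have hq : (0:ℝ) < ∏ k ∈ range (m+1), ((x+1)+k) := hpos (x+1) (by linarith)
    have hP' : ∏ k ∈ range (m+1+1), (x+k) = (∏ k ∈ range (m+1), (x+k)) * (x+(m+1)) := by
      rw [Finset.prod_range_succ]; push_cast; ring_nf
    have hP'' : ∏ k ∈ range (m+1+1), (x+k) = x * ∏ k ∈ range (m+1), ((x+1)+k) := by
      rw [Finset.prod_range_succ' (fun k => x + (k:ℕ)) (m+1)]
      simp only [Nat.cast_zero, add_zero]
      rw [mul_comm]
      congr 1
      exact Finset.prod_congr rfl fun k _ => by push_cast; ring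
    set p := ∏ k ∈ range (m+1), (x+k)
    set q := ∏ k ∈ range (m+1), ((x+1)+k)
    have hrel : p * (x+(m+1)) = x * q := by rw [← hP', hP'']
    have hfact : (((m+1).factorial : ℕ) : ℝ) = ((m+1):ℝ) * m.factorial := by
      rw [Nat.factorial_succ]; push_cast; ring
    rw [hP']
    rw [div_sub_div _ _ hp.ne' hq.ne', div_eq_div_iff (by positivity) (by positivity)]
    linear_combination (-((m.factorial:ℝ) * p)) * hrel - (p*q) * hfact

lemma alt_choose_real (n : ℕ) :
    ∑ i ∈ range (n+1), (-1:ℝ)^i * (n.choose i) = if n = 0 then 1 else 0 := by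
  have h := Int.alternating_sum_range_choose (n := n)
  have h2 := congrArg (fun z : ℤ => (z : ℝ)) h
  push_cast at h2
  rw [h2]

lemma chooseO (s k : ℕ) :
    ∑ i ∈ range (s+1), (-1:ℝ)^i * (s.choose i) * (i.choose k)
      = if k = s then (-1:ℝ)^s else 0 := by
  rcases le_or_gt k s with hk | hk
  · have hsplit : ∑ i ∈ range (s+1), (-1:ℝ)^i * (s.choose i) * (i.choose k)
        = ∑ i ∈ Ico k (s+1), (-1:ℝ)^i * (s.choose i) * (i.choose k) := by
      rw [range_eq_Ico, ← Finset.sum_Ico_consecutive _ (Nat.zero_le k) (by omega)]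
      have : ∑ i ∈ Ico 0 k, (-1:ℝ)^i * (s.choose i) * (i.choose k) = 0 := by
        apply Finset.sum_eq_zero
        intro i hi
        rw [Nat.choose_eq_zero_of_lt (Finset.mem_Ico.1 hi).2]
        simp
      rw [this, zero_add]
    rw [hsplit, Finset.sum_Ico_eq_sum_range]
    have hterm : ∀ i ∈ range (s+1-k),
        (-1:ℝ)^(k+i) * (s.choose (k+i)) * ((k+i).choose k)
          = ((-1:ℝ)^k * (s.choose k)) * ((-1:ℝ)^i * ((s-k).choose i)) := by
      intro i hi
      have hik : k + i ≤ s := by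
        have := Finset.mem_range.1 hi; omega
      have hmul := Nat.choose_mul (n := s) (Nat.le_add_right k i)
      have hmul2 : s.choose (k+i) * (k+i).choose k = s.choose k * (s-k).choose i := by
        rw [hmul, show k+i-k = i from by omega]
      have hc := congrArg (fun z : ℕ => (z : ℝ)) hmul2
      push_cast at hc
      rw [pow_add]
      linear_combination ((-1:ℝ)^k * (-1:ℝ)^i) * hc
    rw [Finset.sum_congr rfl hterm, ← Finset.mul_sum]
    rw [show s+1-k = (s-k)+1 by omega, alt_choose_real (s-k)]
    rcases eq_or_lt_of_le hk with he | hlt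
    · subst he
      simp [Nat.choose_self]
    · rw [if_neg (show ¬(s - k = 0) from by omega), if_neg (show ¬(k = s) from by omega)]
      ring
  · rw [if_neg (show ¬(k = s) from by omega)]
    apply Finset.sum_eq_zero
    intro i hi
    have hik : i < k := by have := Finset.mem_range.1 hi; omega
    rw [Nat.choose_eq_zero_of_lt hik]
    simp

lemma vandermonde_real (M i s : ℕ) (hi : i ≤ s) :
    (((M+i).choose i : ℕ) : ℝ) = ∑ k ∈ range (s+1), (M.choose k : ℝ) * (i.choose k) := by
  have h := Nat.add_choose_eq M i i
  rw [Finset.Nat.sum_antidiagonal_eq_sum_range_succ_mk] at h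
  have h2 : ∑ k ∈ range (i+1), M.choose k * i.choose (i-k)
      = ∑ k ∈ range (i+1), M.choose k * i.choose k := by
    refine Finset.sum_congr rfl fun k hk => ?_
    rw [Nat.choose_symm (Nat.lt_succ_iff.1 (Finset.mem_range.1 hk))]
  rw [h2] at h
  have h3 : ∑ k ∈ range (s+1), (M.choose k : ℝ) * (i.choose k)
      = ∑ k ∈ range (i+1), (M.choose k : ℝ) * (i.choose k) := by
    symm
    apply Finset.sum_subset (by rw [Finset.range_subset_range]; omega)
    intro k _ hk
    have hik : i < k := by simp at hk; omega
    rw [Nat.choose_eq_zero_of_lt hik]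
    simp
  rw [h3, h]
  push_cast
  rfl

lemma chooseD (s M : ℕ) :
    ∑ i ∈ range (s+1), (-1:ℝ)^i * (s.choose i) * ((M+i).choose i)
      = (-1:ℝ)^s * (M.choose s) := by
  have step1 : ∑ i ∈ range (s+1), (-1:ℝ)^i * (s.choose i) * ((M+i).choose i)
      = ∑ i ∈ range (s+1), ∑ k ∈ range (s+1),
          (M.choose k : ℝ) * ((-1:ℝ)^i * (s.choose i) * (i.choose k)) := by
    refine Finset.sum_congr rfl fun i hi => ?_
    rw [vandermonde_real M i s (Nat.lt_succ_iff.1 (Finset.mem_range.1 hi)), Finset.mul_sum]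
    refine Finset.sum_congr rfl fun k _ => by ring
  rw [step1, Finset.sum_comm]
  have step2 : ∀ k ∈ range (s+1),
      ∑ i ∈ range (s+1), (M.choose k : ℝ) * ((-1:ℝ)^i * (s.choose i) * (i.choose k))
        = (M.choose k : ℝ) * (if k = s then (-1:ℝ)^s else 0) := by
    intro k _
    rw [← Finset.mul_sum, chooseO]
  rw [Finset.sum_congr rfl step2]
  simp only [mul_ite, mul_zero]
  rw [Finset.sum_ite_eq' (range (s+1)) s (fun k => (M.choose k : ℝ) * (-1:ℝ)^s),
    if_pos (Finset.mem_range.2 (Nat.lt_succ_self s))]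
  ring

lemma termR (s K k : ℕ) (hk : k ≤ s) :
    ((s.choose k : ℝ)) * ((s-k).factorial) * ((K+k).factorial)
      = (s.factorial) * (K.factorial) * (((K+k).choose k)) := by
  have h1 := Nat.choose_mul_factorial_mul_factorial hk
  have h2 := Nat.add_choose_mul_factorial_mul_factorial K k
  have c1 := congrArg (fun z : ℕ => (z:ℝ)) h1
  have c2 := congrArg (fun z : ℕ => (z:ℝ)) h2
  push_cast at c1 c2
  have hkf : ((k.factorial : ℕ) : ℝ) ≠ 0 := by
    exact_mod_cast (Nat.factorial_pos k).ne'
  apply mul_right_cancel₀ hkf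
  push_cast
  linear_combination (((K+k).factorial : ℝ)) * c1 - ((s.factorial:ℝ)) * c2

lemma racahInner (s K k : ℕ) (hk : k ≤ s) :
    ∑ j ∈ range (s+1), (-1:ℝ)^j * (s.choose j) * (j.choose k) / ((K:ℝ)+1+j)
      = (-1:ℝ)^k * (s.choose k) * ((s-k).factorial) * ((K+k).factorial) / ((K+1+s).factorial) := by
  -- drop j < k
  have hsplit : ∑ j ∈ range (s+1), (-1:ℝ)^j * (s.choose j) * (j.choose k) / ((K:ℝ)+1+j)
      = ∑ j ∈ Ico k (s+1), (-1:ℝ)^j * (s.choose j) * (j.choose k) / ((K:ℝ)+1+j) := by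
    rw [range_eq_Ico, ← Finset.sum_Ico_consecutive _ (Nat.zero_le k) (by omega)]
    have hz : ∑ j ∈ Ico 0 k, (-1:ℝ)^j * (s.choose j) * (j.choose k) / ((K:ℝ)+1+j) = 0 := by
      apply Finset.sum_eq_zero
      intro j hj
      rw [Nat.choose_eq_zero_of_lt (Finset.mem_Ico.1 hj).2]
      simp
    rw [hz, zero_add]
  rw [hsplit, Finset.sum_Ico_eq_sum_range]
  have hterm : ∀ i ∈ range (s+1-k),
      (-1:ℝ)^(k+i) * (s.choose (k+i)) * ((k+i).choose k) / ((K:ℝ)+1+(k+i:ℕ))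
        = ((-1:ℝ)^k * (s.choose k)) * ((-1:ℝ)^i * (((s-k).choose i)) / (((K:ℝ)+1+k)+i)) := by
    intro i hi
    have hik : k + i ≤ s := by have := Finset.mem_range.1 hi; omega
    have hmul := Nat.choose_mul (n := s) (Nat.le_add_right k i)
    have hmul2 : s.choose (k+i) * (k+i).choose k = s.choose k * (s-k).choose i := by
      rw [hmul, show k+i-k = i from by omega]
    have hc := congrArg (fun z : ℕ => (z : ℝ)) hmul2
    push_cast at hc
    rw [pow_add]
    have hden : ((K:ℝ)+1+((k:ℝ)+(i:ℝ))) = ((K:ℝ)+1+k)+i := by ring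
    push_cast
    rw [hden]
    have hdne : (((K:ℝ)+1+k)+i) ≠ 0 := by positivity
    field_simp
    linear_combination hc
  rw [Finset.sum_congr rfl hterm, ← Finset.mul_sum]
  have hx : (0:ℝ) < (K:ℝ)+1+k := by positivity
  have hrange : s+1-k = (s-k)+1 := by omega
  rw [hrange]
  have hb := beta_sum (s-k) ((K:ℝ)+1+k) hx
  have hsum_eq : ∑ i ∈ range ((s-k)+1), (-1:ℝ)^i * (((s-k).choose i)) / (((K:ℝ)+1+k)+i)
      = ((s-k).factorial) / ∏ r ∈ range ((s-k)+1), (((K:ℝ)+1+k)+r) := hb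
  rw [hsum_eq]
  -- product = (K+1+s)!/(K+k)!
  have hprod : ∏ r ∈ range ((s-k)+1), (((K:ℝ)+1+k)+r)
      = ((K+1+s).factorial : ℝ) / ((K+k).factorial : ℝ) := by
    have hf := fact_prod (K+k) (s-k)
    have : (K+k)+1+(s-k) = K+1+s := by omega
    rw [this] at hf
    have hc := congrArg (fun z : ℕ => (z : ℝ)) hf
    push_cast at hc
    have hprod_cast : ∏ r ∈ range ((s-k)+1), (((K:ℝ)+1+k)+r)
        = ((∏ i ∈ range ((s-k)+1), (K+k+1+i) : ℕ) : ℝ) := by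
      push_cast
      exact Finset.prod_congr rfl fun r _ => by push_cast; ring
    rw [hprod_cast]
    rw [eq_div_iff (by exact_mod_cast (Nat.factorial_pos (K+k)).ne' : ((K+k).factorial:ℝ) ≠ 0)]
    push_cast
    linarith [hc]
  rw [hprod]
  have h1 : ((K+k).factorial : ℝ) ≠ 0 := by exact_mod_cast (Nat.factorial_pos _).ne'
  have h2 : ((K+1+s).factorial : ℝ) ≠ 0 := by exact_mod_cast (Nat.factorial_pos _).ne'
  field_simp

lemma gsum (s K : ℕ) :
    ∑ j ∈ range (s+1), (-1:ℝ)^j * (s.choose j) * ((s+j).choose j) / ((K:ℝ)+1+j)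
      = (-1:ℝ)^s * (K.choose s) * (s.factorial) * (K.factorial) / ((K+1+s).factorial) := by
  have step1 : ∑ j ∈ range (s+1), (-1:ℝ)^j * (s.choose j) * ((s+j).choose j) / ((K:ℝ)+1+j)
      = ∑ j ∈ range (s+1), ∑ k ∈ range (s+1),
          (s.choose k : ℝ) * ((-1:ℝ)^j * (s.choose j) * (j.choose k) / ((K:ℝ)+1+j)) := by
    refine Finset.sum_congr rfl fun j hj => ?_
    rw [vandermonde_real s j s (Nat.lt_succ_iff.1 (Finset.mem_range.1 hj))]
    rw [Finset.mul_sum, Finset.sum_div]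
    exact Finset.sum_congr rfl fun k _ => by ring
  rw [step1, Finset.sum_comm]
  have step2 : ∀ k ∈ range (s+1),
      ∑ j ∈ range (s+1), (s.choose k : ℝ) * ((-1:ℝ)^j * (s.choose j) * (j.choose k) / ((K:ℝ)+1+j))
        = ((-1:ℝ)^k * (s.choose k) * (((K+k).choose k))) * ((s.factorial) * (K.factorial) / (((K+1+s).factorial):ℝ)) := by
    intro k hk
    have hks : k ≤ s := Nat.lt_succ_iff.1 (Finset.mem_range.1 hk)
    rw [← Finset.mul_sum, racahInner s K k hks]
    have ht := termR s K k hks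
    have hne : (((K+1+s).factorial : ℕ) : ℝ) ≠ 0 := by
      exact_mod_cast (Nat.factorial_pos _).ne'
    field_simp
    linear_combination (((s.choose k):ℝ)) * ht
  rw [Finset.sum_congr rfl step2, ← Finset.sum_mul]
  have hD := chooseD s K
  rw [hD]
  ring

lemma topcase (s T : ℕ) (hT : 1 ≤ T) (hs : s ≤ T - 1) : |R (T-1) s T| ≤ 1 := by
  obtain ⟨K, rfl⟩ : ∃ K, T = K + 1 := ⟨T-1, by omega⟩
  have hsK : s ≤ K := by omega
  simp only [Nat.add_sub_cancel]
  have hmin : min K s = s := by omega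
  have hterm : ∀ j ∈ range (s+1),
      (-1:ℝ)^j * ((K.choose j * s.choose j * (K+j).choose j * (s+j).choose j : ℕ):ℝ)
        / (((K+1+j).choose j * K.choose j : ℕ):ℝ)
      = ((K:ℝ)+1) * ((-1:ℝ)^j * (s.choose j) * ((s+j).choose j) / ((K:ℝ)+1+j)) := by
    intro j hj
    have hjs : j ≤ s := Nat.lt_succ_iff.1 (Finset.mem_range.1 hj)
    have ha : 0 < K.choose j := Nat.choose_pos (by omega)
    have hd : 0 < (K+1+j).choose j := Nat.choose_pos (by omega)
    have hrel : (K+j).choose j * (K+1+j) = (K+1+j).choose j * (K+1) := by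
      have h := Nat.choose_mul_succ_eq (K+j) j
      rw [show K+j+1 = K+1+j from by omega, show K+1+j-j = K+1 from by omega] at h
      exact h
    have hc := congrArg (fun z : ℕ => (z:ℝ)) hrel
    push_cast at hc
    have hD1 : (((K+1+j).choose j * K.choose j : ℕ):ℝ) ≠ 0 := by
      have : 0 < (K+1+j).choose j * K.choose j := Nat.mul_pos hd ha
      exact_mod_cast this.ne'
    have hD2 : ((K:ℝ)+1+j) ≠ 0 := by positivity
    rw [show ((K:ℝ)+1) * ((-1:ℝ)^j * (s.choose j) * ((s+j).choose j) / ((K:ℝ)+1+j))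
        = (((K:ℝ)+1) * ((s.choose j) * ((s+j).choose j)) * (-1:ℝ)^j) / ((K:ℝ)+1+j) from by ring]
    rw [div_eq_div_iff hD1 hD2]
    push_cast
    linear_combination ((-1:ℝ)^j * (K.choose j : ℝ) * (s.choose j : ℝ) * ((s+j).choose j : ℝ)) * hc
  have hR : R K s (K+1) = ((K:ℝ)+1) * ((-1:ℝ)^s * (K.choose s) * (s.factorial) * (K.factorial)
      / (((K+1+s).factorial):ℝ)) := by
    simp only [R, hmin, Nat.add_sub_cancel]
    rw [Finset.sum_congr rfl hterm, ← Finset.mul_sum, gsum s K]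
  rw [hR]
  have hfac : (0:ℝ) < ((K+1+s).factorial : ℝ) := by exact_mod_cast Nat.factorial_pos _
  have hc0 : (0:ℝ) ≤ ((K:ℝ)+1) * (K.choose s : ℝ) * (s.factorial : ℝ) * (K.factorial : ℝ)
      / ((K+1+s).factorial : ℝ) := by positivity
  have hv : ((K:ℝ)+1) * ((-1:ℝ)^s * (K.choose s) * (s.factorial) * (K.factorial)
      / (((K+1+s).factorial):ℝ))
      = (-1:ℝ)^s * (((K:ℝ)+1) * (K.choose s : ℝ) * (s.factorial : ℝ) * (K.factorial : ℝ)
        / ((K+1+s).factorial : ℝ)) := by ring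
  rw [hv, abs_mul, abs_pow, abs_neg, abs_one, one_pow, one_mul, abs_of_nonneg hc0]
  rw [div_le_one hfac]
  have hnat : (K+1) * K.choose s * s.factorial * K.factorial ≤ (K+1+s).factorial := by
    have hle : K.choose s ≤ (K+1+s).choose s := Nat.choose_le_choose s (by omega)
    have heq : (K+1+s).choose s * (K+1).factorial * s.factorial = (K+1+s).factorial :=
      Nat.add_choose_mul_factorial_mul_factorial (K+1) s
    calc (K+1) * K.choose s * s.factorial * K.factorial
        = K.choose s * ((K+1).factorial * s.factorial) := by
          rw [Nat.factorial_succ]; ring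
      _ ≤ (K+1+s).choose s * ((K+1).factorial * s.factorial) :=
          Nat.mul_le_mul_right _ hle
      _ = (K+1+s).factorial := by rw [← heq]; ring
  calc ((K:ℝ)+1) * (K.choose s : ℝ) * (s.factorial : ℝ) * (K.factorial : ℝ)
      = (((K+1) * K.choose s * s.factorial * K.factorial : ℕ) : ℝ) := by push_cast; ring
    _ ≤ ((K+1+s).factorial : ℝ) := by exact_mod_cast hnat

theorem stmt12 (n s T : ℕ) (hT : 1 ≤ T) (hn : n ≤ T - 1) (hs : s ≤ T - 1)
    (h : n ≤ 3 ∨ n = T - 1) :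
    |R n s T| ≤ 1 := by
  by_cases hcase : n = T - 1
  · rw [hcase]; exact topcase s T hT hs
  · have hn3 : n ≤ 3 := h.resolve_right hcase
    have hnT : n + 2 ≤ T := by omega
    by_cases hns : n ≤ s
    · exact smallcase n s T hn3 hnT hs hns
    · rw [R_symm]
      exact smallcase s n T (by omega) (by omega) hn (by omega)
end

section
/- Let T ≥ 1 be an integer and s an integer with 0 ≤ s ≤ T−1. Then R_{T−1}(s,T) = Σ_{j=0}^{s} (−1)^j · (T/(T+j)) · C(s,j) · C(s+j,j), and this quantity equals ∏_{i=1}^{s} (i−T)/(i+T). -/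
set_option maxHeartbeats 1000000

noncomputable def Aux (s : ℕ) (T : ℝ) : ℝ :=
  ∑ j ∈ Finset.range (s + 1),
    (-1 : ℝ) ^ j * (s.choose j : ℝ) * ((s + j).choose j : ℝ) / (T + j)

def gg (s : ℕ) : ℕ → ℝ
  | 0 => 0
  | (j + 1) => 2 * (-1 : ℝ) ^ j * (s.choose j : ℝ) * ((s + j + 1).choose j : ℝ)

lemma term_eq (s : ℕ) (T : ℝ) (hT : 0 < T) (j : ℕ) (hj : j ≤ s + 1) :
    (T + s + 1) * ((-1 : ℝ) ^ j * ((s+1).choose j : ℝ) * ((s + 1 + j).choose j : ℝ) / (T + j))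
      - (s + 1 - T) * ((-1 : ℝ) ^ j * (s.choose j : ℝ) * ((s + j).choose j : ℝ) / (T + j))
      = gg s (j + 1) - gg s j := by
  match j with
  | 0 =>
      simp [gg]
      have h : T ≠ 0 := ne_of_gt hT
      field_simp
      ring
  | (k + 1) =>
      have hk : k ≤ s := by omega
      have hTj : T + ((k : ℝ) + 1) ≠ 0 := by positivity
      have hknz : ((k : ℝ) + 1) ≠ 0 := by positivity
      have h3 : (s.choose (k+1) : ℝ) * ((k:ℝ) + 1) = (s.choose k : ℝ) * ((s : ℝ) - k) := by
        have h := Nat.choose_succ_right_eq s k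
        calc (s.choose (k+1) : ℝ) * ((k:ℝ) + 1)
            = ((s.choose (k+1) * (k+1) : ℕ) : ℝ) := by push_cast; ring
          _ = ((s.choose k * (s - k) : ℕ) : ℝ) := by rw [h]
          _ = (s.choose k : ℝ) * ((s:ℝ) - k) := by push_cast [Nat.cast_sub hk]; ring
      have h4 : ((s + k + 1).choose (k+1) : ℝ) * ((k:ℝ) + 1)
          = ((s + k + 1).choose k : ℝ) * ((s : ℝ) + 1) := by
        have h := Nat.choose_succ_right_eq (s + k + 1) k
        have hsub : s + k + 1 - k = s + 1 := by omega
        rw [hsub] at h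
        calc ((s + k + 1).choose (k+1) : ℝ) * ((k:ℝ) + 1)
            = (((s + k + 1).choose (k+1) * (k+1) : ℕ) : ℝ) := by push_cast; ring
          _ = (((s + k + 1).choose k * (s + 1) : ℕ) : ℝ) := by rw [h]
          _ = ((s + k + 1).choose k : ℝ) * ((s:ℝ) + 1) := by push_cast; ring
      have hb : (s.choose (k+1) : ℝ) = (s.choose k : ℝ) * ((s:ℝ) - k) / ((k:ℝ) + 1) := by
        rw [eq_div_iff hknz]; exact h3
      have he : ((s + k + 1).choose (k+1) : ℝ)
          = ((s + k + 1).choose k : ℝ) * ((s:ℝ) + 1) / ((k:ℝ) + 1) := by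
        rw [eq_div_iff hknz]; exact h4
      simp only [gg, show s + (k+1) = s + k + 1 from rfl,
                 show s + 1 + (k+1) = s + k + 1 + 1 by omega,
                 show s + (k+1) + 1 = s + k + 1 + 1 from rfl]
      rw [Nat.choose_succ_succ s k, Nat.choose_succ_succ (s+k+1) k]
      push_cast
      rw [hb, he]
      field_simp
      ring

lemma aux_succ (s : ℕ) (T : ℝ) (hT : 0 < T) :
    (T + s + 1) * Aux (s+1) T = (s + 1 - T) * Aux s T := by
  have hext : Aux s T = ∑ j ∈ Finset.range (s + 2),
      (-1 : ℝ) ^ j * (s.choose j : ℝ) * ((s + j).choose j : ℝ) / (T + j) := by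
    rw [show s + 2 = (s + 1) + 1 from rfl, Finset.sum_range_succ, Aux]
    simp [Nat.choose_eq_zero_of_lt (Nat.lt_succ_self s)]
  have key : (T + s + 1) * Aux (s+1) T - (s + 1 - T) * Aux s T = 0 := by
    rw [hext, Aux]
    push_cast
    rw [Finset.mul_sum, Finset.mul_sum, ← Finset.sum_sub_distrib]
    have hterm : ∀ j ∈ Finset.range (s + 2),
        (T + s + 1) * ((-1 : ℝ) ^ j * ((s+1).choose j : ℝ) * ((s + 1 + j).choose j : ℝ) / (T + j))
          - (s + 1 - T) * ((-1 : ℝ) ^ j * (s.choose j : ℝ) * ((s + j).choose j : ℝ) / (T + j))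
          = gg s (j+1) - gg s j := by
      intro j hj
      exact term_eq s T hT j (by have := Finset.mem_range.mp hj; omega)
    rw [Finset.sum_congr rfl hterm, Finset.sum_range_sub]
    simp [gg, Nat.choose_eq_zero_of_lt (Nat.lt_succ_self s)]
  linarith [key]

lemma aux_eq (s : ℕ) (T : ℝ) (hT : 0 < T) :
    Aux s T = (∏ i ∈ Finset.Icc 1 s, (((i:ℝ) - T) / ((i:ℝ) + T))) / T := by
  induction s with
  | zero => simp [Aux]
  | succ n ih =>
      have h1 : T + (n:ℝ) + 1 ≠ 0 := by positivity
      have hT' : T ≠ 0 := ne_of_gt hT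
      have h2 : Aux (n+1) T = ((n:ℝ) + 1 - T) / (T + n + 1) * Aux n T := by
        have h := aux_succ n T hT
        field_simp
        linarith [h]
      rw [h2, ih, Finset.prod_Icc_succ_top (by omega : 1 ≤ n + 1)]
      push_cast
      field_simp
      ring

lemma key_nat_s13 (U j : ℕ) :
    (U + 1 + j) * ((U + j).choose j) = ((U + 1 + j).choose j) * (U + 1) := by
  have h1 : (U + j).choose U = (U + j).choose j := Nat.choose_symm_add
  have h2 : (U + 1 + j).choose (U + 1) = (U + 1 + j).choose j :=
    Nat.choose_symm_of_eq_add (by omega)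
  have h3 := Nat.add_one_mul_choose_eq (U + j) U
  rw [h1] at h3
  have h4 : (U + j).succ = U + 1 + j := by omega
  have h5 : (U + j + 1) = U + 1 + j := by omega
  rw [h5, h2] at h3
  exact h3

theorem stmt13 (T s : ℕ) (hT : 1 ≤ T) (hs : s ≤ T - 1) :
    R (T - 1) s T =
      ∑ j ∈ Finset.range (s + 1),
        (-1 : ℝ) ^ j * ((T : ℝ) / ((T : ℝ) + j)) * (s.choose j) * ((s + j).choose j) ∧
    R (T - 1) s T = ∏ i ∈ Finset.Icc 1 s, (((i : ℝ) - T) / ((i : ℝ) + T)) := by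
  obtain ⟨U, rfl⟩ : ∃ U, T = U + 1 := ⟨T - 1, by omega⟩
  simp only [Nat.add_sub_cancel] at hs ⊢
  have hU : (0:ℝ) < (U:ℝ) + 1 := by positivity
  have hR : R U s (U + 1) = ((U:ℝ) + 1) * Aux s ((U:ℝ) + 1) := by
    rw [R, Aux, min_eq_right hs, Finset.mul_sum]
    refine Finset.sum_congr rfl ?_
    intro j hj
    have hjs : j ≤ s := by have := Finset.mem_range.mp hj; omega
    have hjU : j ≤ U := le_trans hjs hs
    have key : ((U + 1 + j) * ((U + j).choose j) : ℝ) = (((U + 1 + j).choose j) : ℝ) * ((U:ℝ) + 1) := by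
      exact_mod_cast congrArg (Nat.cast : ℕ → ℝ) (key_nat_s13 U j)
    have hc1 : ((U.choose j : ℕ) : ℝ) ≠ 0 := by
      exact_mod_cast Nat.pos_iff_ne_zero.mp (Nat.choose_pos hjU)
    have hc5 : (((U + 1 + j).choose j : ℕ) : ℝ) ≠ 0 := by
      exact_mod_cast Nat.pos_iff_ne_zero.mp (Nat.choose_pos (by omega))
    have hden : (U:ℝ) + 1 + (j:ℝ) ≠ 0 := by positivity
    have hc3 : (((U + j).choose j : ℕ) : ℝ)
        = (((U + 1 + j).choose j : ℕ) : ℝ) * ((U:ℝ) + 1) / ((U:ℝ) + 1 + j) := by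
      rw [eq_div_iff hden]
      push_cast at key ⊢
      linarith [key]
    push_cast
    rw [hc3]
    field_simp
  constructor
  · rw [hR, Aux, Finset.mul_sum]
    refine Finset.sum_congr rfl ?_
    intro j hj
    push_cast
    ring
  · rw [hR, aux_eq s _ hU]
    have : ((U:ℝ) + 1) ≠ 0 := ne_of_gt hU
    rw [mul_div_cancel₀ _ this]
    refine Finset.prod_congr rfl ?_
    intro i hi
    push_cast
    ring
end

section
/- Let n and T be positive integers such that 1 + 2n + 2n² < T²/10. Then for all real t with −1 ≤ t ≤ 1, one has |p_n(t) − P_n(t)| ≤ (3/2) · 4^n / T². -/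
/-- The Legendre polynomials: `P_0(t) = 1`, `P_1(t) = t` and
`(n+1)·P_{n+1}(t) = (2n+1)·t·P_n(t) − n·P_{n−1}(t)` for `n ≥ 1`. -/
noncomputable def P : ℕ → ℝ → ℝ
  | 0 => fun _ => 1
  | 1 => fun t => t
  | n + 2 => fun t =>
      ((2 * (n : ℝ) + 3) * t * P (n + 1) t - ((n : ℝ) + 1) * P n t) / ((n : ℝ) + 2)

/-- The rescaled Racah polynomials: `p_0(t) = 1`, `p_1(t) = t + 1/(2T²)` and
`((n+1)/(2n+1))·p_{n+1}(t) = t·p_n(t) + ((2n²+2n+1)/(2T²))·p_n(t)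
  − (1 − n²/T²)²·(n/(2n+1))·p_{n−1}(t)` for `n ≥ 1`. -/
noncomputable def p (T : ℕ) : ℕ → ℝ → ℝ
  | 0 => fun _ => 1
  | 1 => fun t => t + 1 / (2 * (T : ℝ) ^ 2)
  | n + 2 => fun t =>
      ((2 * ((n : ℝ) + 1) + 1) / ((n : ℝ) + 2)) *
        ((t + (2 * ((n : ℝ) + 1) ^ 2 + 2 * ((n : ℝ) + 1) + 1) / (2 * (T : ℝ) ^ 2)) *
          p T (n + 1) t)
      - (1 - ((n : ℝ) + 1) ^ 2 / (T : ℝ) ^ 2) ^ 2 * (((n : ℝ) + 1) / ((n : ℝ) + 2)) * p T n t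

/-!
The Legendre polynomials are bounded by `1` on `[-1, 1]`: with `t = cos θ`, `u = e^{iθ}`,
`v = e^{-iθ}` one has `P_n(t) = ∑_{i+j=n} a_i a_j u^i v^j` with `a_k = binom(2k,k)/4^k ≥ 0`, since both
sides satisfy the Legendre recurrence, and `∑_{i+j=n} a_i a_j = P_n(1) = 1`. Subtracting the two
three-term recurrences, the error `e_n = p_n - P_n` then satisfies
`|e_{m+2}| ≤ 2.1 |e_{m+1}| + |e_m| + (4(m+1)² + 2(m+1) + 1)/T²` as long as `10(2(m+1)²+2(m+1)+1) ≤ T²`,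
and `(3/2)·4^m/T²` is a supersolution of this recursion.
-/

open Finset

section CauchyProduct

/- `f` and `g` are the coefficient sequences of `(1 - uX)^{-1/2}` and `(1 - vX)^{-1/2}`, whose
product `(1 - (u+v)X + uvX²)^{-1/2}` generates the homogenised Legendre polynomials. -/

variable {R : Type*} [CommRing R] {f g : ℕ → R} {u v : R}

theorem two_mul_sum_antidiagonal_succ_fst_mul
    (hf : ∀ k : ℕ, 2 * (k + 1) * f (k + 1) = (2 * k + 1) * u * f k) (n : ℕ) :
    2 * ∑ x ∈ antidiagonal (n + 1), (x.1 : R) * f x.1 * g x.2 =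
      u * (2 * ∑ x ∈ antidiagonal n, (x.1 : R) * f x.1 * g x.2 +
        ∑ x ∈ antidiagonal n, f x.1 * g x.2) := by
  rw [Nat.sum_antidiagonal_succ]
  simp only [Nat.cast_zero, zero_mul, zero_add, mul_sum, ← sum_add_distrib]
  refine sum_congr rfl fun x _ => ?_
  push_cast
  linear_combination g x.2 * hf x.1

theorem two_mul_sum_antidiagonal_succ_snd_mul
    (hg : ∀ k : ℕ, 2 * (k + 1) * g (k + 1) = (2 * k + 1) * v * g k) (n : ℕ) :
    2 * ∑ x ∈ antidiagonal (n + 1), (x.2 : R) * f x.1 * g x.2 =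
      v * (2 * ∑ x ∈ antidiagonal n, (x.2 : R) * f x.1 * g x.2 +
        ∑ x ∈ antidiagonal n, f x.1 * g x.2) := by
  rw [Nat.sum_antidiagonal_succ']
  simp only [Nat.cast_zero, zero_mul, zero_add, mul_sum, ← sum_add_distrib]
  refine sum_congr rfl fun x _ => ?_
  push_cast
  linear_combination f x.1 * hg x.2

theorem sum_antidiagonal_mul_recurrence
    (hf : ∀ k : ℕ, 2 * (k + 1) * f (k + 1) = (2 * k + 1) * u * f k)
    (hg : ∀ k : ℕ, 2 * (k + 1) * g (k + 1) = (2 * k + 1) * v * g k) (n : ℕ) :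
    2 * (n + 2) * ∑ x ∈ antidiagonal (n + 2), f x.1 * g x.2 =
      (2 * n + 3) * (u + v) * ∑ x ∈ antidiagonal (n + 1), f x.1 * g x.2 -
        2 * (n + 1) * (u * v) * ∑ x ∈ antidiagonal n, f x.1 * g x.2 := by
  have hL := two_mul_sum_antidiagonal_succ_fst_mul (g := g) hf
  have hR := two_mul_sum_antidiagonal_succ_snd_mul (f := f) hg
  have hS : ∀ k : ℕ, (k : R) * ∑ x ∈ antidiagonal k, f x.1 * g x.2 =
      ∑ x ∈ antidiagonal k, (x.1 : R) * f x.1 * g x.2 +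
        ∑ x ∈ antidiagonal k, (x.2 : R) * f x.1 * g x.2 := by
    intro k
    rw [mul_sum, ← sum_add_distrib]
    refine sum_congr rfl fun x hx => ?_
    rw [← mem_antidiagonal.mp hx]
    push_cast
    ring
  have hS₁ := hS (n + 1)
  have hS₂ := hS (n + 2)
  push_cast at hS₁ hS₂
  linear_combination 2 * hS₂ + hL (n + 1) + hR (n + 1) - 2 * (u + v) * hS₁
    - v * hL n - u * hR n + 2 * u * v * hS n

end CauchyProduct

noncomputable def legendreWeight (k : ℕ) : ℝ := k.centralBinom / 4 ^ k

theorem legendreWeight_nonneg (k : ℕ) : 0 ≤ legendreWeight k := by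
  unfold legendreWeight; positivity

theorem two_mul_succ_mul_legendreWeight_succ (k : ℕ) :
    2 * (k + 1) * legendreWeight (k + 1) = (2 * k + 1) * legendreWeight k := by
  have h : ((k + 1 : ℕ) : ℝ) * (k + 1).centralBinom = 2 * (2 * k + 1) * k.centralBinom := by
    exact_mod_cast Nat.succ_mul_centralBinom_succ k
  unfold legendreWeight
  push_cast at h
  rw [pow_succ]
  field_simp
  linear_combination 2 * h

theorem P_eq_sum_antidiagonal {t : ℝ} {u v : ℂ} (huv : u * v = 1) (h : u + v = 2 * t) (n : ℕ) :
    (P n t : ℂ) = ∑ x ∈ antidiagonal n,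
      (legendreWeight x.1 * u ^ x.1) * (legendreWeight x.2 * v ^ x.2) := by
  have hw (w : ℂ) (k : ℕ) : 2 * (k + 1) * (legendreWeight (k + 1) * w ^ (k + 1)) =
      (2 * k + 1) * w * (legendreWeight k * w ^ k) := by
    have := congrArg (fun r : ℝ => (r : ℂ)) (two_mul_succ_mul_legendreWeight_succ k)
    push_cast at this
    linear_combination w ^ (k + 1) * this
  induction n using P.induct with
  | case1 => simp [P, legendreWeight]
  | case2 =>
    simp [P, legendreWeight, Nat.sum_antidiagonal_succ, Nat.centralBinom]
    linear_combination -h / 2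
  | case3 n ih₁ ih₀ =>
    have hrec := sum_antidiagonal_mul_recurrence (f := fun k => (legendreWeight k : ℂ) * u ^ k)
      (g := fun k => (legendreWeight k : ℂ) * v ^ k) (hw u) (hw v) n
    simp only [P]
    push_cast
    rw [← ih₀, ← ih₁, huv, h] at hrec
    have hn : (n : ℂ) + 2 ≠ 0 := by exact_mod_cast (n + 1).succ_ne_zero
    rw [div_eq_iff hn]
    linear_combination -hrec / 2

theorem P_one (n : ℕ) : P n 1 = 1 := by
  induction n using P.induct with
  | case1 => rfl
  | case2 => rfl
  | case3 n ih₁ ih₀ =>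
    simp only [P, ih₁, ih₀]
    field_simp
    ring

theorem sum_antidiagonal_legendreWeight_mul (n : ℕ) :
    ∑ x ∈ antidiagonal n, legendreWeight x.1 * legendreWeight x.2 = 1 := by
  have := P_eq_sum_antidiagonal (t := 1) (u := 1) (v := 1) (by norm_num) (by norm_num) n
  simp only [one_pow, mul_one, P_one] at this
  exact_mod_cast this.symm

theorem abs_P_le_one {t : ℝ} (ht : |t| ≤ 1) (n : ℕ) : |P n t| ≤ 1 := by
  set θ := Real.arccos t
  have hθ : Real.cos θ = t := Real.cos_arccos (abs_le.mp ht).1 (abs_le.mp ht).2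
  have huv : Complex.exp (θ * Complex.I) * Complex.exp (-θ * Complex.I) = 1 := by
    rw [← Complex.exp_add]; simp
  have hsum : Complex.exp (θ * Complex.I) + Complex.exp (-θ * Complex.I) = 2 * t := by
    rw [← Complex.two_cos, ← hθ, Complex.ofReal_cos]
  rw [← Real.norm_eq_abs, ← Complex.norm_real, P_eq_sum_antidiagonal huv hsum]
  calc _ ≤ ∑ x ∈ antidiagonal n, ‖(legendreWeight x.1 * Complex.exp (θ * Complex.I) ^ x.1) *
          (legendreWeight x.2 * Complex.exp (-θ * Complex.I) ^ x.2)‖ := norm_sum_le _ _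
    _ = ∑ x ∈ antidiagonal n, legendreWeight x.1 * legendreWeight x.2 := by
      refine sum_congr rfl fun x _ => ?_
      simp [Complex.norm_exp, abs_of_nonneg (legendreWeight_nonneg _)]
    _ = 1 := sum_antidiagonal_legendreWeight_mul n

theorem abs_p_sub_P_add_two_le (T m : ℕ) {t : ℝ} (ht : |t| ≤ 1)
    (hT : 10 * (2 * ((m : ℝ) + 1) ^ 2 + 2 * ((m : ℝ) + 1) + 1) ≤ (T : ℝ) ^ 2) :
    |p T (m + 2) t - P (m + 2) t| ≤
      21 / 10 * |p T (m + 1) t - P (m + 1) t| + |p T m t - P m t| +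
        (4 * ((m : ℝ) + 1) ^ 2 + 2 * ((m : ℝ) + 1) + 1) / (T : ℝ) ^ 2 := by
  set M : ℝ := m + 1 with hM
  set e₁ := p T (m + 1) t - P (m + 1) t
  set e₀ := p T m t - P m t
  set α := (2 * M + 1) / (2 * M + 2)
  set β := M / (M + 1)
  set c := (2 * M ^ 2 + 2 * M + 1) / (T : ℝ) ^ 2
  set x := M ^ 2 / (T : ℝ) ^ 2
  have hM₀ : 1 ≤ M := by simp [hM]
  have hT₀ : 0 < (T : ℝ) ^ 2 := by nlinarith
  have hrec : p T (m + 2) t - P (m + 2) t =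
      2 * α * t * e₁ + α * c * p T (m + 1) t - (1 - x) ^ 2 * β * e₀ +
        (1 - (1 - x) ^ 2) * β * P m t := by
    simp only [p, P, e₁, e₀, α, β, c, x, hM]
    field_simp
    ring
  have hα₀ : 0 ≤ α := by positivity
  have hα₁ : α ≤ 1 := by rw [div_le_one (by positivity)]; linarith
  have hβ₀ : 0 ≤ β := by positivity
  have hβ₁ : β ≤ 1 := by rw [div_le_one (by positivity)]; linarith
  have hc₀ : 0 ≤ c := by positivity
  have hc : c ≤ 1 / 10 := by rw [div_le_iff₀ hT₀]; linarith
  have hx₀ : 0 ≤ x := by positivity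
  have hx₁ : x ≤ 1 := by rw [div_le_one hT₀]; nlinarith
  have hγ₁ : (1 - x) ^ 2 ≤ 1 := by nlinarith
  have hγ : |1 - (1 - x) ^ 2| ≤ 2 * x := by
    rw [abs_of_nonneg (by nlinarith)]; nlinarith
  have hP₀ := abs_P_le_one ht m
  have hp₁ : |p T (m + 1) t| ≤ 1 + |e₁| := by
    calc |p T (m + 1) t| = |P (m + 1) t + e₁| := by rw [add_sub_cancel]
      _ ≤ 1 + |e₁| := (abs_add_le _ _).trans (by gcongr; exact abs_P_le_one ht _)
  rw [hrec]
  calc _ ≤ |2 * α * t * e₁| + |α * c * p T (m + 1) t| + |(1 - x) ^ 2 * β * e₀| +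
        |(1 - (1 - x) ^ 2) * β * P m t| := by
        refine (abs_add_le _ _).trans (add_le_add_left ?_ _)
        exact (abs_sub _ _).trans (add_le_add_left (abs_add_le _ _) _)
    _ ≤ 2 * 1 * 1 * |e₁| + 1 * c * (1 + |e₁|) + 1 * 1 * |e₀| + 2 * x * 1 * 1 := by
        simp only [abs_mul, abs_two, abs_of_nonneg hα₀, abs_of_nonneg hβ₀, abs_of_nonneg hc₀,
          abs_of_nonneg (sq_nonneg (1 - x))]
        gcongr
    _ ≤ _ := by
        have : c + 2 * x = (4 * M ^ 2 + 2 * M + 1) / (T : ℝ) ^ 2 := by ring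
        nlinarith [mul_le_mul_of_nonneg_right hc (abs_nonneg e₁)]

theorem quadratic_le_four_pow (m : ℕ) :
    4 * ((m : ℝ) + 1) ^ 2 + 2 * ((m : ℝ) + 1) + 1 ≤ 99 / 10 * 4 ^ m := by
  induction m with
  | zero => norm_num
  | succ m ih =>
    push_cast
    rw [pow_succ (4 : ℝ)]
    nlinarith [m.cast_nonneg (α := ℝ)]

theorem stmt14_general (n T : ℕ)
    (h : (1 : ℝ) + 2 * n + 2 * (n : ℝ) ^ 2 < (T : ℝ) ^ 2 / 10) :
    ∀ t : ℝ, -1 ≤ t → t ≤ 1 →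
      |p T n t - P n t| ≤ (3 / 2) * 4 ^ n / (T : ℝ) ^ 2 := by
  intro t ht₁ ht₂
  have ht : |t| ≤ 1 := abs_le.mpr ⟨ht₁, ht₂⟩
  have hT : 0 < (T : ℝ) ^ 2 := by nlinarith
  induction n using P.induct with
  | case1 => simp [p, P]; positivity
  | case2 =>
    simp only [p, P, add_sub_cancel_left, abs_of_pos (by positivity : 0 < 1 / (2 * (T : ℝ) ^ 2))]
    rw [div_le_div_iff₀ (by positivity) hT]
    linarith
  | case3 m ih₁ ih₀ =>
    push_cast at h ih₁ ih₀ ⊢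
    calc _ ≤ 21 / 10 * |p T (m + 1) t - P (m + 1) t| + |p T m t - P m t| +
          (4 * ((m : ℝ) + 1) ^ 2 + 2 * ((m : ℝ) + 1) + 1) / (T : ℝ) ^ 2 :=
          abs_p_sub_P_add_two_le T m ht (by nlinarith)
      _ ≤ 21 / 10 * (3 / 2 * 4 ^ (m + 1) / (T : ℝ) ^ 2) + 3 / 2 * 4 ^ m / (T : ℝ) ^ 2 +
          99 / 10 * 4 ^ m / (T : ℝ) ^ 2 := by
          gcongr
          exacts [ih₁ (by nlinarith), ih₀ (by nlinarith), quadratic_le_four_pow m]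
      _ = 3 / 2 * 4 ^ (m + 2) / (T : ℝ) ^ 2 := by ring

theorem stmt14 (n T : ℕ) (hn : 1 ≤ n) (hT : 1 ≤ T)
    (h : (1 : ℝ) + 2 * n + 2 * (n : ℝ) ^ 2 < (T : ℝ) ^ 2 / 10) :
    ∀ t : ℝ, -1 ≤ t → t ≤ 1 →
      |p T n t - P n t| ≤ (3 / 2) * 4 ^ n / (T : ℝ) ^ 2 :=
  stmt14_general n T h
end

section
/- Let T ≥ 90 be an integer and n ≥ 0 an integer with n < log T (natural logarithm). Then for all real t with −1 ≤ t ≤ 1, one has |p_n(t) − P_n(t)| ≤ 1/10. -/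
noncomputable def Pb : ℕ → ℝ
  | 0 => 1
  | 1 => 1
  | n + 2 => ((2*(n:ℝ)+3) * Pb (n+1) + ((n:ℝ)+1) * Pb n) / ((n:ℝ)+2)

noncomputable def v : ℕ → ℝ
  | 0 => 0
  | 1 => 1/2
  | n + 2 => ((2*((n:ℝ)+1)+1)/((n:ℝ)+2)) * ((161/160) * v (n+1)
      + (2*((n:ℝ)+1)^2 + 2*((n:ℝ)+1) + 1)/2 * Pb (n+1))
      + (((n:ℝ)+1)/((n:ℝ)+2)) * (v n + 2*((n:ℝ)+1)^2 * Pb n)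

lemma Pb_succ (n : ℕ) : Pb (n+2) = ((2*(n:ℝ)+3) * Pb (n+1) + ((n:ℝ)+1) * Pb n) / ((n:ℝ)+2) := rfl
lemma v_succ (n : ℕ) : v (n+2) = ((2*((n:ℝ)+1)+1)/((n:ℝ)+2)) * ((161/160) * v (n+1)
      + (2*((n:ℝ)+1)^2 + 2*((n:ℝ)+1) + 1)/2 * Pb (n+1))
      + (((n:ℝ)+1)/((n:ℝ)+2)) * (v n + 2*((n:ℝ)+1)^2 * Pb n) := rfl
lemma P_succ (n : ℕ) (t : ℝ) : P (n+2) t =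
    ((2 * (n : ℝ) + 3) * t * P (n + 1) t - ((n : ℝ) + 1) * P n t) / ((n : ℝ) + 2) := rfl
lemma p_succ (T n : ℕ) (t : ℝ) : p T (n+2) t =
    ((2 * ((n : ℝ) + 1) + 1) / ((n : ℝ) + 2)) *
        ((t + (2 * ((n : ℝ) + 1) ^ 2 + 2 * ((n : ℝ) + 1) + 1) / (2 * (T : ℝ) ^ 2)) *
          p T (n + 1) t)
      - (1 - ((n : ℝ) + 1) ^ 2 / (T : ℝ) ^ 2) ^ 2 * (((n : ℝ) + 1) / ((n : ℝ) + 2)) * p T n t := rfl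

lemma two_step {Q : ℕ → Prop} (h0 : Q 0) (h1 : Q 1)
    (h : ∀ n, Q n → Q (n+1) → Q (n+2)) : ∀ n, Q n := by
  have key : ∀ n, Q n ∧ Q (n+1) := by
    intro n
    induction n with
    | zero => exact ⟨h0, h1⟩
    | succ k ih => exact ⟨ih.2, h k ih.1 ih.2⟩
  exact fun n => (key n).1

lemma Pb_nonneg : ∀ n, 0 ≤ Pb n := by
  refine two_step (by norm_num [Pb]) (by norm_num [Pb]) (fun n ih1 ih2 => ?_)
  rw [Pb_succ]
  have h1 : (0:ℝ) ≤ 2*(n:ℝ)+3 := by positivity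
  have h2 : (0:ℝ) ≤ (n:ℝ)+1 := by positivity
  positivity

lemma v_nonneg : ∀ n, 0 ≤ v n := by
  refine two_step (by norm_num [v]) (by norm_num [v]) (fun n ih1 ih2 => ?_)
  rw [v_succ]
  refine add_nonneg (mul_nonneg (by positivity) (add_nonneg (mul_nonneg (by norm_num) ih2)
    (mul_nonneg (by positivity) (Pb_nonneg _))))
    (mul_nonneg (by positivity) (add_nonneg ih1 (mul_nonneg (by positivity) (Pb_nonneg _))))

lemma Pb_le_geom : ∀ n, Pb n ≤ (5/2:ℝ)^n := by
  refine two_step (by norm_num [Pb]) (by norm_num [Pb]) (fun n ih1 ih2 => ?_)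
  rw [Pb_succ, div_le_iff₀ (by positivity : (0:ℝ) < (n:ℝ)+2)]
  have hp : (0:ℝ) ≤ (5/2:ℝ)^n := by positivity
  have e1 : (2*(n:ℝ)+3) * Pb (n+1) ≤ (2*(n:ℝ)+3) * ((5/2:ℝ)^(n+1)) :=
    mul_le_mul_of_nonneg_left ih2 (by positivity)
  have e2 : ((n:ℝ)+1) * Pb n ≤ ((n:ℝ)+1) * ((5/2:ℝ)^n) :=
    mul_le_mul_of_nonneg_left ih1 (by positivity)
  have h1 : (5/2:ℝ)^(n+1) = (5/2:ℝ)^n * (5/2) := pow_succ _ _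
  have h2 : (5/2:ℝ)^(n+2) = (5/2:ℝ)^n * (5/2) * (5/2) := by rw [pow_succ, pow_succ]
  nlinarith [e1, e2, hp]

lemma abs_P_le (t : ℝ) (ht1 : -1 ≤ t) (ht2 : t ≤ 1) : ∀ n, |P n t| ≤ Pb n := by
  have ht : |t| ≤ 1 := abs_le.mpr ⟨ht1, ht2⟩
  refine two_step (by norm_num [P, Pb]) (by simpa [P, Pb] using ht) (fun n ih1 ih2 => ?_)
  rw [P_succ, Pb_succ, abs_div, abs_of_pos (by positivity : (0:ℝ) < (n:ℝ)+2)]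
  gcongr ?_ / _
  calc |(2 * (n:ℝ) + 3) * t * P (n + 1) t - ((n:ℝ) + 1) * P n t|
      ≤ |(2 * (n:ℝ) + 3) * t * P (n + 1) t| + |((n:ℝ) + 1) * P n t| := abs_sub _ _
    _ = (2 * (n:ℝ) + 3) * (|t| * |P (n + 1) t|) + ((n:ℝ) + 1) * |P n t| := by
        rw [abs_mul, abs_mul, abs_mul, abs_of_nonneg (by positivity : (0:ℝ) ≤ 2*(n:ℝ)+3),
          abs_of_nonneg (by positivity : (0:ℝ) ≤ (n:ℝ)+1)]
        ring
    _ ≤ (2 * (n:ℝ) + 3) * (1 * Pb (n + 1)) + ((n:ℝ) + 1) * Pb n := by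
        gcongr <;> first | exact ht | exact ih2 | exact ih1 | positivity
    _ = (2 * (n:ℝ) + 3) * Pb (n + 1) + ((n:ℝ) + 1) * Pb n := by ring

lemma Pb_val0 : Pb 0 = 1 := rfl

lemma Pb_val1 : Pb 1 = 1 := rfl

lemma Pb_val2 : Pb 2 = (2 : ℝ) := by
  have h := Pb_succ 0
  norm_num [Pb_val1, Pb_val0] at h
  linarith

lemma Pb_val3 : Pb 3 = (4 : ℝ) := by
  have h := Pb_succ 1
  norm_num [Pb_val2, Pb_val1] at h
  linarith

lemma Pb_val4 : Pb 4 = ((17 : ℝ)/2) := by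
  have h := Pb_succ 2
  norm_num [Pb_val3, Pb_val2] at h
  linarith

lemma Pb_val5 : Pb 5 = ((37 : ℝ)/2) := by
  have h := Pb_succ 3
  norm_num [Pb_val4, Pb_val3] at h
  linarith

lemma Pb_val6 : Pb 6 = (41 : ℝ) := by
  have h := Pb_succ 4
  norm_num [Pb_val5, Pb_val4] at h
  linarith

lemma Pb_val7 : Pb 7 = (92 : ℝ) := by
  have h := Pb_succ 5
  norm_num [Pb_val6, Pb_val5] at h
  linarith

lemma Pb_val8 : Pb 8 = ((1667 : ℝ)/8) := by
  have h := Pb_succ 6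
  norm_num [Pb_val7, Pb_val6] at h
  linarith

lemma Pb_val9 : Pb 9 = ((3803 : ℝ)/8) := by
  have h := Pb_succ 7
  norm_num [Pb_val8, Pb_val7] at h
  linarith

lemma Pb_val10 : Pb 10 = ((4363 : ℝ)/4) := by
  have h := Pb_succ 8
  norm_num [Pb_val9, Pb_val8] at h
  linarith

lemma v_val0 : v 0 = 0 := rfl

lemma v_val1 : v 1 = 1/2 := rfl

lemma v_val2 : v 2 = ((3523 : ℝ)/640) := by
  have h := v_succ 0
  norm_num [v_val1, v_val0, Pb_val1, Pb_val0] at h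
  linarith

lemma v_val3 : v 3 = ((2246563 : ℝ)/61440) := by
  have h := v_succ 1
  norm_num [v_val2, v_val1, Pb_val2, Pb_val1] at h
  linarith

lemma v_val4 : v 4 = ((7196539541 : ℝ)/39321600) := by
  have h := v_succ 2
  norm_num [v_val3, v_val2, Pb_val3, Pb_val2] at h
  linarith

lemma v_val5 : v 5 = ((24435779343709 : ℝ)/31457280000) := by
  have h := v_succ 3
  norm_num [v_val4, v_val3, Pb_val4, Pb_val3] at h
  linarith

lemma v_val6 : v 6 = ((29938873782116213 : ℝ)/10066329600000) := by
  have h := v_succ 4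
  norm_num [v_val5, v_val4, Pb_val5, Pb_val4] at h
  linarith

lemma v_val7 : v 7 = ((119525156228708638609 : ℝ)/11274289152000000) := by
  have h := v_succ 5
  norm_num [v_val6, v_val5, Pb_val6, Pb_val5] at h
  linarith

lemma v_val8 : v 8 = ((14788391218968933137941 : ℝ)/412316860416000000) := by
  have h := v_succ 6
  norm_num [v_val7, v_val6, Pb_val7, Pb_val6] at h
  linarith

lemma v_val9 : v 9 = ((53844526128559735738800971 : ℝ)/461794883665920000000) := by
  have h := v_succ 7
  norm_num [v_val8, v_val7, Pb_val8, Pb_val7] at h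
  linarith

lemma v_val10 : v 10 = ((38772109306146834591237630727 : ℝ)/105553116266496000000000) := by
  have h := v_succ 8
  norm_num [v_val9, v_val8, Pb_val9, Pb_val8] at h
  linarith
lemma aux_pow : ∀ n : ℕ, 9 ≤ n → 140*((n:ℝ)+2)^2*(5/2:ℝ)^n ≤ 417*(4:ℝ)^n := by
  intro n hn
  obtain ⟨k, rfl⟩ : ∃ k, n = k + 9 := ⟨n - 9, by omega⟩
  clear hn
  induction k with
  | zero => norm_num
  | succ m ih =>
    have e5 : ((5:ℝ)/2)^(m+1+9) = (5/2:ℝ)^(m+9) * (5/2) := by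
      rw [show m+1+9 = (m+9)+1 from rfl, pow_succ ((5:ℝ)/2) (m+9)]
    have e4 : ((4:ℝ))^(m+1+9) = (4:ℝ)^(m+9) * 4 := by
      rw [show m+1+9 = (m+9)+1 from rfl, pow_succ (4:ℝ) (m+9)]
    rw [e5, e4]
    have hy : (0:ℝ) ≤ (5/2:ℝ)^(m+9) := by positivity
    have hm0 : (0:ℝ) ≤ (m:ℝ) := Nat.cast_nonneg m
    have h5 : (5/2:ℝ) * ((↑(m+1):ℝ)+9+2)^2 ≤ 4 * ((↑m:ℝ)+9+2)^2 := by
      push_cast; nlinarith [hm0, sq_nonneg ((m:ℝ))]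
    have h6 := mul_le_mul_of_nonneg_right h5 hy
    push_cast at ih h6 ⊢
    nlinarith [ih, h6, hy]

set_option maxHeartbeats 1000000 in
lemma v_step (n : ℕ) (hn9 : 9 ≤ n) (hv0 : v n ≤ 3*(4:ℝ)^n) (hv1 : v (n+1) ≤ 3*(4:ℝ)^(n+1)) :
    v (n+2) ≤ 3*(4:ℝ)^(n+2) := by
  rw [v_succ]
  have hb1 : Pb (n+1) ≤ (5/2:ℝ)^(n+1) := Pb_le_geom _
  have hb0 : Pb n ≤ (5/2:ℝ)^n := Pb_le_geom _
  have aux := aux_pow n hn9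
  have hz : (0:ℝ) ≤ (4:ℝ)^n := by positivity
  have hy : (0:ℝ) ≤ (5/2:ℝ)^n := by positivity
  have hn0 : (0:ℝ) ≤ (n:ℝ) := Nat.cast_nonneg n
  have hq1 : (2*((n:ℝ)+1)^2 + 2*((n:ℝ)+1) + 1)/2 ≤ ((n:ℝ)+2)^2 := by nlinarith [hn0]
  have hq1' : (0:ℝ) ≤ (2*((n:ℝ)+1)^2 + 2*((n:ℝ)+1) + 1)/2 := by positivity
  have hS1 : (161/160) * v (n+1) + (2*((n:ℝ)+1)^2 + 2*((n:ℝ)+1) + 1)/2 * Pb (n+1)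
      ≤ (161/160)*(3*(4:ℝ)^(n+1)) + ((n:ℝ)+2)^2 * (5/2:ℝ)^(n+1) := by
    have := mul_le_mul hq1 hb1 (Pb_nonneg _) (by positivity)
    nlinarith [hv1]
  have hS2 : v n + 2*((n:ℝ)+1)^2 * Pb n ≤ 3*(4:ℝ)^n + 2*((n:ℝ)+1)^2 * (5/2:ℝ)^n := by
    have := mul_le_mul_of_nonneg_left hb0 (by positivity : (0:ℝ) ≤ 2*((n:ℝ)+1)^2)
    linarith
  have hS1' : 0 ≤ (161/160) * v (n+1) + (2*((n:ℝ)+1)^2 + 2*((n:ℝ)+1) + 1)/2 * Pb (n+1) :=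
    add_nonneg (mul_nonneg (by norm_num) (v_nonneg _)) (mul_nonneg hq1' (Pb_nonneg _))
  have hS2' : 0 ≤ v n + 2*((n:ℝ)+1)^2 * Pb n :=
    add_nonneg (v_nonneg _) (mul_nonneg (by positivity) (Pb_nonneg _))
  have hco1 : (2*((n:ℝ)+1)+1)/((n:ℝ)+2) ≤ 2 := by
    rw [div_le_iff₀ (by positivity : (0:ℝ) < (n:ℝ)+2)]; linarith
  have hco2 : ((n:ℝ)+1)/((n:ℝ)+2) ≤ 1 := by
    rw [div_le_one (by positivity : (0:ℝ) < (n:ℝ)+2)]; linarith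
  have e1 := mul_le_mul hco1 hS1 hS1' (by norm_num)
  have e2 := mul_le_mul hco2 hS2 hS2' (by norm_num)
  have hfin : 2 * ((161/160)*(3*(4:ℝ)^(n+1)) + ((n:ℝ)+2)^2 * (5/2:ℝ)^(n+1))
      + 1 * (3*(4:ℝ)^n + 2*((n:ℝ)+1)^2 * (5/2:ℝ)^n) ≤ 3*(4:ℝ)^(n+2) := by
    have e41 : (4:ℝ)^(n+1) = (4:ℝ)^n * 4 := pow_succ 4 n
    have e42 : (4:ℝ)^(n+2) = (4:ℝ)^n * 16 := by
      rw [show n+2 = (n+1)+1 from rfl, pow_succ (4:ℝ) (n+1), pow_succ (4:ℝ) n]; ring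
    have e51 : (5/2:ℝ)^(n+1) = (5/2:ℝ)^n * (5/2) := pow_succ _ n
    rw [e41, e42, e51]
    have h2 : 2*((n:ℝ)+1)^2 ≤ 2*((n:ℝ)+2)^2 := by nlinarith [hn0]
    have h2y := mul_le_mul_of_nonneg_right h2 hy
    linarith [aux, h2y, hy, hz]
  linarith

lemma v_geom : ∀ n : ℕ, 9 ≤ n → v n ≤ 3*(4:ℝ)^n := by
  have key : ∀ k : ℕ, v (k+9) ≤ 3*(4:ℝ)^(k+9) ∧ v (k+9+1) ≤ 3*(4:ℝ)^(k+9+1) := by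
    intro k
    induction k with
    | zero =>
      constructor
      · norm_num [v_val9]
      · norm_num [v_val10]
    | succ m ih =>
      obtain ⟨ih1, ih2⟩ := ih
      have h1 : m + 1 + 9 = (m + 9) + 1 := by omega
      have h2 : m + 1 + 9 + 1 = (m + 9) + 2 := by omega
      rw [h1, h2]
      exact ⟨ih2, v_step (m+9) (by omega) ih1 ih2⟩
  intro n hn
  obtain ⟨k, rfl⟩ : ∃ k, n = k + 9 := ⟨n - 9, by omega⟩
  exact (key k).1

lemma pow_ineq : ∀ n : ℕ, 9 ≤ n → (30:ℝ)*(4:ℝ)^n ≤ (729/100:ℝ)^n := by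
  intro n hn
  obtain ⟨k, rfl⟩ : ∃ k, n = k + 9 := ⟨n - 9, by omega⟩
  clear hn
  induction k with
  | zero => norm_num
  | succ m ih =>
    rw [show m+1+9 = (m+9)+1 from rfl, pow_succ (4:ℝ) (m+9), pow_succ ((729:ℝ)/100) (m+9)]
    have hp : (0:ℝ) ≤ (729/100:ℝ)^(m+9) := by positivity
    nlinarith [ih, hp]

lemma v_le_pow : ∀ n : ℕ, 5 ≤ n → v n ≤ (729/100:ℝ)^n / 10 := by
  intro n hn
  by_cases h : n ≤ 8
  · interval_cases n
    · rw [v_val5]; norm_num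
    · rw [v_val6]; norm_num
    · rw [v_val7]; norm_num
    · rw [v_val8]; norm_num
  · have h9 : 9 ≤ n := by omega
    have h1 := v_geom n h9
    have h2 := pow_ineq n h9
    linarith

set_option maxHeartbeats 1000000 in
lemma main (T : ℕ) (hT : 90 ≤ T) (t : ℝ) (ht1 : -1 ≤ t) (ht2 : t ≤ 1) :
    ∀ n : ℕ, (n:ℝ) < Real.log T → |p T n t - P n t| ≤ v n / (T:ℝ)^2 := by
  have hTr : (90:ℝ) ≤ (T:ℝ) := by exact_mod_cast hT
  have hT0 : (0:ℝ) < (T:ℝ) := by linarith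
  have hT2pos : (0:ℝ) < (T:ℝ)^2 := by positivity
  have hTne : (T:ℝ) ≠ 0 := ne_of_gt hT0
  have ht : |t| ≤ 1 := abs_le.mpr ⟨ht1, ht2⟩
  -- log T ≤ 2√T/e
  have hs0 : (0:ℝ) < Real.sqrt (T:ℝ) := Real.sqrt_pos.mpr hT0
  have hlogle : Real.log (T:ℝ) * Real.exp 1 ≤ 2 * Real.sqrt (T:ℝ) := by
    have h1 : Real.log (Real.sqrt (T:ℝ) / Real.exp 1) ≤ Real.sqrt (T:ℝ)/Real.exp 1 - 1 :=
      Real.log_le_sub_one_of_pos (by positivity)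
    rw [Real.log_div (ne_of_gt hs0) (Real.exp_ne_zero 1), Real.log_exp] at h1
    have h2 : Real.log (T:ℝ) = 2 * Real.log (Real.sqrt (T:ℝ)) := by
      rw [Real.log_sqrt (le_of_lt hT0)]; ring
    have h1' : Real.log (Real.sqrt (T:ℝ)) * Real.exp 1 ≤ Real.sqrt (T:ℝ) := by
      have h5 := mul_le_mul_of_nonneg_right
        (show Real.log (Real.sqrt (T:ℝ)) ≤ Real.sqrt (T:ℝ)/Real.exp 1 by linarith)
        (le_of_lt (Real.exp_pos 1))
      rwa [div_mul_cancel₀ _ (Real.exp_ne_zero 1)] at h5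
    rw [h2]
    linarith
  have hsq : Real.sqrt (T:ℝ) ^ 2 = (T:ℝ) := Real.sq_sqrt (le_of_lt hT0)
  have he : (2.7:ℝ) < Real.exp 1 := by have := Real.exp_one_gt_d9; linarith
  have he2 : (729/100:ℝ) ≤ Real.exp 1 ^ 2 := by nlinarith [he]
  refine two_step ?_ ?_ ?_
  · intro _
    rw [show p T 0 t = 1 from rfl, show P 0 t = 1 from rfl, show v 0 = (0:ℝ) from rfl]
    norm_num
  · intro _
    rw [show p T 1 t = t + 1/(2*(T:ℝ)^2) from rfl, show P 1 t = t from rfl,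
      show v 1 = (1/2:ℝ) from rfl]
    have h1 : t + 1/(2*(T:ℝ)^2) - t = 1/(2*(T:ℝ)^2) := by ring
    rw [h1, abs_of_nonneg (by positivity)]
    rw [div_div]
  · intro n ih1 ih2 h2
    have hc2 : ((n:ℝ)+2) < Real.log T := by push_cast at h2; linarith
    have e1 : |p T (n+1) t - P (n+1) t| ≤ v (n+1) / (T:ℝ)^2 := ih2 (by push_cast; linarith)
    have e0 : |p T n t - P n t| ≤ v n / (T:ℝ)^2 := ih1 (by linarith)
    have hn0 : (0:ℝ) ≤ (n:ℝ) := Nat.cast_nonneg n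
    -- (n+2)·e ≤ 2√T and its consequences
    have hl2 : ((n:ℝ)+2) * Real.exp 1 ≤ 2 * Real.sqrt (T:ℝ) := by
      have h3 := mul_le_mul_of_nonneg_right (le_of_lt hc2) (le_of_lt (Real.exp_pos 1))
      linarith
    have hl2sq : (((n:ℝ)+2) * Real.exp 1) * (((n:ℝ)+2) * Real.exp 1)
        ≤ (2*Real.sqrt (T:ℝ))*(2*Real.sqrt (T:ℝ)) :=
      mul_le_mul hl2 hl2 (by positivity) (by positivity)
    have hTn : ((n:ℝ)+2)^2 * (729/100) ≤ 4 * (T:ℝ) := by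
      nlinarith [hl2sq, he2, hsq, sq_nonneg ((n:ℝ)+2), Real.exp_pos 1, hn0]
    have hc0 : (0:ℝ) ≤ (2*((n:ℝ)+1)^2 + 2*((n:ℝ)+1) + 1) / (2*(T:ℝ)^2) := by positivity
    have hcle : (2*((n:ℝ)+1)^2 + 2*((n:ℝ)+1) + 1) / (2*(T:ℝ)^2) ≤ 1/160 := by
      rw [div_le_iff₀ (by positivity : (0:ℝ) < 2*(T:ℝ)^2)]
      nlinarith [hTn, hTr, hn0, sq_nonneg ((T:ℝ) - 90)]
    set c : ℝ := (2*((n:ℝ)+1)^2 + 2*((n:ℝ)+1) + 1) / (2*(T:ℝ)^2) with hc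
    set X : ℝ := ((n:ℝ)+1)^2/(T:ℝ)^2 with hX
    have hx0 : 0 ≤ X := by positivity
    have hx1 : X ≤ 1 := by
      rw [hX, div_le_one hT2pos]; nlinarith [hTn, hTr, hn0]
    have hg0 : (0:ℝ) ≤ (1 - X)^2 := sq_nonneg _
    have hg1 : (1 - X)^2 ≤ 1 := by nlinarith [hx0, hx1]
    have hgd : |(1 - X)^2 - 1| ≤ 2*X := by
      rw [abs_le]; constructor <;> nlinarith [hx0, hx1]
    -- the key identity
    have hid : p T (n+2) t - P (n+2) t =
        ((2*((n:ℝ)+1)+1)/((n:ℝ)+2)) * ((t + c) * (p T (n+1) t - P (n+1) t) + c * P (n+1) t)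
        - (((n:ℝ)+1)/((n:ℝ)+2)) * ((1 - X)^2 * (p T n t - P n t)
            + ((1 - X)^2 - 1) * P n t) := by
      rw [p_succ, P_succ, hc, hX]
      have hn2ne : ((n:ℝ)+2) ≠ 0 := by positivity
      field_simp
      ring
    have htc : |t + c| ≤ 161/160 := by
      have h5 : |t + c| ≤ |t| + |c| := abs_add_le _ _
      rw [abs_of_nonneg hc0] at h5
      linarith
    have hP1 := abs_P_le t ht1 ht2 (n+1)
    have hP0 := abs_P_le t ht1 ht2 n
    have hA1 : |(t + c) * (p T (n+1) t - P (n+1) t) + c * P (n+1) t|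
        ≤ (161/160) * (v (n+1)/(T:ℝ)^2) + c * Pb (n+1) := by
      calc |(t + c) * (p T (n+1) t - P (n+1) t) + c * P (n+1) t|
          ≤ |(t + c) * (p T (n+1) t - P (n+1) t)| + |c * P (n+1) t| := abs_add_le _ _
        _ = |t + c| * |p T (n+1) t - P (n+1) t| + c * |P (n+1) t| := by
            rw [abs_mul, abs_mul, abs_of_nonneg hc0]
        _ ≤ (161/160) * (v (n+1)/(T:ℝ)^2) + c * Pb (n+1) :=
            add_le_add (mul_le_mul htc e1 (abs_nonneg _) (by norm_num))
              (mul_le_mul_of_nonneg_left hP1 hc0)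
    have hA2 : |(1 - X)^2 * (p T n t - P n t) + ((1 - X)^2 - 1) * P n t|
        ≤ v n/(T:ℝ)^2 + (2*X) * Pb n := by
      have hg1' : |(1 - X)^2| ≤ 1 := by rw [abs_of_nonneg hg0]; exact hg1
      calc |(1 - X)^2 * (p T n t - P n t) + ((1 - X)^2 - 1) * P n t|
          ≤ |(1 - X)^2 * (p T n t - P n t)| + |((1 - X)^2 - 1) * P n t| := abs_add_le _ _
        _ = |(1 - X)^2| * |p T n t - P n t| + |(1 - X)^2 - 1| * |P n t| := by
            rw [abs_mul, abs_mul]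
        _ ≤ 1 * (v n/(T:ℝ)^2) + (2*X) * Pb n := by
            refine add_le_add (mul_le_mul hg1' e0 (abs_nonneg _) (by norm_num)) ?_
            exact mul_le_mul hgd hP0 (abs_nonneg _) (by positivity)
        _ = v n/(T:ℝ)^2 + (2*X) * Pb n := by ring
    have hco1' : (0:ℝ) ≤ (2*((n:ℝ)+1)+1)/((n:ℝ)+2) := by positivity
    have hco2' : (0:ℝ) ≤ ((n:ℝ)+1)/((n:ℝ)+2) := by positivity
    calc |p T (n+2) t - P (n+2) t|
        = |((2*((n:ℝ)+1)+1)/((n:ℝ)+2)) * ((t + c) * (p T (n+1) t - P (n+1) t) + c * P (n+1) t)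
          - (((n:ℝ)+1)/((n:ℝ)+2)) * ((1 - X)^2 * (p T n t - P n t)
              + ((1 - X)^2 - 1) * P n t)| := by rw [hid]
      _ ≤ |((2*((n:ℝ)+1)+1)/((n:ℝ)+2)) * ((t + c) * (p T (n+1) t - P (n+1) t) + c * P (n+1) t)|
          + |(((n:ℝ)+1)/((n:ℝ)+2)) * ((1 - X)^2 * (p T n t - P n t)
              + ((1 - X)^2 - 1) * P n t)| := abs_sub _ _
      _ = ((2*((n:ℝ)+1)+1)/((n:ℝ)+2)) * |(t + c) * (p T (n+1) t - P (n+1) t) + c * P (n+1) t|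
          + (((n:ℝ)+1)/((n:ℝ)+2)) * |(1 - X)^2 * (p T n t - P n t)
              + ((1 - X)^2 - 1) * P n t| := by
            rw [abs_mul, abs_mul, abs_of_nonneg hco1', abs_of_nonneg hco2']
      _ ≤ ((2*((n:ℝ)+1)+1)/((n:ℝ)+2)) * ((161/160) * (v (n+1)/(T:ℝ)^2) + c * Pb (n+1))
          + (((n:ℝ)+1)/((n:ℝ)+2)) * (v n/(T:ℝ)^2 + (2*X) * Pb n) :=
            add_le_add (mul_le_mul_of_nonneg_left hA1 hco1')
              (mul_le_mul_of_nonneg_left hA2 hco2')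
      _ = v (n+2) / (T:ℝ)^2 := by
            rw [v_succ, hc, hX]
            have hn2ne : ((n:ℝ)+2) ≠ 0 := by positivity
            field_simp

theorem stmt15 (T n : ℕ) (hT : 90 ≤ T) (hn : (n : ℝ) < Real.log T) :
    ∀ t : ℝ, -1 ≤ t → t ≤ 1 → |p T n t - P n t| ≤ 1 / 10 := by
  intro t ht1 ht2
  have hTr : (90:ℝ) ≤ (T:ℝ) := by exact_mod_cast hT
  have hT0 : (0:ℝ) < (T:ℝ) := by linarith
  have hT2pos : (0:ℝ) < (T:ℝ)^2 := by positivity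
  have h := main T hT t ht1 ht2 n hn
  have hv : v n ≤ (T:ℝ)^2 / 10 := by
    by_cases hsmall : n ≤ 4
    · have h810 : v n ≤ 810 := by
        interval_cases n
        · rw [v_val0]; norm_num
        · rw [v_val1]; norm_num
        · rw [v_val2]; norm_num
        · rw [v_val3]; norm_num
        · rw [v_val4]; norm_num
      nlinarith [hTr]
    · have h5 : 5 ≤ n := by omega
      have h1 := v_le_pow n h5
      have he : (2.7:ℝ) < Real.exp 1 := by have := Real.exp_one_gt_d9; linarith
      have he2 : (729/100:ℝ) ≤ Real.exp 1 ^ 2 := by nlinarith [he]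
      have h2 : (729/100:ℝ)^n ≤ (Real.exp 1 ^ 2)^n := pow_le_pow_left₀ (by norm_num) he2 n
      have h3 : (Real.exp 1 ^ 2)^n = (Real.exp (n:ℝ))^2 := by
        rw [← pow_mul, Nat.mul_comm, pow_mul, Real.exp_one_pow]
      have h4 : Real.exp (n:ℝ) < (T:ℝ) := by
        have h6 := Real.exp_lt_exp.mpr hn
        rwa [Real.exp_log hT0] at h6
      have h5' : (Real.exp (n:ℝ))^2 ≤ (T:ℝ)^2 := by
        nlinarith [Real.exp_pos ((n:ℝ)), h4]
      rw [h3] at h2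
      linarith
  calc |p T n t - P n t| ≤ v n / (T:ℝ)^2 := h
    _ ≤ ((T:ℝ)^2/10) / (T:ℝ)^2 := by gcongr
    _ = 1/10 := by field_simp
end

section
/- Let n ≥ 2 be an integer and t a real number with |t| ≤ 0.9. Then |P_n(t)| ≤ 3/4. -/
/-- A Lyapunov function for the Legendre recurrence. -/
noncomputable def E (n : ℕ) (t : ℝ) : ℝ :=
  P (n+1) t ^ 2 - 2 * t * P n t * P (n+1) t + P n t ^ 2

lemma E_step (n : ℕ) (t : ℝ) : E (n+1) t ≤ E n t := by
  have hn : (0:ℝ) < (n:ℝ) + 2 := by positivity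
  have key : E n t - E (n+1) t
      = (2*(n:ℝ)+3)/((n:ℝ)+2)^2 * (t * P (n+1) t - P n t)^2 := by
    simp only [E]
    have h : P (n+2) t
        = ((2 * (n : ℝ) + 3) * t * P (n + 1) t - ((n : ℝ) + 1) * P n t) / ((n : ℝ) + 2) := rfl
    rw [h]
    field_simp
    ring
  have c0 : (0:ℝ) ≤ (2*(n:ℝ)+3)/((n:ℝ)+2)^2 * (t * P (n+1) t - P n t)^2 := by positivity
  linarith

lemma E_mono (t : ℝ) {m n : ℕ} (h : m ≤ n) : E n t ≤ E m t := by
  induction n with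
  | zero => simp_all
  | succ k ih =>
    rcases Nat.lt_or_ge m (k+1) with h' | h'
    · exact (E_step k t).trans (ih (Nat.lt_succ_iff.mp h'))
    · have : m = k + 1 := le_antisymm h h'
      subst this; rfl

lemma sq_le_E (n : ℕ) (t : ℝ) : (1 - t^2) * P n t ^ 2 ≤ E n t := by
  have h := sq_nonneg (P (n+1) t - t * P n t)
  simp only [E]
  nlinarith

lemma E4_le (t : ℝ) (ht2 : t^2 ≤ 81/100) : E 4 t ≤ 9/16 * (1 - t^2) := by
  have h4 : E 4 t = 9/64 - 45/64*t^2 + 165/32*t^4 - 469/32*t^6 + 1085/64*t^8 - 441/64*t^10 := by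
    norm_num [E, P]; ring
  rw [h4]
  nlinarith [sq_nonneg t, sq_nonneg (t^2), sq_nonneg (t^3), sq_nonneg (t^4), sq_nonneg (t^5),
    mul_nonneg (sq_nonneg (t^2)) (sub_nonneg.mpr ht2),
    mul_nonneg (mul_nonneg (sq_nonneg (t^2)) (sq_nonneg t)) (sub_nonneg.mpr ht2),
    mul_nonneg (mul_nonneg (sq_nonneg (t^3)) (sq_nonneg t)) (sub_nonneg.mpr ht2),
    sq_nonneg (t^4 - t^2), sq_nonneg (t^3 - t)]

theorem stmt16 (n : ℕ) (hn : 2 ≤ n) (t : ℝ) (ht : |t| ≤ 0.9) :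
    |P n t| ≤ 3 / 4 := by
  have ht' := abs_le.mp ht
  have ht2 : t^2 ≤ 81/100 := by nlinarith [ht'.1, ht'.2]
  rcases Nat.lt_or_ge n 4 with h4 | h4
  · interval_cases n
    · have h2 : P 2 t = (3*t^2-1)/2 := by norm_num [P]; ring
      rw [h2, abs_le]; constructor <;> nlinarith [sq_nonneg t]
    · have h3 : P 3 t = (5*t^3-3*t)/2 := by norm_num [P]; ring
      rw [h3, abs_le]
      constructor <;> nlinarith [sq_nonneg (t - 1/2), sq_nonneg (t + 1/2), sq_nonneg t,
        mul_nonneg (mul_nonneg (sub_nonneg.mpr ht'.1) (sub_nonneg.mpr ht'.1)) (sub_nonneg.mpr ht'.2),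
        mul_nonneg (mul_nonneg (sub_nonneg.mpr ht'.2) (sub_nonneg.mpr ht'.2)) (sub_nonneg.mpr ht'.1)]
  · have hE : E n t ≤ E 4 t := E_mono t h4
    have hs : (1:ℝ) - t^2 ≥ 19/100 := by linarith
    have h1 : (1 - t^2) * P n t ^ 2 ≤ 9/16 * (1 - t^2) :=
      (sq_le_E n t).trans (hE.trans (E4_le t ht2))
    have h2 : P n t ^ 2 ≤ 9/16 := by nlinarith
    have hsq := sq_abs (P n t)
    nlinarith [abs_nonneg (P n t)]
end

section
/- Let n ≥ 1 be an integer and θ a real number with 0 ≤ θ ≤ π. Then √(sin θ) · |P_n(cos θ)| < √(2/(π n)). -/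
open Polynomial Real Filter Topology Set

noncomputable def legendrePoly : ℕ → ℝ[X]
  | 0 => 1
  | 1 => X
  | n + 2 => C ((n + 2 : ℝ)⁻¹) *
      ((2 * (n : ℝ[X]) + 3) * X * legendrePoly (n + 1) - ((n : ℝ[X]) + 1) * legendrePoly n)

theorem legendrePoly_add_two (n : ℕ) :
    ((n : ℝ[X]) + 2) * legendrePoly (n + 2)
      = (2 * (n : ℝ[X]) + 3) * X * legendrePoly (n + 1) - ((n : ℝ[X]) + 1) * legendrePoly n := by
  have hC : (n : ℝ[X]) + 2 = C ((n : ℝ) + 2) := by rw [map_add, C_eq_natCast, map_ofNat]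
  rw [legendrePoly, hC, ← mul_assoc, ← C_mul, mul_inv_cancel₀ (by positivity), C_1, one_mul]

theorem P_eq_eval_legendrePoly (n : ℕ) (t : ℝ) : P n t = (legendrePoly n).eval t := by
  induction n using Nat.twoStepInduction with
  | zero => simp [P, legendrePoly]
  | one => simp [P, legendrePoly]
  | more n ih₀ ih₁ =>
    have h := congrArg (eval t) (legendrePoly_add_two n)
    simp only [eval_mul, eval_add, eval_sub, eval_natCast, eval_ofNat, eval_one, eval_X] at h
    dsimp only [P]
    rw [ih₀, ih₁, eq_comm, eq_div_iff (by positivity)]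
    linear_combination h

theorem legendrePoly_derivative_recurrences (n : ℕ) :
    derivative (legendrePoly (n + 1))
        = X * derivative (legendrePoly n) + ((n : ℝ[X]) + 1) * legendrePoly n ∧
      derivative (legendrePoly n)
        = X * derivative (legendrePoly (n + 1)) - ((n : ℝ[X]) + 1) * legendrePoly (n + 1) := by
  induction n with
  | zero => constructor <;> simp [legendrePoly]
  | succ n ih =>
    obtain ⟨ih₁, ih₂⟩ := ih
    have hrec := legendrePoly_add_two n
    have hrec' := congrArg derivative hrec
    simp only [derivative_mul, derivative_add, derivative_sub, derivative_X, derivative_natCast,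
      derivative_ofNat, derivative_one, zero_mul, mul_one, zero_add, add_zero, mul_zero] at hrec'
    have hn : (n : ℝ[X]) + 2 ≠ 0 := by
      rw [show (n : ℝ[X]) + 2 = C ((n : ℝ) + 2) by rw [map_add, C_eq_natCast, map_ofNat], Ne,
        C_eq_zero]
      positivity
    constructor
    · apply mul_left_cancel₀ hn
      push_cast
      linear_combination hrec' - ((n : ℝ[X]) + 1) * ih₂
    · apply mul_left_cancel₀ hn
      push_cast
      linear_combination ((n : ℝ[X]) + 2) * hrec - X * hrec'
        + ((n : ℝ[X]) + 2) * ih₁ + (2 * (n : ℝ[X]) + 3) * X * ih₂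

theorem legendrePoly_ode (n : ℕ) :
    (1 - X ^ 2) * derivative (derivative (legendrePoly n)) - 2 * X * derivative (legendrePoly n)
      + C ((n : ℝ) * (n + 1)) * legendrePoly n = 0 := by
  cases n with
  | zero => simp [legendrePoly]
  | succ n =>
    obtain ⟨h₁, h₂⟩ := legendrePoly_derivative_recurrences n
    have h := congrArg derivative (show (1 - X ^ 2) * derivative (legendrePoly (n + 1))
        = ((n : ℝ[X]) + 1) * (legendrePoly n - X * legendrePoly (n + 1)) by
      linear_combination h₁ + X * h₂)
    simp only [derivative_mul, derivative_add, derivative_sub, derivative_one, derivative_X,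
      derivative_X_sq, derivative_natCast, map_ofNat, zero_mul, one_mul, zero_add, add_zero,
      zero_sub] at h
    simp only [map_mul, map_add, map_natCast, map_one]
    push_cast
    linear_combination h + ((n : ℝ[X]) + 1) * h₂

theorem P_add_two_zero (n : ℕ) : ((n : ℝ) + 2) * P (n + 2) 0 = -(((n : ℝ) + 1) * P n 0) := by
  simp only [P, mul_zero, zero_mul, zero_sub]
  field_simp

noncomputable def centralBinomRatio (m : ℕ) : ℝ := m.centralBinom / 4 ^ m

theorem centralBinomRatio_succ (m : ℕ) :
    centralBinomRatio (m + 1) = centralBinomRatio m * (2 * m + 1) / (2 * m + 2) := by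
  have h : ((m : ℝ) + 1) * (m + 1).centralBinom = 2 * (2 * m + 1) * m.centralBinom := by
    exact_mod_cast Nat.succ_mul_centralBinom_succ m
  rw [centralBinomRatio, centralBinomRatio, pow_succ]
  field_simp
  linear_combination 2 * h

theorem P_two_mul_zero (m : ℕ) : P (2 * m) 0 = (-1) ^ m * centralBinomRatio m := by
  induction m with
  | zero => simp [P, centralBinomRatio]
  | succ m ih =>
    have h := P_add_two_zero (2 * m)
    rw [ih] at h
    push_cast at h
    rw [show 2 * (m + 1) = 2 * m + 2 by ring, centralBinomRatio_succ]
    apply mul_left_cancel₀ (show 2 * (m : ℝ) + 2 ≠ 0 by positivity)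
    field_simp
    linear_combination h

theorem P_two_mul_add_one_zero (m : ℕ) : P (2 * m + 1) 0 = 0 := by
  induction m with
  | zero => simp [P]
  | succ m ih =>
    have h := P_add_two_zero (2 * m + 1)
    rw [ih, mul_zero, neg_zero] at h
    exact (mul_eq_zero.mp h).resolve_left (by positivity)

theorem eval_zero_derivative_legendrePoly_succ (n : ℕ) :
    (derivative (legendrePoly (n + 1))).eval 0 = (n + 1) * P n 0 := by
  simpa [P_eq_eval_legendrePoly] using
    congrArg (eval 0) (legendrePoly_derivative_recurrences n).1

open Real.Wallis in
theorem centralBinomRatio_sq_mul_W (m : ℕ) : centralBinomRatio m ^ 2 * (2 * m + 1) * W m = 1 := by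
  induction m with
  | zero => simp [centralBinomRatio, W]
  | succ m ih =>
    refine Eq.trans ?_ ih
    rw [W_succ, centralBinomRatio_succ]
    push_cast
    field_simp
    ring

theorem tendsto_centralBinomRatio_sq_mul :
    Tendsto (fun m : ℕ => centralBinomRatio m ^ 2 * (m + 1 / 4)) atTop (𝓝 (1 / π)) := by
  have hW : Tendsto (fun m : ℕ => centralBinomRatio m ^ 2 * (2 * m + 1)) atTop (𝓝 (2 / π)) := by
    have h := Real.Wallis.tendsto_W_nhds_pi_div_two.inv₀ (by positivity)
    rw [inv_div] at h
    refine h.congr fun m => ?_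
    rw [eq_comm, ← mul_eq_one_iff_eq_inv₀ (Real.Wallis.W_pos m).ne']
    exact centralBinomRatio_sq_mul_W m
  have hinv : Tendsto (fun m : ℕ => (2 * (m : ℝ) + 1)⁻¹) atTop (𝓝 0) :=
    (tendsto_atTop_add_const_right _ 1
      (tendsto_natCast_atTop_atTop.const_mul_atTop two_pos)).inv_tendsto_atTop
  have h := (hW.div_const 2).sub ((hW.mul hinv).div_const 4)
  rw [mul_zero, zero_div, sub_zero, div_div, show (2 : ℝ) / (π * 2) = 1 / π by ring] at h
  refine h.congr fun m => ?_
  field_simp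
  ring

theorem strictMono_centralBinomRatio_sq_mul :
    StrictMono fun m : ℕ => centralBinomRatio m ^ 2 * (m + 1 / 4) := by
  refine strictMono_nat_of_lt_succ fun m => ?_
  have hc : 0 < centralBinomRatio m := by
    unfold centralBinomRatio; have := m.centralBinom_pos; positivity
  rw [centralBinomRatio_succ, div_pow, div_mul_eq_mul_div, lt_div_iff₀ (by positivity)]
  push_cast
  nlinarith [pow_pos hc 2]

theorem centralBinomRatio_sq_mul_lt (m : ℕ) : centralBinomRatio m ^ 2 * (m + 1 / 4) < 1 / π :=
  (strictMono_centralBinomRatio_sq_mul (Nat.lt_succ_self m)).trans_le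
    (strictMono_centralBinomRatio_sq_mul.monotone.ge_of_tendsto
      tendsto_centralBinomRatio_sq_mul (m + 1))

theorem HasDerivAt.sonin_energy {v v' q : ℝ → ℝ} {q' x : ℝ} (hv : HasDerivAt v (v' x) x)
    (hv' : HasDerivAt v' (-(q x * v x)) x) (hq : HasDerivAt q q' x) (hqx : q x ≠ 0) :
    HasDerivAt (fun y => v y ^ 2 + v' y ^ 2 / q y) (-(q' * v' x ^ 2) / q x ^ 2) x := by
  refine ((hv.pow 2).add ((hv'.pow 2).div hq hqx)).congr_deriv ?_
  simp only [Pi.pow_apply]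
  field_simp
  ring

theorem le_of_hasDerivAt_of_nonneg_of_nonpos {f f' : ℝ → ℝ} {a b c x : ℝ}
    (hf : ∀ y ∈ Ioo a b, HasDerivAt f (f' y) y) (hac : a < c) (hcb : c < b)
    (hleft : ∀ y ∈ Ioo a c, 0 ≤ f' y) (hright : ∀ y ∈ Ioo c b, f' y ≤ 0) (hx : x ∈ Ioo a b) :
    f x ≤ f c := by
  have hcont : ContinuousOn f (Ioo a b) := fun y hy => (hf y hy).continuousAt.continuousWithinAt
  rcases le_total x c with hxc | hcx
  · have hsub : Icc x c ⊆ Ioo a b := Icc_subset_Ioo hx.1 hcb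
    refine monotoneOn_of_hasDerivWithinAt_nonneg (f' := f') (convex_Icc x c) (hcont.mono hsub)
      (fun y hy => ?_) (fun y hy => ?_) ⟨le_rfl, hxc⟩ ⟨hxc, le_rfl⟩ hxc <;> rw [interior_Icc] at hy
    · exact (hf y (hsub (Ioo_subset_Icc_self hy))).hasDerivWithinAt
    · exact hleft y ⟨hx.1.trans hy.1, hy.2⟩
  · have hsub : Icc c x ⊆ Ioo a b := Icc_subset_Ioo hac hx.2
    refine antitoneOn_of_hasDerivWithinAt_nonpos (f' := f') (convex_Icc c x) (hcont.mono hsub)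
      (fun y hy => ?_) (fun y hy => ?_) ⟨le_rfl, hcx⟩ ⟨hcx, le_rfl⟩ hcx <;> rw [interior_Icc] at hy
    · exact (hf y (hsub (Ioo_subset_Icc_self hy))).hasDerivWithinAt
    · exact hright y ⟨hy.1, hy.2.trans hx.2⟩

section SoninEnergy

variable (p : ℝ[X]) (μ : ℝ)

noncomputable def liouvilleTransform (x : ℝ) : ℝ := √(sin x) * p.eval (cos x)

noncomputable def liouvilleTransformDeriv (x : ℝ) : ℝ :=
  cos x / (2 * √(sin x)) * p.eval (cos x) - √(sin x) * sin x * (derivative p).eval (cos x)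

noncomputable def soninWeight (x : ℝ) : ℝ := μ + 1 / 4 + 1 / (4 * sin x ^ 2)

noncomputable def soninEnergy (x : ℝ) : ℝ :=
  liouvilleTransform p x ^ 2 + liouvilleTransformDeriv p x ^ 2 / soninWeight μ x

variable {p μ}

theorem soninWeight_pos (hμ : 0 ≤ μ) (x : ℝ) : 0 < soninWeight μ x := by
  unfold soninWeight
  positivity

theorem hasDerivAt_soninWeight {x : ℝ} (hs : sin x ≠ 0) :
    HasDerivAt (soninWeight μ) (-cos x / (2 * sin x ^ 3)) x := by
  have h := ((hasDerivAt_const x (1 : ℝ)).div (((hasDerivAt_sin x).pow 2).const_mul 4)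
    (mul_ne_zero four_ne_zero (pow_ne_zero 2 hs))).const_add (μ + 1 / 4)
  refine h.congr_deriv ?_
  simp only [Pi.pow_apply]
  field_simp
  ring

theorem hasDerivAt_eval_comp_cos (x : ℝ) :
    HasDerivAt (fun y => p.eval (cos y)) (-sin x * (derivative p).eval (cos x)) x :=
  ((p.hasDerivAt (cos x)).comp x (hasDerivAt_cos x)).congr_deriv (mul_comm _ _)

theorem hasDerivAt_liouvilleTransform {x : ℝ} (hs : 0 < sin x) :
    HasDerivAt (liouvilleTransform p) (liouvilleTransformDeriv p x) x := by
  refine (((hasDerivAt_sin x).sqrt hs.ne').mul (hasDerivAt_eval_comp_cos x)).congr_deriv ?_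
  unfold liouvilleTransformDeriv
  ring

theorem hasDerivAt_liouvilleTransformDeriv
    (hp : (1 - X ^ 2) * derivative (derivative p) - 2 * X * derivative p + C μ * p = 0)
    {x : ℝ} (hs : 0 < sin x) :
    HasDerivAt (liouvilleTransformDeriv p) (-(soninWeight μ x * liouvilleTransform p x)) x := by
  set g := √(sin x) with hg_def
  have hg : g ^ 2 = sin x := sq_sqrt hs.le
  have hg0 : 0 < g := sqrt_pos.mpr hs
  have hsqrt := (hasDerivAt_sin x).sqrt hs.ne'
  have h := (((hasDerivAt_cos x).div (hsqrt.const_mul 2) (by positivity)).mul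
    (hasDerivAt_eval_comp_cos (p := p) x)).sub
      ((hsqrt.mul (hasDerivAt_sin x)).mul (hasDerivAt_eval_comp_cos (p := derivative p) x))
  refine h.congr_deriv ?_
  have hode := congrArg (eval (cos x)) hp
  simp only [eval_add, eval_sub, eval_mul, eval_one, eval_pow, eval_X, eval_C, eval_ofNat,
    eval_zero] at hode
  have pyth : (g ^ 2) ^ 2 = 1 - cos x ^ 2 := by rw [hg]; linarith [sin_sq_add_cos_sq x]
  simp only [Pi.mul_apply, Pi.div_apply, soninWeight, liouvilleTransform, ← hg_def]
  rw [← hg]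
  field_simp
  linear_combination 16 * g ^ 4 * (hode + (derivative (derivative p)).eval (cos x) * pyth)
    - 4 * p.eval (cos x) * pyth

theorem hasDerivAt_soninEnergy
    (hp : (1 - X ^ 2) * derivative (derivative p) - 2 * X * derivative p + C μ * p = 0)
    (hμ : 0 ≤ μ) {x : ℝ} (hs : 0 < sin x) :
    HasDerivAt (soninEnergy p μ)
      (cos x * liouvilleTransformDeriv p x ^ 2 / (2 * sin x ^ 3 * soninWeight μ x ^ 2)) x := by
  refine ((hasDerivAt_liouvilleTransform hs).sonin_energy
    (hasDerivAt_liouvilleTransformDeriv hp hs) (hasDerivAt_soninWeight hs.ne')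
    (soninWeight_pos hμ x).ne').congr_deriv ?_
  have := soninWeight_pos hμ x
  field_simp

theorem soninEnergy_le_pi_div_two
    (hp : (1 - X ^ 2) * derivative (derivative p) - 2 * X * derivative p + C μ * p = 0)
    (hμ : 0 ≤ μ) {x : ℝ} (hx : x ∈ Ioo 0 π) :
    soninEnergy p μ x ≤ soninEnergy p μ (π / 2) := by
  refine le_of_hasDerivAt_of_nonneg_of_nonpos
    (fun y hy => hasDerivAt_soninEnergy hp hμ (sin_pos_of_mem_Ioo hy)) (by positivity)
    (by linarith [pi_pos]) (fun y hy => ?_) (fun y hy => ?_) hx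
    <;> have hs : 0 < sin y :=
      sin_pos_of_pos_of_lt_pi (by linarith [hy.1, pi_pos]) (by linarith [hy.2, pi_pos])
  · have hc : 0 ≤ cos y := cos_nonneg_of_mem_Icc ⟨by linarith [hy.1, pi_pos], hy.2.le⟩
    exact div_nonneg (mul_nonneg hc (sq_nonneg _)) (by positivity)
  · have hc : cos y ≤ 0 :=
      cos_nonpos_of_pi_div_two_le_of_le hy.1.le (by linarith [hy.2, pi_pos])
    exact div_nonpos_of_nonpos_of_nonneg (mul_nonpos_of_nonpos_of_nonneg hc (sq_nonneg _))
      (by positivity)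

theorem sq_liouvilleTransform_le_soninEnergy (hμ : 0 ≤ μ) (x : ℝ) :
    liouvilleTransform p x ^ 2 ≤ soninEnergy p μ x :=
  le_add_of_nonneg_right (div_nonneg (sq_nonneg _) (soninWeight_pos hμ x).le)

theorem soninEnergy_pi_div_two :
    soninEnergy p μ (π / 2) = p.eval 0 ^ 2 + (derivative p).eval 0 ^ 2 / (μ + 1 / 2) := by
  simp only [soninEnergy, liouvilleTransform, liouvilleTransformDeriv, soninWeight,
    sin_pi_div_two, cos_pi_div_two, sqrt_one]
  ring

end SoninEnergy

theorem soninEnergy_legendrePoly_pi_div_two_lt {n : ℕ} (hn : 1 ≤ n) :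
    soninEnergy (legendrePoly n) (n * (n + 1)) (π / 2) < 2 / (π * n) := by
  rw [soninEnergy_pi_div_two, ← P_eq_eval_legendrePoly]
  obtain ⟨m, rfl | rfl⟩ := Nat.even_or_odd' n
  · obtain ⟨k, rfl⟩ : ∃ k, m = k + 1 := ⟨m - 1, by omega⟩
    have hc := centralBinomRatio_sq_mul_lt (k + 1)
    rw [P_two_mul_zero, show 2 * (k + 1) = 2 * k + 1 + 1 by ring,
      eval_zero_derivative_legendrePoly_succ, P_two_mul_add_one_zero, mul_pow, ← pow_mul,
      pow_mul', neg_one_sq, one_pow, one_mul, mul_zero, zero_pow two_ne_zero, zero_div, add_zero,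
      lt_div_iff₀ (by positivity)]
    rw [lt_div_iff₀ pi_pos] at hc
    push_cast at hc ⊢
    nlinarith [mul_nonneg (sq_nonneg (centralBinomRatio (k + 1))) pi_pos.le]
  · have hc := centralBinomRatio_sq_mul_lt m
    rw [P_two_mul_add_one_zero, eval_zero_derivative_legendrePoly_succ, P_two_mul_zero,
      mul_pow, mul_pow, ← pow_mul, pow_mul', neg_one_sq, one_pow, one_mul, zero_pow two_ne_zero,
      zero_add, div_lt_div_iff₀ (by positivity) (by positivity)]
    have hc' : π * centralBinomRatio m ^ 2 * (4 * m + 1) < 4 := by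
      rw [lt_div_iff₀ pi_pos] at hc
      linarith
    have h2m : (0 : ℝ) < 2 * m + 1 := by positivity
    push_cast
    nlinarith [mul_pos (sub_pos.2 hc') (pow_pos h2m 3), sq_nonneg (m : ℝ)]

theorem stmt18 (n : ℕ) (hn : 1 ≤ n) (θ : ℝ) (h0 : 0 ≤ θ) (hπ : θ ≤ Real.pi) :
    Real.sqrt (Real.sin θ) * |P n (Real.cos θ)| < Real.sqrt (2 / (Real.pi * n)) := by
  have hbound : 0 < √(2 / (π * n)) := by
    have : (0 : ℝ) < n := by exact_mod_cast hn
    positivity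
  rcases h0.eq_or_lt with rfl | h0
  · simpa using hbound
  rcases hπ.eq_or_lt with rfl | hπ
  · simpa using hbound
  have hμ : (0 : ℝ) ≤ n * (n + 1) := by positivity
  have key : liouvilleTransform (legendrePoly n) θ ^ 2 < 2 / (π * n) :=
    ((sq_liouvilleTransform_le_soninEnergy hμ θ).trans
      (soninEnergy_le_pi_div_two (legendrePoly_ode n) hμ ⟨h0, hπ⟩)).trans_lt
      (soninEnergy_legendrePoly_pi_div_two_lt hn)
  rw [P_eq_eval_legendrePoly, ← abs_of_nonneg (sqrt_nonneg (sin θ)), ← abs_mul, ← sqrt_sq_eq_abs]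
  exact sqrt_lt_sqrt (sq_nonneg _) key
end
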